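/- arXiv:math-ph/0312028 — 13 statements merged into one kernel-verified Lean document; each statement's English description precedes it below -/
import Mathlib

section
/- Let H and H' be complex Hilbert spaces, let k ≥ 1, let φ : Fin k → H be an orthonormal family, and let λ : Fin k → ℝ be monotone nondecreasing with 0 ≤ λ i for all i; write Λ := λ (k−1). Let E ⊆ H be the linear span of the φ i, and for u ∈ E with coefficients c i := ⟨φ i, u⟩ define q(u) := ∑ i, λ i · |c i|² and, for n ∈ ℕ, N_n(u) := ‖u‖² + ∑ i, (λ i)^n · |c i|². Let Φ : H → H' be a ℂ-linear map, let q' : H' → ℝ be any function, and let n₁, n₂ ∈ ℕ and δ₁, δ₂ ≥ 0 satisfy (1 + Λ^{n₁}) δ₁ < 1. Assume that for all u ∈ E: (a) ‖u‖² ≤ ‖Φ u‖² + δ₁ · N_{n₁}(u), and (b) q(u) ≥ q'(Φ u) − δ₂ · N_{n₂}(u). Set η := (Λ(1+Λ^{n₁})δ₁ + (1+Λ^{n₂})δ₂) / (1 − (1+Λ^{n₁})δ₁). Then: (1) (1 − (1+Λ^{n₁})δ₁)·‖u‖² ≤ ‖Φ u‖² for all u ∈ E, so Φ restricted to E is injective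 and L := Φ(E) is a k-dimensional subspace of H'; (2) q'(v) ≤ (Λ + η)·‖v‖² for every v ∈ L; and consequently (3) the min–max value inf over all k-dimensional ℂ-subspaces L' of H' of sup_{v ∈ L', v ≠ 0} q'(v)/‖v‖² is at most Λ + η. -/
open Filter

/-- The quadratic form `q(u) := ∑ i, λ i · |⟨φ i, u⟩|²` of a nonnegative operator with
orthonormal eigenvectors `φ` and eigenvalues `λ`. -/
noncomputable def qform {H : Type*} [NormedAddCommGroup H] [InnerProductSpace ℂ H]
    {k : ℕ} (φ : Fin k → H) (lam : Fin k → ℝ) (u : H) : ℝ :=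
  ∑ i, lam i * ‖(inner ℂ (φ i) u : ℂ)‖ ^ 2

/-- The norm `N_n(u) := ‖u‖² + ∑ i, (λ i)^n · |⟨φ i, u⟩|²` (that is,
`‖u‖² + ‖Q^{n/2}u‖²` on the span of the eigenvectors). -/
noncomputable def Nform {H : Type*} [NormedAddCommGroup H] [InnerProductSpace ℂ H]
    {k : ℕ} (φ : Fin k → H) (lam : Fin k → ℝ) (n : ℕ) (u : H) : ℝ :=
  ‖u‖ ^ 2 + ∑ i, (lam i) ^ n * ‖(inner ℂ (φ i) u : ℂ)‖ ^ 2

/-- The abstract eigenvalue-comparison lemma (Lemma 2.1 of the paper), stated in terms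
of the spectral data it uses.  The conclusions are: (1) the lower bound
`(1 − (1+Λ^{n₁})δ₁)‖u‖² ≤ ‖Φu‖²` on the span `E`, injectivity of `Φ` on `E` and
`dim Φ(E) = k`; (2) `q'(v) ≤ (Λ + η)‖v‖²` on `L := Φ(E)`; (3) the min–max value
(the k-th eigenvalue of the comparison operator) is at most `Λ + η`. -/
theorem stmt0 {H H' : Type*}
    [NormedAddCommGroup H] [InnerProductSpace ℂ H]
    [NormedAddCommGroup H'] [InnerProductSpace ℂ H']
    (k : ℕ) (hk : 1 ≤ k) (φ : Fin k → H) (hφ : Orthonormal ℂ φ)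
    (lam : Fin k → ℝ) (hmono : Monotone lam) (hpos : ∀ i, 0 ≤ lam i)
    (Λ : ℝ) (hΛ : Λ = lam ⟨k - 1, by omega⟩)
    (E : Submodule ℂ H) (hE : E = Submodule.span ℂ (Set.range φ))
    (Φ : H →ₗ[ℂ] H') (q' : H' → ℝ)
    (n₁ n₂ : ℕ) (δ₁ δ₂ : ℝ) (hδ₁ : 0 ≤ δ₁) (hδ₂ : 0 ≤ δ₂)
    (hsmall : (1 + Λ ^ n₁) * δ₁ < 1)
    (ha : ∀ u ∈ E, ‖u‖ ^ 2 ≤ ‖Φ u‖ ^ 2 + δ₁ * Nform φ lam n₁ u)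
    (hb : ∀ u ∈ E, q' (Φ u) - δ₂ * Nform φ lam n₂ u ≤ qform φ lam u)
    (η : ℝ)
    (hη : η = (Λ * (1 + Λ ^ n₁) * δ₁ + (1 + Λ ^ n₂) * δ₂) / (1 - (1 + Λ ^ n₁) * δ₁)) :
    (∀ u ∈ E, (1 - (1 + Λ ^ n₁) * δ₁) * ‖u‖ ^ 2 ≤ ‖Φ u‖ ^ 2) ∧
    Set.InjOn Φ (E : Set H) ∧
    Module.finrank ℂ (E.map Φ) = k ∧
    (∀ v ∈ E.map Φ, q' v ≤ (Λ + η) * ‖v‖ ^ 2) ∧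
    (⨅ (L' : Submodule ℂ H') (_ : Module.finrank ℂ L' = k),
        ⨆ (v : H') (_ : v ∈ L' ∧ v ≠ 0), ((q' v / ‖v‖ ^ 2 : ℝ) : EReal))
      ≤ ((Λ + η : ℝ) : EReal) := by
  classical
  set d₁ : ℝ := (1 + Λ ^ n₁) * δ₁ with hd₁
  set d₂ : ℝ := (1 + Λ ^ n₂) * δ₂ with hd₂
  have hΛ0 : 0 ≤ Λ := hΛ ▸ hpos _
  have hlamle : ∀ i, lam i ≤ Λ := by
    intro i
    rw [hΛ]
    exact hmono (by simp [Fin.le_def]; omega)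
  have parseval : ∀ u ∈ E, ‖u‖ ^ 2 = ∑ i, ‖(inner ℂ (φ i) u : ℂ)‖ ^ 2 := by
    intro u hu
    rw [hE, Submodule.mem_span_range_iff_exists_fun] at hu
    obtain ⟨c, rfl⟩ := hu
    have h1 : ∀ i, (inner ℂ (φ i) (∑ j, c j • φ j) : ℂ) = c i := fun i => hφ.inner_right_fintype c i
    have h2 : (inner ℂ (∑ i, c i • φ i) (∑ i, c i • φ i) : ℂ) = ∑ i, (starRingEnd ℂ) (c i) * c i :=
      hφ.inner_sum c c Finset.univ
    have h3 := inner_self_eq_norm_sq (𝕜 := ℂ) (∑ i, c i • φ i)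
    rw [← h3, h2]
    simp [h1, map_sum, RCLike.conj_mul, ← Complex.ofReal_pow]
  have hN : ∀ (n : ℕ), ∀ u ∈ E, Nform φ lam n u ≤ (1 + Λ ^ n) * ‖u‖ ^ 2 := by
    intro n u hu
    have hsum : ∑ i, (lam i) ^ n * ‖(inner ℂ (φ i) u : ℂ)‖ ^ 2
        ≤ ∑ i, Λ ^ n * ‖(inner ℂ (φ i) u : ℂ)‖ ^ 2 := by
      refine Finset.sum_le_sum fun i _ => ?_
      exact mul_le_mul_of_nonneg_right (pow_le_pow_left₀ (hpos i) (hlamle i) n) (sq_nonneg _)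
    have := parseval u hu
    unfold Nform
    calc ‖u‖ ^ 2 + ∑ i, (lam i) ^ n * ‖(inner ℂ (φ i) u : ℂ)‖ ^ 2
        ≤ ‖u‖ ^ 2 + Λ ^ n * ∑ i, ‖(inner ℂ (φ i) u : ℂ)‖ ^ 2 := by
          rw [Finset.mul_sum]; linarith
      _ = (1 + Λ ^ n) * ‖u‖ ^ 2 := by rw [← this]; ring
  have hq : ∀ u ∈ E, qform φ lam u ≤ Λ * ‖u‖ ^ 2 := by
    intro u hu
    unfold qform
    rw [parseval u hu, Finset.mul_sum]
    refine Finset.sum_le_sum fun i _ => ?_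
    exact mul_le_mul_of_nonneg_right (hlamle i) (sq_nonneg _)
  have hd₁0 : 0 ≤ d₁ := mul_nonneg (by positivity) hδ₁
  have hd₂0 : 0 ≤ d₂ := mul_nonneg (by positivity) hδ₂
  have h1d : 0 < 1 - d₁ := by linarith
  -- Part 1
  have part1 : ∀ u ∈ E, (1 - d₁) * ‖u‖ ^ 2 ≤ ‖Φ u‖ ^ 2 := by
    intro u hu
    have h := ha u hu
    have h2 := hN n₁ u hu
    nlinarith [sq_nonneg ‖u‖]
  -- injectivity
  have inj : Set.InjOn Φ (E : Set H) := by
    intro u hu v hv huv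
    have hm : u - v ∈ E := E.sub_mem hu hv
    have h := part1 (u - v) hm
    rw [map_sub] at h
    have : Φ u - Φ v = 0 := by rw [huv]; simp
    rw [this] at h
    simp at h
    have h0 : ‖u - v‖ ^ 2 ≤ 0 := by nlinarith [sq_nonneg ‖u - v‖]
    have : ‖u - v‖ = 0 := by nlinarith [norm_nonneg (u - v), sq_nonneg ‖u - v‖]
    have := norm_eq_zero.mp this
    exact sub_eq_zero.mp this
  -- finrank
  have hrankE : Module.finrank ℂ E = k := by
    rw [hE, finrank_span_eq_card hφ.linearIndependent, Fintype.card_fin]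
  have hrank : Module.finrank ℂ (E.map Φ) = k := by
    have hmap : E.map Φ = LinearMap.range (Φ.comp E.subtype) := by
      rw [LinearMap.range_comp, Submodule.range_subtype]
    have hinj : Function.Injective (Φ.comp E.subtype) := by
      intro x y hxy
      have := inj x.2 y.2 hxy
      exact Subtype.ext this
    rw [hmap, ← hrankE]
    exact (LinearEquiv.ofInjective _ hinj).finrank_eq.symm
  -- Part 2
  have hΛη : (Λ + η) * (1 - d₁) = Λ + d₂ := by
    rw [hη, add_mul, div_mul_cancel₀ _ h1d.ne', hd₁, hd₂]
    ring
  have hη0 : 0 ≤ η := by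
    rw [hη]
    exact div_nonneg (by positivity) h1d.le
  have hΛη0 : 0 ≤ Λ + η := by linarith
  have part2 : ∀ v ∈ E.map Φ, q' v ≤ (Λ + η) * ‖v‖ ^ 2 := by
    intro v hv
    obtain ⟨u, hu, rfl⟩ := Submodule.mem_map.mp hv
    have key : q' (Φ u) ≤ (Λ + d₂) * ‖u‖ ^ 2 := by
      have h1 := hb u hu
      have h2 := hN n₂ u hu
      have h3 := hq u hu
      nlinarith
    calc q' (Φ u) ≤ (Λ + d₂) * ‖u‖ ^ 2 := key
      _ = (Λ + η) * ((1 - d₁) * ‖u‖ ^ 2) := by rw [← hΛη]; ring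
      _ ≤ (Λ + η) * ‖Φ u‖ ^ 2 := mul_le_mul_of_nonneg_left (part1 u hu) hΛη0
  refine ⟨part1, inj, hrank, part2, ?_⟩
  refine le_trans (iInf₂_le (E.map Φ) hrank) ?_
  refine iSup_le fun v => iSup_le fun hv => ?_
  rw [EReal.coe_le_coe_iff]
  obtain ⟨hvL, hv0⟩ := hv
  have hn : 0 < ‖v‖ ^ 2 := pow_pos (norm_pos_iff.mpr hv0) 2
  rw [div_le_iff₀ hn]
  calc q' v ≤ (Λ + η) * ‖v‖ ^ 2 := part2 v hvL
    _ = (Λ + η) * ‖v‖ ^ 2 := rfl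
end

section
/- With the metric-comparison hypotheses on the family G (see context), the quotient det(G(ε)) / (ε^{2m} · r^{2m} · det H) tends to 1 as ε → 0⁺. Equivalently, det(G(ε)) = (1 + o(1)) · det(G̃(ε)) as ε → 0⁺, where G̃(ε) is the block-diagonal matrix with (0,0)-entry 1 and transversal block ε² r² H. -/
open Filter Asymptotics Matrix Topology

/-- Equation (4.6) of Lemma 4.3 of the paper: under the metric-comparison hypotheses
(3.1)–(3.2) at a fixed point of an edge neighbourhood,
`det G(ε) = (1 + o(1)) · det G̃(ε)`, i.e. `det G(ε) / (ε^{2m} r^{2m} det H) → 1`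
as `ε → 0⁺`. -/
theorem stmt2 (m : ℕ) (hm : 1 ≤ m)
    (H : Matrix (Fin m) (Fin m) ℝ) (hH : H.PosDef)
    (r : ℝ) (hr : 0 < r)
    (G : ℝ → Matrix (Fin (m + 1)) (Fin (m + 1)) ℝ)
    (hsymm : ∀ ε ∈ Set.Ioc (0 : ℝ) 1, (G ε).IsSymm)
    (h00 : (fun ε => G ε 0 0 - 1) =o[𝓝[>] (0 : ℝ)] (fun _ => (1 : ℝ)))
    (h0b : ∀ β : Fin m, (fun ε => G ε 0 β.succ) =o[𝓝[>] (0 : ℝ)] (fun ε => ε))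
    (hb0 : ∀ β : Fin m, (fun ε => G ε β.succ 0) =o[𝓝[>] (0 : ℝ)] (fun ε => ε))
    (hab : ∀ α β : Fin m,
      (fun ε => G ε α.succ β.succ - ε ^ 2 * r ^ 2 * H α β) =o[𝓝[>] (0 : ℝ)]
        (fun ε => ε ^ 2)) :
    Tendsto (fun ε => (G ε).det / (ε ^ (2 * m) * r ^ (2 * m) * H.det))
      (𝓝[>] (0 : ℝ)) (𝓝 1) := by
  -- scaling factors
  set s : ℝ → Fin (m + 1) → ℝ := fun ε => Fin.cases 1 (fun _ => ε) with hs
  -- rescaled matrix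
  set N : ℝ → Matrix (Fin (m + 1)) (Fin (m + 1)) ℝ :=
    fun ε => Matrix.of fun i j => G ε i j / (s ε i * s ε j) with hNdef
  have hs0 : ∀ ε, s ε 0 = 1 := fun ε => rfl
  have hssucc : ∀ ε (α : Fin m), s ε α.succ = ε := fun ε α => by
    simp [hs]
  have hsne : ∀ ε : ℝ, 0 < ε → ∀ i, s ε i ≠ 0 := by
    intro ε hε i
    induction i using Fin.cases with
    | zero => simp [hs0]
    | succ α => simp [hssucc]; exact ne_of_gt hε
  have hprod : ∀ ε : ℝ, ∏ i, s ε i = ε ^ m := by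
    intro ε
    rw [Fin.prod_univ_succ]
    simp [hs0, hssucc, Finset.prod_const]
  -- determinant factorization
  have hdetG : ∀ ε : ℝ, 0 < ε → (G ε).det = ε ^ (2 * m) * (N ε).det := by
    intro ε hε
    have hfact : G ε = Matrix.diagonal (s ε) * N ε * Matrix.diagonal (s ε) := by
      ext i j
      simp only [Matrix.mul_diagonal, Matrix.diagonal_mul, hNdef, Matrix.of_apply]
      have h1 := hsne ε hε i
      have h2 := hsne ε hε j
      field_simp
    rw [hfact, Matrix.det_mul, Matrix.det_mul, Matrix.det_diagonal, hprod]
    rw [two_mul, pow_add]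
    ring
  -- equivalence Fin (m+1) ≃ Fin 1 ⊕ Fin m
  let e : Fin (m + 1) ≃ (Fin 1 ⊕ Fin m) :=
    { toFun := Fin.cases (Sum.inl 0) Sum.inr
      invFun := Sum.elim (fun _ => 0) Fin.succ
      left_inv := by
        intro i
        induction i using Fin.cases with
        | zero => simp
        | succ α => simp
      right_inv := by
        rintro (x | β)
        · simp [Fin.fin_one_eq_zero x]
        · simp }
  have he0 : e 0 = Sum.inl 0 := rfl
  have hesucc : ∀ α : Fin m, e α.succ = Sum.inr α := fun α => by
    simp [e]
  -- limit matrix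
  set L : Matrix (Fin (m + 1)) (Fin (m + 1)) ℝ :=
    (Matrix.fromBlocks (1 : Matrix (Fin 1) (Fin 1) ℝ) 0 0 (r ^ 2 • H)).submatrix e e
    with hLdef
  have hL00 : L 0 0 = 1 := by
    simp [hLdef, Matrix.submatrix_apply, he0]
  have hL0b : ∀ β : Fin m, L 0 β.succ = 0 := fun β => by
    simp [hLdef, Matrix.submatrix_apply, he0, hesucc]
  have hLb0 : ∀ α : Fin m, L α.succ 0 = 0 := fun α => by
    simp [hLdef, Matrix.submatrix_apply, he0, hesucc]
  have hLab : ∀ α β : Fin m, L α.succ β.succ = r ^ 2 * H α β := fun α β => by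
    simp [hLdef, Matrix.submatrix_apply, hesucc]
  have hLdet : L.det = r ^ (2 * m) * H.det := by
    rw [hLdef, Matrix.det_submatrix_equiv_self, Matrix.det_fromBlocks_zero₂₁,
      Matrix.det_one, one_mul, Matrix.det_smul]
    rw [pow_mul]
    simp
  have hε_pos : ∀ᶠ ε in 𝓝[>] (0 : ℝ), 0 < ε := self_mem_nhdsWithin
  -- entrywise convergence
  have hNL : Tendsto N (𝓝[>] (0 : ℝ)) (𝓝 L) := by
    refine tendsto_pi_nhds.2 fun i => tendsto_pi_nhds.2 fun j => ?_
    induction i using Fin.cases with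
    | zero =>
      induction j using Fin.cases with
      | zero =>
        have h1 : Tendsto (fun ε => G ε 0 0 - 1) (𝓝[>] (0 : ℝ)) (𝓝 0) :=
          (isLittleO_one_iff ℝ).mp h00
        have h2 : Tendsto (fun ε => G ε 0 0) (𝓝[>] (0 : ℝ)) (𝓝 1) := by
          have := h1.add_const 1
          simpa using this
        rw [hL00]
        refine h2.congr fun ε => ?_
        simp [hNdef, hs0]
      | succ β =>
        have h1 := (h0b β).tendsto_div_nhds_zero
        rw [hL0b]
        refine h1.congr fun ε => ?_
        simp [hNdef, hs0, hssucc]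
    | succ α =>
      induction j using Fin.cases with
      | zero =>
        have h1 := (hb0 α).tendsto_div_nhds_zero
        rw [hLb0]
        refine h1.congr fun ε => ?_
        simp [hNdef, hs0, hssucc]
      | succ β =>
        have h1 := (hab α β).tendsto_div_nhds_zero
        have h2 : Tendsto (fun ε => G ε α.succ β.succ / ε ^ 2 - r ^ 2 * H α β)
            (𝓝[>] (0 : ℝ)) (𝓝 0) := by
          refine h1.congr' ?_
          filter_upwards [hε_pos] with ε hε
          have hε2 : (ε : ℝ) ^ 2 ≠ 0 := pow_ne_zero _ (ne_of_gt hε)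
          field_simp
        have h3 : Tendsto (fun ε => G ε α.succ β.succ / ε ^ 2)
            (𝓝[>] (0 : ℝ)) (𝓝 (r ^ 2 * H α β)) := by
          have := h2.add_const (r ^ 2 * H α β)
          simpa using this
        rw [hLab]
        refine h3.congr fun ε => ?_
        simp [hNdef, hssucc, sq]
  have hLne : L.det ≠ 0 := by
    rw [hLdet]
    exact ne_of_gt (mul_pos (pow_pos hr _) hH.det_pos)
  have hdetN : Tendsto (fun ε => (N ε).det) (𝓝[>] (0 : ℝ)) (𝓝 L.det) :=
    ((continuous_id.matrix_det).tendsto L).comp hNL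
  have hfinal : Tendsto (fun ε => (N ε).det / L.det) (𝓝[>] (0 : ℝ)) (𝓝 1) := by
    have := hdetN.div_const L.det
    rwa [div_self hLne] at this
  refine hfinal.congr' ?_
  filter_upwards [hε_pos] with ε hε
  have hε2 : (ε : ℝ) ^ (2 * m) ≠ 0 := pow_ne_zero _ (ne_of_gt hε)
  rw [hdetG ε hε, hLdet, mul_assoc (ε ^ (2 * m)), mul_div_mul_left _ _ hε2]
end

section
/- With the metric-comparison hypotheses on the family G (see context), for all sufficiently small ε the matrix G(ε) is invertible, and the (0,0)-entry of the inverse matrix satisfies (G(ε)⁻¹)₀₀ → 1 as ε → 0⁺; that is, (G(ε)⁻¹)₀₀ = 1 + o(1). -/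
open Filter Asymptotics Matrix Topology

/-- auxiliary scaling vector -/
private def dvec (m : ℕ) (ε : ℝ) : Fin (m + 1) → ℝ := Fin.cons 1 fun _ => ε

private lemma dvec_zero (m : ℕ) (ε : ℝ) : dvec m ε 0 = 1 := rfl
private lemma dvec_succ (m : ℕ) (ε : ℝ) (a : Fin m) : dvec m ε a.succ = ε := by
  simp [dvec]

private lemma dvec_ne_zero {m : ℕ} {ε : ℝ} (hε : 0 < ε) (i : Fin (m + 1)) :
    dvec m ε i ≠ 0 := by
  induction i using Fin.cases with
  | zero => simp [dvec]
  | succ a => simp [dvec, hε.ne']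

/-- rescaled matrix family -/
private noncomputable def Mmat (m : ℕ) (G : ℝ → Matrix (Fin (m + 1)) (Fin (m + 1)) ℝ)
    (ε : ℝ) : Matrix (Fin (m + 1)) (Fin (m + 1)) ℝ :=
  Matrix.of fun i j => G ε i j / (dvec m ε i * dvec m ε j)

/-- limit matrix -/
private def Lmat (m : ℕ) (H : Matrix (Fin m) (Fin m) ℝ) (r : ℝ) :
    Matrix (Fin (m + 1)) (Fin (m + 1)) ℝ :=
  Matrix.of (Fin.cons (Fin.cons 1 0) fun a => Fin.cons 0 fun b => r ^ 2 * H a b)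

private noncomputable def Lmat' (m : ℕ) (H : Matrix (Fin m) (Fin m) ℝ) (r : ℝ) :
    Matrix (Fin (m + 1)) (Fin (m + 1)) ℝ :=
  Matrix.of (Fin.cons (Fin.cons 1 0) fun a => Fin.cons 0 fun b => ((r ^ 2) • H)⁻¹ a b)

private lemma Lmat_mul (m : ℕ) (H : Matrix (Fin m) (Fin m) ℝ) (hH : H.PosDef)
    (r : ℝ) (hr : 0 < r) : Lmat m H r * Lmat' m H r = 1 := by
  have hdet : ((r ^ 2) • H).det ≠ 0 := by
    rw [Matrix.det_smul]
    have := hH.det_pos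
    positivity
  have hmul := Matrix.mul_nonsing_inv _ (isUnit_iff_ne_zero.mpr hdet)
  ext i j
  rw [Matrix.mul_apply, Fin.sum_univ_succ]
  induction i using Fin.cases with
  | zero =>
    induction j using Fin.cases with
    | zero => simp [Lmat, Lmat', Matrix.one_apply]
    | succ b =>
      simp [Lmat, Lmat', Matrix.one_apply, (Fin.succ_ne_zero b).symm]
  | succ a =>
    induction j using Fin.cases with
    | zero => simp [Lmat, Lmat', Matrix.one_apply, Fin.succ_ne_zero]
    | succ b =>
      have h2 : ∑ x : Fin m, r ^ 2 * H a x * ((r ^ 2) • H)⁻¹ x b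
          = ((r ^ 2 • H) * ((r ^ 2) • H)⁻¹) a b := by
        rw [Matrix.mul_apply]
        refine Finset.sum_congr rfl fun x _ => ?_
        simp [Matrix.smul_apply, smul_eq_mul]
      simp only [Lmat, Lmat', Matrix.of_apply, Fin.cons_succ, Fin.cons_zero,
        Pi.zero_apply, zero_mul, zero_add]
      rw [h2, hmul, Matrix.one_apply, Matrix.one_apply]
      simp [Fin.succ_inj]

/-- Equation (4.7) of Lemma 4.3 of the paper: under the metric-comparison hypotheses
(3.1)–(3.2), for all sufficiently small `ε` the matrix `G(ε)` is invertible and the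
`(0,0)`-entry of the inverse satisfies `(G(ε)⁻¹)₀₀ = 1 + o(1)` as `ε → 0⁺`. -/
theorem stmt3 (m : ℕ) (hm : 1 ≤ m)
    (H : Matrix (Fin m) (Fin m) ℝ) (hH : H.PosDef)
    (r : ℝ) (hr : 0 < r)
    (G : ℝ → Matrix (Fin (m + 1)) (Fin (m + 1)) ℝ)
    (hsymm : ∀ ε ∈ Set.Ioc (0 : ℝ) 1, (G ε).IsSymm)
    (h00 : (fun ε => G ε 0 0 - 1) =o[𝓝[>] (0 : ℝ)] (fun _ => (1 : ℝ)))
    (h0b : ∀ β : Fin m, (fun ε => G ε 0 β.succ) =o[𝓝[>] (0 : ℝ)] (fun ε => ε))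
    (hb0 : ∀ β : Fin m, (fun ε => G ε β.succ 0) =o[𝓝[>] (0 : ℝ)] (fun ε => ε))
    (hab : ∀ α β : Fin m,
      (fun ε => G ε α.succ β.succ - ε ^ 2 * r ^ 2 * H α β) =o[𝓝[>] (0 : ℝ)]
        (fun ε => ε ^ 2)) :
    (∀ᶠ ε in 𝓝[>] (0 : ℝ), IsUnit (G ε).det) ∧
    Tendsto (fun ε => (G ε)⁻¹ 0 0) (𝓝[>] (0 : ℝ)) (𝓝 1) := by
  have hpos : ∀ᶠ ε in 𝓝[>] (0 : ℝ), 0 < ε := eventually_mem_nhdsWithin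
  have hLL' := Lmat_mul m H hH r hr
  have hLdet : IsUnit (Lmat m H r).det := Matrix.isUnit_det_of_right_inverse hLL'
  have hLinv : (Lmat m H r)⁻¹ = Lmat' m H r := Matrix.inv_eq_right_inv hLL'
  -- entrywise convergence of the rescaled matrices
  have hMtend : Tendsto (Mmat m G) (𝓝[>] (0 : ℝ)) (𝓝 (Lmat m H r)) := by
    refine tendsto_pi_nhds.mpr ?_
    intro i
    rw [tendsto_pi_nhds]
    intro j
    induction i using Fin.cases with
    | zero =>
      induction j using Fin.cases with
      | zero =>
        have h := (Asymptotics.isLittleO_one_iff ℝ).mp h00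
        have h2 := h.add (tendsto_const_nhds (x := (1 : ℝ)))
        rw [zero_add] at h2
        have h3 : Tendsto (fun ε => G ε 0 0) (𝓝[>] (0 : ℝ)) (𝓝 1) := by
          refine h2.congr fun ε => ?_
          ring
        have hL : (Lmat m H r) 0 0 = 1 := rfl
        rw [hL]
        refine h3.congr fun ε => ?_
        simp [Mmat, dvec]
      | succ b =>
        have h := (h0b b).tendsto_div_nhds_zero
        have : (Lmat m H r) 0 b.succ = 0 := by simp [Lmat]
        rw [this]
        refine h.congr fun ε => ?_
        simp [Mmat, dvec]
    | succ a =>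
      induction j using Fin.cases with
      | zero =>
        have h := (hb0 a).tendsto_div_nhds_zero
        have : (Lmat m H r) a.succ 0 = 0 := by simp [Lmat]
        rw [this]
        refine h.congr fun ε => ?_
        simp [Mmat, dvec]
      | succ b =>
        have h := (hab a b).tendsto_div_nhds_zero
        have h2 := h.add (tendsto_const_nhds (x := r ^ 2 * H a b))
        rw [zero_add] at h2
        have hL : (Lmat m H r) a.succ b.succ = r ^ 2 * H a b := by simp [Lmat]
        rw [hL]
        refine h2.congr' ?_
        filter_upwards [hpos] with ε hε
        have hε2 : (ε : ℝ) ^ 2 ≠ 0 := pow_ne_zero _ hε.ne'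
        simp only [Mmat, Matrix.of_apply, dvec_succ]
        field_simp
        ring
  -- determinant of the rescaled matrix is eventually nonzero
  have hdettend : Tendsto (fun ε => (Mmat m G ε).det) (𝓝[>] (0 : ℝ))
      (𝓝 (Lmat m H r).det) := ((continuous_id.matrix_det.tendsto _)).comp hMtend
  have hMdet : ∀ᶠ ε in 𝓝[>] (0 : ℝ), (Mmat m G ε).det ≠ 0 :=
    hdettend.eventually_ne hLdet.ne_zero
  -- the factorization G = D * M * D
  have hfact : ∀ ε : ℝ, 0 < ε →
      G ε = Matrix.diagonal (dvec m ε) * Mmat m G ε * Matrix.diagonal (dvec m ε) := by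
    intro ε hε
    ext i j
    simp only [Matrix.mul_diagonal, Matrix.diagonal_mul, Mmat, Matrix.of_apply]
    field_simp [dvec_ne_zero hε]
  constructor
  · filter_upwards [hpos, hMdet] with ε hε hdet
    rw [hfact ε hε, isUnit_iff_ne_zero, Matrix.det_mul, Matrix.det_mul,
      Matrix.det_diagonal]
    have hprod : ∏ i, dvec m ε i ≠ 0 :=
      Finset.prod_ne_zero_iff.mpr fun i _ => dvec_ne_zero hε i
    exact mul_ne_zero (mul_ne_zero hprod hdet) hprod
  · -- (G ε)⁻¹ 0 0 = (M ε)⁻¹ 0 0 eventually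
    have hinvtend : Tendsto (fun ε => (Mmat m G ε)⁻¹) (𝓝[>] (0 : ℝ))
        (𝓝 (Lmat m H r)⁻¹) := by
      have hc : ContinuousAt Inv.inv (Lmat m H r) := by
        apply continuousAt_matrix_inv
        have : ContinuousAt Inv.inv (Lmat m H r).det :=
          (continuousAt_inv₀ hLdet.ne_zero)
        refine this.congr ?_
        filter_upwards [] with x using (Ring.inverse_eq_inv x).symm
      exact hc.tendsto.comp hMtend
    have hinv00 : Tendsto (fun ε => (Mmat m G ε)⁻¹ 0 0) (𝓝[>] (0 : ℝ)) (𝓝 1) := by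
      have := (tendsto_pi_nhds.mp ((tendsto_pi_nhds.mp hinvtend) 0)) 0
      rwa [hLinv, show (Lmat' m H r) 0 0 = 1 from rfl] at this
    refine hinv00.congr' ?_
    filter_upwards [hpos, hMdet] with ε hε hdet
    -- show (M ε)⁻¹ 0 0 = (G ε)⁻¹ 0 0
    set D := Matrix.diagonal (dvec m ε)
    set W := Matrix.diagonal (fun i => (dvec m ε i)⁻¹)
    have hDW : D * W = 1 := by
      rw [Matrix.diagonal_mul_diagonal]
      convert Matrix.diagonal_one using 2
      funext i
      exact mul_inv_cancel₀ (dvec_ne_zero hε i)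
    have hMM : Mmat m G ε * (Mmat m G ε)⁻¹ = 1 :=
      Matrix.mul_nonsing_inv _ (isUnit_iff_ne_zero.mpr hdet)
    have hGinv : (G ε)⁻¹ = W * (Mmat m G ε)⁻¹ * W := by
      apply Matrix.inv_eq_right_inv
      rw [hfact ε hε]
      calc Matrix.diagonal (dvec m ε) * Mmat m G ε * Matrix.diagonal (dvec m ε) *
            (W * (Mmat m G ε)⁻¹ * W)
          = D * (Mmat m G ε * ((D * W) * ((Mmat m G ε)⁻¹ * W))) := by
            simp only [D, Matrix.mul_assoc]
        _ = D * ((Mmat m G ε * (Mmat m G ε)⁻¹) * W) := by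
            rw [hDW, Matrix.one_mul, Matrix.mul_assoc]
        _ = D * W := by rw [hMM, Matrix.one_mul]
        _ = 1 := hDW
    rw [hGinv]
    simp only [W, Matrix.mul_diagonal, Matrix.diagonal_mul, dvec_zero, inv_one,
      one_mul, mul_one]
end

section
/- With the metric-comparison hypotheses on the family G (see context), there exist ε₀ ∈ (0,1] and a function η : (0,1] → ℝ with η(ε) → 0 as ε → 0⁺ such that for every ε ∈ (0, ε₀] the matrix G(ε) is positive definite and, for every covector ξ ∈ (Fin d → ℝ), ξ₀² ≤ (1 + η(ε)) · ξᵀ G(ε)⁻¹ ξ. -/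
open Filter Asymptotics Matrix Topology




private lemma quad_lower_bound {n : ℕ} (hn : 0 < n) (A : Matrix (Fin n) (Fin n) ℝ)
    (hA : A.PosDef) :
    ∃ c > 0, ∀ x : Fin n → ℝ, c * (∑ i, x i ^ 2) ≤ x ⬝ᵥ A *ᵥ x := by
  haveI : Nonempty (Fin n) := Fin.pos_iff_nonempty.mp hn
  have hf : Continuous fun x : Fin n → ℝ => x ⬝ᵥ A *ᵥ x := by
    simp only [dotProduct, mulVec]
    exact continuous_finset_sum _ fun i _ => (continuous_apply i).mul
      (continuous_finset_sum _ fun j _ => continuous_const.mul (continuous_apply j))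
  have hone : ((fun _ : Fin n => (1 : ℝ)) : Fin n → ℝ) ∈ Metric.sphere (0 : Fin n → ℝ) 1 := by
    rw [mem_sphere_zero_iff_norm]; simp [pi_norm_const]
  obtain ⟨z, hz, hzmin⟩ := (isCompact_sphere (0 : Fin n → ℝ) 1).exists_isMinOn ⟨_, hone⟩
    hf.continuousOn
  have hznz : z ≠ 0 := by
    intro h
    rw [mem_sphere_zero_iff_norm, h, norm_zero] at hz
    norm_num at hz
  have hc0 : 0 < z ⬝ᵥ A *ᵥ z := by simpa using hA.dotProduct_mulVec_pos hznz
  set c := z ⬝ᵥ A *ᵥ z with hc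
  have hscale : ∀ (a : ℝ) (y : Fin n → ℝ),
      ((a • y) ⬝ᵥ A *ᵥ (a • y)) = a ^ 2 * (y ⬝ᵥ A *ᵥ y) := by
    intro a y
    rw [Matrix.mulVec_smul, dotProduct_smul, smul_dotProduct, smul_eq_mul,
      smul_eq_mul]
    ring
  refine ⟨c / n, div_pos hc0 (by exact_mod_cast hn), fun x => ?_⟩
  rcases eq_or_ne x 0 with rfl | hx
  · simp
  · have ht : (0 : ℝ) < ‖x‖ := norm_pos_iff.mpr hx
    set t := ‖x‖ with htdef
    have hu : (t⁻¹ • x) ∈ Metric.sphere (0 : Fin n → ℝ) 1 := by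
      rw [mem_sphere_zero_iff_norm, norm_smul, norm_inv, norm_norm, ← htdef,
        inv_mul_cancel₀ ht.ne']
    have hmin := hzmin hu
    have hx_eq : x = t • (t⁻¹ • x) := by rw [smul_smul, mul_inv_cancel₀ ht.ne', one_smul]
    have hval : x ⬝ᵥ A *ᵥ x = t ^ 2 * ((t⁻¹ • x) ⬝ᵥ A *ᵥ (t⁻¹ • x)) := by
      conv_lhs => rw [hx_eq]
      exact hscale t _
    have hsum : (∑ i, x i ^ 2) ≤ n * t ^ 2 := by
      calc (∑ i, x i ^ 2) ≤ ∑ _i : Fin n, t ^ 2 := by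
            refine Finset.sum_le_sum fun i _ => ?_
            have h1 : |x i| ≤ t := by
              simpa [Real.norm_eq_abs] using norm_le_pi_norm x i
            calc x i ^ 2 = |x i| ^ 2 := (sq_abs _).symm
              _ ≤ t ^ 2 := by
                exact pow_le_pow_left₀ (abs_nonneg _) h1 2
        _ = n * t ^ 2 := by simp [Finset.sum_const, mul_comm]
    have hcz : c ≤ (t⁻¹ • x) ⬝ᵥ A *ᵥ (t⁻¹ • x) := hmin
    have hnpos : (0 : ℝ) < n := by exact_mod_cast hn
    calc c / n * (∑ i, x i ^ 2) ≤ c / n * (n * t ^ 2) := by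
          apply mul_le_mul_of_nonneg_left hsum (le_of_lt (div_pos hc0 hnpos))
      _ = c * t ^ 2 := by field_simp
      _ ≤ t ^ 2 * ((t⁻¹ • x) ⬝ᵥ A *ᵥ (t⁻¹ • x)) := by nlinarith [sq_nonneg t, pow_pos ht 2]
      _ = x ⬝ᵥ A *ᵥ x := hval.symm


private lemma real_isHermitian_of_isSymm {n : ℕ} {A : Matrix (Fin n) (Fin n) ℝ}
    (h : A.IsSymm) : A.IsHermitian := by
  rwa [Matrix.IsHermitian, Matrix.conjTranspose_eq_transpose_of_trivial]

private lemma posDef_of_close {n : ℕ} (hn : 0 < n) {A B : Matrix (Fin n) (Fin n) ℝ}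
    (hB : B.IsHermitian) {c : ℝ} (hc : 0 < c)
    (hlow : ∀ x : Fin n → ℝ, c * (∑ i, x i ^ 2) ≤ x ⬝ᵥ A *ᵥ x)
    (hclose : ∀ i j, |B i j - A i j| ≤ c / (2 * n)) : B.PosDef := by
  refine Matrix.PosDef.of_dotProduct_mulVec_pos hB fun x hx => ?_
  rw [star_trivial]
  have hnpos : (0 : ℝ) < n := by exact_mod_cast hn
  set δ : ℝ := c / (2 * n) with hδ
  have hδ0 : 0 ≤ δ := le_of_lt (div_pos hc (by positivity))
  have habs : |x ⬝ᵥ (B - A) *ᵥ x| ≤ δ * (∑ i, |x i|) ^ 2 := by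
    simp only [dotProduct, mulVec]
    calc |∑ i, x i * ∑ j, (B - A) i j * x j|
        ≤ ∑ i, |x i * ∑ j, (B - A) i j * x j| := Finset.abs_sum_le_sum_abs _ _
      _ ≤ ∑ i, |x i| * (δ * ∑ j, |x j|) := by
          refine Finset.sum_le_sum fun i _ => ?_
          rw [abs_mul]
          refine mul_le_mul_of_nonneg_left ?_ (abs_nonneg _)
          calc |∑ j, (B - A) i j * x j| ≤ ∑ j, |(B - A) i j * x j| :=
                Finset.abs_sum_le_sum_abs _ _
            _ ≤ ∑ j, δ * |x j| := by
                refine Finset.sum_le_sum fun j _ => ?_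
                rw [abs_mul]
                exact mul_le_mul_of_nonneg_right (by simpa using hclose i j) (abs_nonneg _)
            _ = δ * ∑ j, |x j| := by rw [Finset.mul_sum]
      _ = δ * (∑ i, |x i|) ^ 2 := by rw [← Finset.sum_mul]; ring
  have hcs : (∑ i, |x i|) ^ 2 ≤ n * ∑ i, x i ^ 2 := by
    have := sq_sum_le_card_mul_sum_sq (s := (Finset.univ : Finset (Fin n)))
      (f := fun i => |x i|)
    simpa [sq_abs] using this
  have hsumpos : 0 < ∑ i, x i ^ 2 := by
    obtain ⟨i, hi⟩ := Function.ne_iff.mp hx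
    exact Finset.sum_pos' (fun j _ => sq_nonneg _) ⟨i, Finset.mem_univ _, by have h := abs_pos.mpr hi; nlinarith [sq_abs (x i)]⟩
  have hdiff : x ⬝ᵥ B *ᵥ x = x ⬝ᵥ A *ᵥ x + x ⬝ᵥ (B - A) *ᵥ x := by
    rw [Matrix.sub_mulVec, dotProduct_sub]; ring
  have h1 : |x ⬝ᵥ (B - A) *ᵥ x| ≤ (c / 2) * ∑ i, x i ^ 2 := by
    calc |x ⬝ᵥ (B - A) *ᵥ x| ≤ δ * (∑ i, |x i|) ^ 2 := habs
      _ ≤ δ * (n * ∑ i, x i ^ 2) := mul_le_mul_of_nonneg_left hcs hδ0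
      _ = (c / 2) * ∑ i, x i ^ 2 := by rw [hδ]; field_simp
  have h2 := hlow x
  have h3 := neg_abs_le (x ⬝ᵥ (B - A) *ᵥ x)
  rw [hdiff]
  nlinarith

private lemma matrix_cauchy_schwarz {n : ℕ} {A : Matrix (Fin n) (Fin n) ℝ} (hA : A.PosDef)
    (x y : Fin n → ℝ) : (x ⬝ᵥ A *ᵥ y) ^ 2 ≤ (x ⬝ᵥ A *ᵥ x) * (y ⬝ᵥ A *ᵥ y) := by
  have hAt : Aᵀ = A := by
    have := hA.1
    rwa [Matrix.IsHermitian, Matrix.conjTranspose_eq_transpose_of_trivial] at this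
  have hsym : ∀ u v : Fin n → ℝ, u ⬝ᵥ A *ᵥ v = v ⬝ᵥ A *ᵥ u := by
    intro u v
    rw [Matrix.dotProduct_mulVec, ← Matrix.mulVec_transpose, hAt, dotProduct_comm]
  rcases eq_or_ne y 0 with rfl | hy
  · simp
  have hq : 0 < y ⬝ᵥ A *ᵥ y := by simpa using hA.dotProduct_mulVec_pos hy
  set b : ℝ := x ⬝ᵥ A *ᵥ y with hb
  set q : ℝ := y ⬝ᵥ A *ᵥ y with hqdef
  have hz := hA.posSemidef.dotProduct_mulVec_nonneg (x - (b / q) • y)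
  rw [star_trivial] at hz
  have hexp : (x - (b / q) • y) ⬝ᵥ A *ᵥ (x - (b / q) • y)
      = x ⬝ᵥ A *ᵥ x - 2 * (b / q) * b + (b / q) ^ 2 * q := by
    rw [Matrix.mulVec_sub, Matrix.mulVec_smul, dotProduct_sub,
      sub_dotProduct, sub_dotProduct, dotProduct_smul,
      smul_dotProduct, smul_dotProduct, dotProduct_smul,
      hsym y x]
    simp only [smul_eq_mul, ← hb, ← hqdef]
    ring
  rw [hexp] at hz
  have hkey : x ⬝ᵥ A *ᵥ x - b ^ 2 / q
      = x ⬝ᵥ A *ᵥ x - 2 * (b / q) * b + (b / q) ^ 2 * q := by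
    field_simp
    ring
  have hz' : b ^ 2 / q ≤ x ⬝ᵥ A *ᵥ x := by linarith [hz, hkey]
  rw [div_le_iff₀ hq] at hz'
  exact hz'


private lemma quad_split {m : ℕ} (r : ℝ) (H : Matrix (Fin m) (Fin m) ℝ)
    (x : Fin (m + 1) → ℝ) :
    x ⬝ᵥ (Matrix.of fun i j : Fin (m + 1) =>
        Fin.cases (Fin.cases 1 (fun _ => 0) j) (fun α => Fin.cases 0 (fun β => r ^ 2 * H α β) j) i) *ᵥ x
      = x 0 ^ 2 + r ^ 2 * ((fun α => x α.succ) ⬝ᵥ H *ᵥ (fun α => x α.succ)) := by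
  simp only [dotProduct, mulVec, Matrix.of_apply]
  rw [Fin.sum_univ_succ]
  simp only [Fin.cases_zero, Fin.cases_succ]
  rw [Fin.sum_univ_succ]
  simp only [Fin.cases_zero, Fin.cases_succ, one_mul, zero_mul, Finset.sum_const_zero,
    add_zero]
  have hrow : ∀ α : Fin m,
      x α.succ * ∑ j : Fin (m + 1),
        (Fin.cases 0 (fun β => r ^ 2 * H α β) j : ℝ) * x j
      = r ^ 2 * (x α.succ * ∑ β : Fin m, H α β * x β.succ) := by
    intro α
    rw [Fin.sum_univ_succ]
    simp only [Fin.cases_zero, Fin.cases_succ, zero_mul, zero_add]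
    rw [Finset.mul_sum, Finset.mul_sum, Finset.mul_sum]
    refine Finset.sum_congr rfl fun β _ => by ring
  rw [Finset.sum_congr rfl fun α _ => hrow α, ← Finset.mul_sum]
  ring



/-- Equation (4.8) of Lemma 4.3 of the paper: under the metric-comparison hypotheses
(3.1)–(3.2), there are `ε₀ ∈ (0,1]` and `η(ε) → 0` such that for all `ε ∈ (0, ε₀]`
the matrix `G(ε)` is positive definite and every covector `ξ` satisfies
`ξ₀² ≤ (1 + η(ε)) · ξᵀ G(ε)⁻¹ ξ`, i.e. `|d_x u|² ≤ (1 + o(1)) |du|²_{g_ε}`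
uniformly. -/
theorem stmt4 (m : ℕ) (hm : 1 ≤ m)
    (H : Matrix (Fin m) (Fin m) ℝ) (hH : H.PosDef)
    (r : ℝ) (hr : 0 < r)
    (G : ℝ → Matrix (Fin (m + 1)) (Fin (m + 1)) ℝ)
    (hsymm : ∀ ε ∈ Set.Ioc (0 : ℝ) 1, (G ε).IsSymm)
    (h00 : (fun ε => G ε 0 0 - 1) =o[𝓝[>] (0 : ℝ)] (fun _ => (1 : ℝ)))
    (h0b : ∀ β : Fin m, (fun ε => G ε 0 β.succ) =o[𝓝[>] (0 : ℝ)] (fun ε => ε))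
    (hb0 : ∀ β : Fin m, (fun ε => G ε β.succ 0) =o[𝓝[>] (0 : ℝ)] (fun ε => ε))
    (hab : ∀ α β : Fin m,
      (fun ε => G ε α.succ β.succ - ε ^ 2 * r ^ 2 * H α β) =o[𝓝[>] (0 : ℝ)]
        (fun ε => ε ^ 2)) :
    ∃ ε₀ ∈ Set.Ioc (0 : ℝ) 1, ∃ η : ℝ → ℝ,
      Tendsto η (𝓝[>] (0 : ℝ)) (𝓝 0) ∧
      ∀ ε ∈ Set.Ioc (0 : ℝ) ε₀, (G ε).PosDef ∧
        ∀ ξ : Fin (m + 1) → ℝ, (ξ 0) ^ 2 ≤ (1 + η ε) * (ξ ⬝ᵥ ((G ε)⁻¹ *ᵥ ξ)) := by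
  -- the limiting rescaled matrix
  set M : Matrix (Fin (m + 1)) (Fin (m + 1)) ℝ := Matrix.of fun i j =>
    Fin.cases (Fin.cases 1 (fun _ => 0) j)
      (fun α => Fin.cases 0 (fun β => r ^ 2 * H α β) j) i with hM
  have hHsymm : ∀ α β, H β α = H α β := by
    intro α β
    have h1 := hH.1
    rw [Matrix.IsHermitian, Matrix.conjTranspose_eq_transpose_of_trivial] at h1
    exact Matrix.IsSymm.apply h1 α β
  have hMherm : M.IsHermitian := by
    rw [Matrix.IsHermitian, Matrix.conjTranspose_eq_transpose_of_trivial]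
    ext i j
    rw [Matrix.transpose_apply]
    refine Fin.cases ?_ (fun α => ?_) i <;> refine Fin.cases ?_ (fun β => ?_) j <;>
      simp [hM, hHsymm]
  have hMpd : M.PosDef := by
    refine Matrix.PosDef.of_dotProduct_mulVec_pos hMherm fun x hx => ?_
    rw [star_trivial, hM, quad_split]
    by_cases hy : (fun α : Fin m => x α.succ) = 0
    · have hx0 : x 0 ≠ 0 := by
        intro h0
        apply hx
        funext i
        refine Fin.cases h0 (fun α => ?_) i
        exact congrFun hy α
      have hz : (fun α => x α.succ) ⬝ᵥ H *ᵥ (fun α => x α.succ) = 0 := by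
        rw [hy]; simp
      rw [hz]
      have := abs_pos.mpr hx0
      nlinarith [sq_abs (x 0)]
    · have h1 := hH.dotProduct_mulVec_pos hy
      rw [star_trivial] at h1
      nlinarith [sq_nonneg (x 0), pow_pos hr 2]
  obtain ⟨c, hc, hlow⟩ := quad_lower_bound (Nat.succ_pos m) M hMpd
  -- the rescaled family
  set sc : ℝ → Fin (m + 1) → ℝ := fun ε => Fin.cases 1 (fun _ => ε) with hsc
  set Mf : ℝ → Matrix (Fin (m + 1)) (Fin (m + 1)) ℝ :=
    fun ε => Matrix.of fun i j => G ε i j / (sc ε i * sc ε j) with hMf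
  have hεne : ∀ᶠ ε in 𝓝[>] (0 : ℝ), ε ≠ 0 :=
    eventually_mem_nhdsWithin.mono fun ε hε => ne_of_gt hε
  have hten : ∀ i j, Tendsto (fun ε => Mf ε i j) (𝓝[>] (0 : ℝ)) (𝓝 (M i j)) := by
    intro i j
    refine Fin.cases ?_ (fun α => ?_) i <;> refine Fin.cases ?_ (fun β => ?_) j
    · have h := (isLittleO_one_iff ℝ).mp h00
      have h2 : Tendsto (fun ε => G ε 0 0 - 1 + 1) (𝓝[>] (0 : ℝ)) (𝓝 (0 + 1)) :=
        h.add tendsto_const_nhds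
      simp only [sub_add_cancel, zero_add] at h2
      simpa [hMf, hsc, hM] using h2
    · have h := (isLittleO_iff_tendsto' (hεne.mono fun ε hε h0 => absurd h0 hε)).mp (h0b β)
      simpa [hMf, hsc, hM] using h
    · have h := (isLittleO_iff_tendsto' (hεne.mono fun ε hε h0 => absurd h0 hε)).mp (hb0 α)
      simpa [hMf, hsc, hM] using h
    · have h := (isLittleO_iff_tendsto'
        (hεne.mono fun ε hε h0 => absurd (pow_eq_zero_iff (n := 2) (by norm_num) |>.mp h0) hε)).mp
        (hab α β)
      have h2 : Tendsto
          (fun ε => (G ε α.succ β.succ - ε ^ 2 * r ^ 2 * H α β) / ε ^ 2 + r ^ 2 * H α β)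
          (𝓝[>] (0 : ℝ)) (𝓝 (0 + r ^ 2 * H α β)) := h.add tendsto_const_nhds
      rw [zero_add] at h2
      have h3 : Tendsto (fun ε => Mf ε α.succ β.succ) (𝓝[>] (0 : ℝ)) (𝓝 (r ^ 2 * H α β)) := by
        refine h2.congr' (hεne.mono fun ε hε => ?_)
        simp only [hMf, hsc, Matrix.of_apply, Fin.cases_succ]
        field_simp
        ring
      simpa [hM] using h3
  set δ : ℝ := c / (2 * ((m + 1 : ℕ) : ℝ)) with hδ
  have hδpos : 0 < δ := by
    apply div_pos hc
    positivity
  have hevent : ∀ᶠ ε in 𝓝[>] (0 : ℝ), ∀ i j, |Mf ε i j - M i j| ≤ δ := by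
    rw [eventually_all]
    intro i
    rw [eventually_all]
    intro j
    have h : Tendsto (fun ε => Mf ε i j - M i j) (𝓝[>] (0 : ℝ)) (𝓝 0) := by
      simpa using (hten i j).sub_const (M i j)
    have h2 := Metric.tendsto_nhds.mp h δ hδpos
    refine h2.mono fun ε hε => ?_
    rw [Real.dist_eq, sub_zero] at hε
    exact le_of_lt hε
  have hIoc : ∀ᶠ ε in 𝓝[>] (0 : ℝ), ε ∈ Set.Ioc (0 : ℝ) 1 :=
    Ioc_mem_nhdsGT_of_mem ⟨le_refl 0, by norm_num⟩
  obtain ⟨u, hu, hsub⟩ := mem_nhdsGT_iff_exists_Ioo_subset.mp (hIoc.and hevent)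
  rw [Set.mem_Ioi] at hu
  refine ⟨min (u / 2) 1, ⟨lt_min (by linarith) one_pos, min_le_right _ _⟩,
    fun ε => G ε 0 0 - 1, ?_, ?_⟩
  · exact (isLittleO_one_iff ℝ).mp h00
  intro ε hε
  have hεu : ε ∈ Set.Ioo (0 : ℝ) u := by
    constructor
    · exact hε.1
    · calc ε ≤ min (u / 2) 1 := hε.2
        _ ≤ u / 2 := min_le_left _ _
        _ < u := by linarith
  obtain ⟨hε1, hclose⟩ := hsub hεu
  have hεpos : 0 < ε := hε.1
  have hGsym := hsymm ε hε1
  -- positive definiteness of `Mf ε`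
  have hMfherm : (Mf ε).IsHermitian := by
    rw [Matrix.IsHermitian, Matrix.conjTranspose_eq_transpose_of_trivial]
    ext i j
    rw [Matrix.transpose_apply]
    simp only [hMf, Matrix.of_apply]
    rw [hGsym.apply i j, mul_comm]
  have hMfpd : (Mf ε).PosDef :=
    posDef_of_close (Nat.succ_pos m) hMfherm hc hlow hclose
  -- transfer to `G ε`
  have hsne : ∀ i, sc ε i ≠ 0 := by
    intro i
    refine Fin.cases ?_ (fun α => ?_) i <;> simp [hsc]
    exact hεpos.ne'
  have hGpd : (G ε).PosDef := by
    refine Matrix.PosDef.of_dotProduct_mulVec_pos (real_isHermitian_of_isSymm hGsym) fun x hx => ?_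
    rw [star_trivial]
    set y : Fin (m + 1) → ℝ := fun i => sc ε i * x i with hy
    have hyne : y ≠ 0 := by
      intro h
      apply hx
      funext i
      have h2 := congrFun h i
      simp only [hy, Pi.zero_apply] at h2
      rcases mul_eq_zero.mp h2 with h3 | h3
      · exact absurd h3 (hsne i)
      · exact h3
    have heq : x ⬝ᵥ G ε *ᵥ x = y ⬝ᵥ Mf ε *ᵥ y := by
      simp only [dotProduct, mulVec, hMf, Matrix.of_apply, hy]
      refine Finset.sum_congr rfl fun i _ => ?_
      rw [Finset.mul_sum, Finset.mul_sum]
      refine Finset.sum_congr rfl fun j _ => ?_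
      have hi := hsne i
      have hj := hsne j
      field_simp
    rw [heq]
    have h4 := hMfpd.dotProduct_mulVec_pos hyne
    rwa [star_trivial] at h4
  refine ⟨hGpd, fun ξ => ?_⟩
  -- Cauchy-Schwarz in the inner product given by `(G ε)⁻¹`
  have hinv : ((G ε)⁻¹).PosDef := hGpd.inv
  have hdet : IsUnit (G ε).det := isUnit_iff_ne_zero.mpr hGpd.det_pos.ne'
  set e : Fin (m + 1) → ℝ := Pi.single 0 1 with he
  set w : Fin (m + 1) → ℝ := G ε *ᵥ e with hw
  have hinvw : (G ε)⁻¹ *ᵥ w = e := by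
    rw [hw, Matrix.mulVec_mulVec, Matrix.nonsing_inv_mul _ hdet, Matrix.one_mulVec]
  have h1 : ξ ⬝ᵥ ((G ε)⁻¹ *ᵥ w) = ξ 0 := by
    rw [hinvw, he, dotProduct_single, mul_one]
  have h2 : w ⬝ᵥ ((G ε)⁻¹ *ᵥ w) = G ε 0 0 := by
    rw [hinvw, hw, he]
    simp [dotProduct_single, Matrix.mulVec_single]
  have hcs := matrix_cauchy_schwarz hinv ξ w
  rw [h1, h2] at hcs
  have : (1 : ℝ) + (G ε 0 0 - 1) = G ε 0 0 := by ring
  rw [this]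
  calc (ξ 0) ^ 2 ≤ (ξ ⬝ᵥ (G ε)⁻¹ *ᵥ ξ) * G ε 0 0 := hcs
    _ = G ε 0 0 * (ξ ⬝ᵥ (G ε)⁻¹ *ᵥ ξ) := mul_comm _ _
end

section
/- Fix an integer m ≥ 1, set d = m + 1, and let H be a symmetric positive definite real m×m matrix. Let a, ρ : (0,1] → ℝ be functions with a(ε) > 0 and ρ(ε) > 0 for all ε, and let G : (0,1] → Matrix (Fin d) (Fin d) ℝ be a family of symmetric matrices satisfying, as ε → 0⁺: G(ε)₀₀ − a(ε)² = o(a(ε)²); G(ε)₀β = o(a(ε)·ρ(ε)) and G(ε)β₀ = o(a(ε)·ρ(ε)) for each β ≥ 1; and G(ε)αβ − ρ(ε)² H_{αβ} = o(ρ(ε)²) for all α, β ≥ 1. Then for all sufficiently small ε the matrix G(ε) is positive definite, and: (1) det(G(ε)) / (a(ε)² · ρ(ε)^{2m} · det H) → 1 as ε → 0⁺; (2) a(ε)² · (G(ε)⁻¹)₀₀ → 1 as ε → 0⁺; (3) there exist a constant C > 0 and ε₀ ∈ (0,1] such that for all ε ∈ (0, ε₀] and all covectors ξ ∈ (Fin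 d → ℝ), a(ε)^{−2} · ξ₀² ≤ C · ξᵀ G(ε)⁻¹ ξ. -/
open Filter Asymptotics Matrix Topology Finset

section Helpers

lemma quadPert {n : ℕ} (Δ : Matrix (Fin n) (Fin n) ℝ) (x : Fin n → ℝ) :
    |x ⬝ᵥ Δ *ᵥ x| ≤ (∑ i, ∑ j, |Δ i j|) * ∑ i, x i ^ 2 := by
  have hS : ∀ i, x i ^ 2 ≤ ∑ k, x k ^ 2 := fun i =>
    Finset.single_le_sum (fun k _ => sq_nonneg (x k)) (Finset.mem_univ i)
  have key : ∀ i j, |x i * Δ i j * x j| ≤ |Δ i j| * ∑ k, x k ^ 2 := by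
    intro i j
    have h1 : |x i * Δ i j * x j| = |Δ i j| * (|x i| * |x j|) := by
      rw [abs_mul, abs_mul]; ring
    rw [h1]
    refine mul_le_mul_of_nonneg_left ?_ (abs_nonneg _)
    have h2 : |x i| * |x j| ≤ (x i ^ 2 + x j ^ 2) / 2 := by
      nlinarith [sq_nonneg (|x i| - |x j|), sq_abs (x i), sq_abs (x j)]
    have := hS i; have := hS j
    nlinarith [sq_nonneg (x i), sq_nonneg (x j)]
  calc |x ⬝ᵥ Δ *ᵥ x| = |∑ i, ∑ j, x i * Δ i j * x j| := by
        simp [dotProduct, Matrix.mulVec, Finset.mul_sum, mul_assoc]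
    _ ≤ ∑ i, |∑ j, x i * Δ i j * x j| := Finset.abs_sum_le_sum_abs _ _
    _ ≤ ∑ i, ∑ j, |x i * Δ i j * x j| :=
        Finset.sum_le_sum fun i _ => Finset.abs_sum_le_sum_abs _ _
    _ ≤ ∑ i, ∑ j, |Δ i j| * ∑ k, x k ^ 2 :=
        Finset.sum_le_sum fun i _ => Finset.sum_le_sum fun j _ => key i j
    _ = (∑ i, ∑ j, |Δ i j|) * ∑ i, x i ^ 2 := by rw [Finset.sum_mul]; simp [Finset.sum_mul]

lemma quadSmul {n : ℕ} (N : Matrix (Fin n) (Fin n) ℝ) (t : ℝ) (x : Fin n → ℝ) :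
    (t • x) ⬝ᵥ N *ᵥ (t • x) = t ^ 2 * (x ⬝ᵥ N *ᵥ x) := by
  simp [Matrix.mulVec_smul, smul_dotProduct, dotProduct_smul, sq, mul_assoc]

lemma posdef_lb {n : ℕ} {N : Matrix (Fin (n+1)) (Fin (n+1)) ℝ} (hN : N.PosDef) :
    ∃ c > (0:ℝ), ∀ x : Fin (n+1) → ℝ, c * (∑ i, x i ^ 2) ≤ x ⬝ᵥ N *ᵥ x := by
  set f : (Fin (n+1) → ℝ) → ℝ := fun x => x ⬝ᵥ N *ᵥ x with hf
  have hfc : Continuous f := by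
    simp only [hf, dotProduct, Matrix.mulVec]
    exact continuous_finset_sum _ fun i _ => (continuous_apply i).mul
      (continuous_finset_sum _ fun j _ => continuous_const.mul (continuous_apply j))
  set S : Set (Fin (n+1) → ℝ) := {x | (∑ i, x i ^ 2) = 1} with hSdef
  have hScl : IsClosed S := isClosed_eq (continuous_finset_sum _ fun i _ =>
    (continuous_apply i).pow 2) continuous_const
  have hSbd : Bornology.IsBounded S := by
    apply (Metric.isBounded_closedBall (x := (0 : Fin (n+1) → ℝ)) (r := 1)).subset
    intro x hx
    simp only [Metric.mem_closedBall, dist_zero_right]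
    rw [pi_norm_le_iff_of_nonneg zero_le_one]
    intro i
    rw [Real.norm_eq_abs, ← sq_le_one_iff_abs_le_one]
    calc x i ^ 2 ≤ ∑ k, x k ^ 2 :=
          Finset.single_le_sum (fun k _ => sq_nonneg (x k)) (Finset.mem_univ i)
      _ = 1 := hx
  have hScomp : IsCompact S := Metric.isCompact_of_isClosed_isBounded hScl hSbd
  have hSne : S.Nonempty := by
    refine ⟨Pi.single 0 1, ?_⟩
    simp [hSdef, Pi.single_apply, Finset.sum_ite_eq']
  obtain ⟨x₀, hx₀S, hx₀min⟩ := hScomp.exists_isMinOn hSne hfc.continuousOn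
  have hx₀ne : x₀ ≠ 0 := by
    intro h
    rw [h] at hx₀S
    simp [hSdef] at hx₀S
  have hc : 0 < f x₀ := by
    have := hN.dotProduct_mulVec_pos hx₀ne
    simpa [hf] using this
  refine ⟨f x₀, hc, fun x => ?_⟩
  by_cases hx : x = 0
  · simp [hx, hf]
  · set r : ℝ := Real.sqrt (∑ i, x i ^ 2) with hr
    have hsum : 0 < ∑ i, x i ^ 2 := by
      rcases Function.ne_iff.mp hx with ⟨i, hi⟩
      have : 0 < x i ^ 2 := by
        have : x i ≠ 0 := hi
        positivity
      exact lt_of_lt_of_le this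
        (Finset.single_le_sum (fun k _ => sq_nonneg (x k)) (Finset.mem_univ i))
    have hrpos : 0 < r := Real.sqrt_pos.mpr hsum
    have hrsq : r ^ 2 = ∑ i, x i ^ 2 := Real.sq_sqrt hsum.le
    have hmem : r⁻¹ • x ∈ S := by
      simp only [hSdef, Set.mem_setOf_eq, Pi.smul_apply, smul_eq_mul, mul_pow]
      rw [← Finset.mul_sum, ← hrsq]
      field_simp
    have h1 : f x₀ ≤ f (r⁻¹ • x) := hx₀min hmem
    have h2 : f (r⁻¹ • x) = r⁻¹ ^ 2 * f x := quadSmul N r⁻¹ x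
    have h3 : f x₀ * r ^ 2 ≤ f x := by
      rw [h2] at h1
      have := mul_le_mul_of_nonneg_right h1 (sq_nonneg r)
      calc f x₀ * r ^ 2 ≤ r⁻¹ ^ 2 * f x * r ^ 2 := this
        _ = f x := by field_simp
    calc f x₀ * (∑ i, x i ^ 2) = f x₀ * r ^ 2 := by rw [hrsq]
      _ ≤ f x := h3

lemma quad_diag {n : ℕ} (v : Fin n → ℝ) (N : Matrix (Fin n) (Fin n) ℝ) (x : Fin n → ℝ) :
    x ⬝ᵥ (Matrix.diagonal v * N * Matrix.diagonal v) *ᵥ x = (v * x) ⬝ᵥ N *ᵥ (v * x) := by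
  rw [← Matrix.mulVec_mulVec, ← Matrix.mulVec_mulVec]
  have h1 : Matrix.diagonal v *ᵥ x = v * x := by
    ext i; simp [Matrix.mulVec_diagonal, mul_comm]
  rw [h1]
  have h2 : ∀ z : Fin n → ℝ, x ⬝ᵥ Matrix.diagonal v *ᵥ z = (v * x) ⬝ᵥ z := by
    intro z
    simp only [dotProduct, Matrix.mulVec_diagonal, Pi.mul_apply]
    exact Finset.sum_congr rfl fun i _ => by ring
  rw [h2]

lemma eventually_quad_lb {n : ℕ} {l : Filter ℝ} {N : ℝ → Matrix (Fin (n+1)) (Fin (n+1)) ℝ}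
    {N₀ : Matrix (Fin (n+1)) (Fin (n+1)) ℝ}
    (hN : Filter.Tendsto N l (𝓝 N₀)) {c : ℝ} (hc : 0 < c)
    (hlb : ∀ x : Fin (n+1) → ℝ, c * (∑ i, x i ^ 2) ≤ x ⬝ᵥ N₀ *ᵥ x) :
    ∀ᶠ ε in l, ∀ x : Fin (n+1) → ℝ, c/2 * (∑ i, x i ^ 2) ≤ x ⬝ᵥ N ε *ᵥ x := by
  have hent : ∀ i j, Filter.Tendsto (fun ε => N ε i j) l (𝓝 (N₀ i j)) := by
    intro i j
    have := tendsto_pi_nhds.mp hN i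
    exact tendsto_pi_nhds.mp this j
  have hsum : Filter.Tendsto (fun ε => ∑ i, ∑ j, |N ε i j - N₀ i j|) l (𝓝 0) := by
    have h : Filter.Tendsto (fun ε => ∑ i, ∑ j, |N ε i j - N₀ i j|) l
        (𝓝 (∑ _i : Fin (n+1), ∑ _j : Fin (n+1), |(0:ℝ)|)) := by
      apply tendsto_finset_sum
      intro i _
      apply tendsto_finset_sum
      intro j _
      have h2 : Filter.Tendsto (fun ε => N ε i j - N₀ i j) l (𝓝 0) := by
        simpa using (hent i j).sub (tendsto_const_nhds (x := N₀ i j))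
      exact h2.abs
    simpa using h
  have hev : ∀ᶠ ε in l, (∑ i, ∑ j, |N ε i j - N₀ i j|) < c/2 :=
    hsum.eventually (eventually_lt_nhds (show (0:ℝ) < c/2 by linarith))
  filter_upwards [hev] with ε hε x
  have key : x ⬝ᵥ N ε *ᵥ x = x ⬝ᵥ N₀ *ᵥ x + x ⬝ᵥ (N ε - N₀) *ᵥ x := by
    rw [Matrix.sub_mulVec, dotProduct_sub]; ring
  have hpert := quadPert (N ε - N₀) x
  have hper2 : |x ⬝ᵥ (N ε - N₀) *ᵥ x| ≤ c/2 * ∑ i, x i ^ 2 := by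
    refine hpert.trans ?_
    apply mul_le_mul_of_nonneg_right hε.le
    exact Finset.sum_nonneg fun i _ => sq_nonneg _
  have hsumnn : (0:ℝ) ≤ ∑ i, x i ^ 2 := Finset.sum_nonneg fun i _ => sq_nonneg _
  have hl := hlb x
  have := abs_le.mp hper2
  rw [key]
  nlinarith

variable {m : ℕ}

def Bmat (H : Matrix (Fin m) (Fin m) ℝ) : Matrix (Fin (m+1)) (Fin (m+1)) ℝ :=
  Matrix.of fun i j =>
    Fin.cases (Fin.cases 1 (fun _ => 0) j) (fun α => Fin.cases 0 (fun β => H α β) j) i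

@[simp] lemma Bmat_00 (H : Matrix (Fin m) (Fin m) ℝ) : Bmat H 0 0 = 1 := rfl
@[simp] lemma Bmat_0s (H : Matrix (Fin m) (Fin m) ℝ) (β : Fin m) : Bmat H 0 β.succ = 0 := by
  simp [Bmat]
@[simp] lemma Bmat_s0 (H : Matrix (Fin m) (Fin m) ℝ) (α : Fin m) : Bmat H α.succ 0 = 0 := by
  simp [Bmat]
@[simp] lemma Bmat_ss (H : Matrix (Fin m) (Fin m) ℝ) (α β : Fin m) :
    Bmat H α.succ β.succ = H α β := by simp [Bmat]

lemma Bmat_quad (H : Matrix (Fin m) (Fin m) ℝ) (x : Fin (m+1) → ℝ) :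
    x ⬝ᵥ Bmat H *ᵥ x = x 0 ^ 2 +
      (fun β => x β.succ) ⬝ᵥ H *ᵥ (fun β => x β.succ) := by
  simp only [dotProduct, Matrix.mulVec, Fin.sum_univ_succ, Bmat_00, Bmat_0s, Bmat_s0,
    Bmat_ss, zero_mul, mul_zero, Finset.sum_const_zero, add_zero, zero_add, one_mul, sq]

lemma Bmat_posDef {H : Matrix (Fin m) (Fin m) ℝ} (hH : H.PosDef) : (Bmat H).PosDef := by
  rw [posDef_iff_dotProduct_mulVec]
  constructor
  · ext i j
    simp only [conjTranspose_apply, star_trivial]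
    have hs : ∀ α β, H α β = H β α := fun α β => by
      have := hH.isHermitian.apply β α
      simpa using this
    induction i using Fin.cases <;> induction j using Fin.cases <;> simp [hs]
  · intro x hx
    have hq := Bmat_quad H x
    simp only [star_trivial]
    rw [hq]
    by_cases h0 : (fun β : Fin m => x β.succ) = 0
    · have hx0 : x 0 ≠ 0 := by
        intro h
        apply hx
        ext i
        induction i using Fin.cases with
        | zero => exact h
        | succ k => exact congrFun h0 k
      have hz : (fun β => x β.succ) ⬝ᵥ H *ᵥ (fun β => x β.succ) = 0 := by
        rw [h0]; simp
      rw [hz]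
      have := sq_nonneg (x 0)
      positivity
    · have h1 : 0 < (fun β => x β.succ) ⬝ᵥ H *ᵥ (fun β => x β.succ) := by
        have := hH.dotProduct_mulVec_pos h0
        simpa using this
      nlinarith [sq_nonneg (x 0)]

lemma Bmat_det (H : Matrix (Fin m) (Fin m) ℝ) : (Bmat H).det = H.det := by
  rw [Matrix.det_succ_column_zero, Fin.sum_univ_succ]
  have hsub : (Bmat H).submatrix Fin.succ Fin.succ = H := by
    ext α β
    simp [Matrix.submatrix_apply]
  simp [Fin.succAbove_zero, hsub]

lemma Bmat_inv {H : Matrix (Fin m) (Fin m) ℝ} (hH : IsUnit H.det) :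
    (Bmat H)⁻¹ = Bmat H⁻¹ := by
  apply Matrix.inv_eq_right_inv
  ext i j
  induction i using Fin.cases with
  | zero =>
    induction j using Fin.cases with
    | zero => simp [Matrix.mul_apply, Fin.sum_univ_succ, Matrix.one_apply]
    | succ j => simp [Matrix.mul_apply, Fin.sum_univ_succ, Matrix.one_apply,
        (Fin.succ_ne_zero j).symm]
  | succ i =>
    induction j using Fin.cases with
    | zero => simp [Matrix.mul_apply, Fin.sum_univ_succ, Matrix.one_apply, Fin.succ_ne_zero]
    | succ j =>
      have h := congrFun (congrFun (Matrix.mul_nonsing_inv H hH) i) j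
      simp only [Matrix.mul_apply, Matrix.one_apply] at h
      simp only [Matrix.mul_apply, Fin.sum_univ_succ, Bmat_s0, Bmat_0s, Bmat_ss,
        zero_mul, mul_zero, zero_add, Matrix.one_apply, Fin.succ_inj]
      rw [h]

end Helpers

/-- Lemma 6.5 of the paper, stated at a fixed point of the bottle-neck region: the
metric matrix `G(ε)` is compared with the block-diagonal product metric with
`(0,0)`-entry `a(ε)²` and transversal block `ρ(ε)² H`.  Conclusions: positive
definiteness for small `ε`, the determinant asymptotics (6.7), the asymptotics (6.8)
`a(ε)²·(G(ε)⁻¹)₀₀ → 1`, and the uniform bound (6.9)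
`a(ε)^{−2} ξ₀² ≤ C · ξᵀ G(ε)⁻¹ ξ`. -/
theorem stmt6 (m : ℕ) (hm : 1 ≤ m)
    (H : Matrix (Fin m) (Fin m) ℝ) (hH : H.PosDef)
    (a ρ : ℝ → ℝ) (hapos : ∀ ε ∈ Set.Ioc (0 : ℝ) 1, 0 < a ε)
    (hρpos : ∀ ε ∈ Set.Ioc (0 : ℝ) 1, 0 < ρ ε)
    (G : ℝ → Matrix (Fin (m + 1)) (Fin (m + 1)) ℝ)
    (hsymm : ∀ ε ∈ Set.Ioc (0 : ℝ) 1, (G ε).IsSymm)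
    (h00 : (fun ε => G ε 0 0 - (a ε) ^ 2) =o[𝓝[>] (0 : ℝ)] (fun ε => (a ε) ^ 2))
    (h0b : ∀ β : Fin m,
      (fun ε => G ε 0 β.succ) =o[𝓝[>] (0 : ℝ)] (fun ε => a ε * ρ ε))
    (hb0 : ∀ β : Fin m,
      (fun ε => G ε β.succ 0) =o[𝓝[>] (0 : ℝ)] (fun ε => a ε * ρ ε))
    (hab : ∀ α β : Fin m,
      (fun ε => G ε α.succ β.succ - (ρ ε) ^ 2 * H α β) =o[𝓝[>] (0 : ℝ)]
        (fun ε => (ρ ε) ^ 2)) :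
    (∀ᶠ ε in 𝓝[>] (0 : ℝ), (G ε).PosDef) ∧
    Tendsto (fun ε => (G ε).det / ((a ε) ^ 2 * (ρ ε) ^ (2 * m) * H.det))
      (𝓝[>] (0 : ℝ)) (𝓝 1) ∧
    Tendsto (fun ε => (a ε) ^ 2 * ((G ε)⁻¹ 0 0)) (𝓝[>] (0 : ℝ)) (𝓝 1) ∧
    ∃ C > (0 : ℝ), ∃ ε₀ ∈ Set.Ioc (0 : ℝ) 1, ∀ ε ∈ Set.Ioc (0 : ℝ) ε₀,
      ∀ ξ : Fin (m + 1) → ℝ,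
        (ξ 0) ^ 2 / (a ε) ^ 2 ≤ C * (ξ ⬝ᵥ ((G ε)⁻¹ *ᵥ ξ)) := by
  set l := 𝓝[>] (0:ℝ) with hldef
  have E1 : ∀ᶠ ε in l, ε ∈ Set.Ioc (0:ℝ) 1 :=
    Filter.eventually_of_mem (Ioc_mem_nhdsGT one_pos) (fun ε hε => hε)
  -- the weight vector and the normalized matrix M
  set w : ℝ → Fin (m+1) → ℝ := fun ε => Fin.cases (a ε) (fun _ => ρ ε) with hwdef
  have hw0 : ∀ ε, w ε 0 = a ε := fun ε => by simp [hwdef]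
  have hws : ∀ ε (β : Fin m), w ε β.succ = ρ ε := fun ε β => by simp [hwdef]
  have hwpos : ∀ ε ∈ Set.Ioc (0:ℝ) 1, ∀ i, 0 < w ε i := by
    intro ε hε i
    induction i using Fin.cases with
    | zero => rw [hw0]; exact hapos ε hε
    | succ β => rw [hws]; exact hρpos ε hε
  set M : ℝ → Matrix (Fin (m+1)) (Fin (m+1)) ℝ :=
    fun ε => Matrix.of fun i j => G ε i j / (w ε i * w ε j) with hMdef
  have hMapp : ∀ ε i j, M ε i j = G ε i j / (w ε i * w ε j) := fun ε i j => rfl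
  -- entrywise convergence of M to Bmat H
  have hM00 : Tendsto (fun ε => M ε 0 0) l (𝓝 1) := by
    have t : Tendsto (fun ε => (G ε 0 0 - a ε ^ 2) / a ε ^ 2 + 1) l (𝓝 (0 + 1)) :=
      h00.tendsto_div_nhds_zero.add tendsto_const_nhds
    rw [zero_add] at t
    refine t.congr' ?_
    filter_upwards [E1] with ε hε
    have ha := (hapos ε hε).ne'
    rw [hMapp, hw0]
    rw [div_add' _ _ _ (pow_ne_zero 2 ha)]
    rw [one_mul, sub_add_cancel, ← sq]
  have hM0s : ∀ β : Fin m, Tendsto (fun ε => M ε 0 β.succ) l (𝓝 0) := by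
    intro β
    refine ((h0b β).tendsto_div_nhds_zero).congr' ?_
    filter_upwards [E1] with ε hε
    rw [hMapp, hw0, hws]
  have hMs0 : ∀ β : Fin m, Tendsto (fun ε => M ε β.succ 0) l (𝓝 0) := by
    intro β
    refine ((hb0 β).tendsto_div_nhds_zero).congr' ?_
    filter_upwards [E1] with ε hε
    rw [hMapp, hw0, hws, mul_comm]
  have hMss : ∀ α β : Fin m, Tendsto (fun ε => M ε α.succ β.succ) l (𝓝 (H α β)) := by
    intro α β
    have t : Tendsto (fun ε => (G ε α.succ β.succ - ρ ε ^ 2 * H α β) / ρ ε ^ 2 + H α β) l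
        (𝓝 (0 + H α β)) := (hab α β).tendsto_div_nhds_zero.add tendsto_const_nhds
    rw [zero_add] at t
    refine t.congr' ?_
    filter_upwards [E1] with ε hε
    have hρ := (hρpos ε hε).ne'
    rw [hMapp, hws, hws]
    field_simp
    ring
  have hMt : Tendsto M l (𝓝 (Bmat H)) := by
    refine tendsto_pi_nhds.mpr ?_
    intro i
    rw [tendsto_pi_nhds]
    intro j
    induction i using Fin.cases with
    | zero =>
      induction j using Fin.cases with
      | zero => simpa using hM00
      | succ β => simpa using hM0s β
    | succ α =>
      induction j using Fin.cases with
      | zero => simpa using hMs0 α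
      | succ β => simpa using hMss α β
  have detH_pos : 0 < H.det := hH.det_pos
  have hBpos : (Bmat H).PosDef := Bmat_posDef hH
  have hBinveq : (Bmat H)⁻¹ = Bmat H⁻¹ := Bmat_inv detH_pos.ne'.isUnit
  have hBinvpos : ((Bmat H)⁻¹).PosDef := hBpos.inv
  have hdet : Tendsto (fun ε => (M ε).det) l (𝓝 H.det) := by
    have hc : Continuous fun A : Matrix (Fin (m+1)) (Fin (m+1)) ℝ => A.det :=
      continuous_id.matrix_det
    have := (hc.tendsto (Bmat H)).comp hMt
    rw [Bmat_det] at this; exact this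
  have hMinvt : Tendsto (fun ε => (M ε)⁻¹) l (𝓝 ((Bmat H)⁻¹)) := by
    have hc : ContinuousAt Inv.inv (Bmat H) := by
      apply continuousAt_matrix_inv
      rw [Ring.inverse_eq_inv']
      apply continuousAt_inv₀
      rw [Bmat_det]
      exact detH_pos.ne'
    exact hc.tendsto.comp hMt
  obtain ⟨c1, hc1, hlb1⟩ := posdef_lb hBpos
  obtain ⟨c2, hc2, hlb2⟩ := posdef_lb hBinvpos
  have E2 := eventually_quad_lb hMt hc1 hlb1
  have E3 := eventually_quad_lb hMinvt hc2 hlb2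
  -- factorization G = D M D
  have EG : ∀ ε ∈ Set.Ioc (0:ℝ) 1,
      G ε = Matrix.diagonal (w ε) * M ε * Matrix.diagonal (w ε) := by
    intro ε hε
    ext i j
    have hwi := (hwpos ε hε i).ne'
    have hwj := (hwpos ε hε j).ne'
    rw [Matrix.mul_diagonal, Matrix.diagonal_mul, hMapp]
    field_simp
  -- inverse factorization
  have EDinv : ∀ ε ∈ Set.Ioc (0:ℝ) 1,
      (Matrix.diagonal (w ε))⁻¹ = Matrix.diagonal (fun i => (w ε i)⁻¹) := by
    intro ε hε
    apply Matrix.inv_eq_right_inv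
    rw [Matrix.diagonal_mul_diagonal]
    have : (fun i => w ε i * (w ε i)⁻¹) = fun _ => (1:ℝ) := by
      ext i
      exact mul_inv_cancel₀ (hwpos ε hε i).ne'
    rw [this, Matrix.diagonal_one]
  have EGinv : ∀ ε ∈ Set.Ioc (0:ℝ) 1,
      (G ε)⁻¹ = Matrix.diagonal (fun i => (w ε i)⁻¹) * (M ε)⁻¹ *
        Matrix.diagonal (fun i => (w ε i)⁻¹) := by
    intro ε hε
    rw [EG ε hε, Matrix.mul_inv_rev, Matrix.mul_inv_rev, EDinv ε hε, Matrix.mul_assoc]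
  -- conclusion (0): positive definiteness
  have concl0 : ∀ᶠ ε in l, (G ε).PosDef := by
    filter_upwards [E1, E2] with ε hε h2
    rw [posDef_iff_dotProduct_mulVec]
    constructor
    · have hs := hsymm ε hε
      ext i j
      simp only [conjTranspose_apply, star_trivial]
      exact hs.apply i j
    · intro x hx
      simp only [star_trivial]
      rw [EG ε hε, quad_diag]
      rcases Function.ne_iff.mp hx with ⟨i, hi⟩
      have hterm : 0 < (w ε i * x i) ^ 2 := by
        have h1 : w ε i * x i ≠ 0 := mul_ne_zero (hwpos ε hε i).ne' hi
        positivity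
      have hsum : 0 < ∑ k, ((w ε * x) k) ^ 2 :=
        lt_of_lt_of_le (by simpa using hterm)
          (Finset.single_le_sum (fun k _ => sq_nonneg _) (Finset.mem_univ i))
      calc (0:ℝ) < c1/2 * ∑ k, ((w ε * x) k) ^ 2 := by positivity
        _ ≤ (w ε * x) ⬝ᵥ M ε *ᵥ (w ε * x) := h2 _
  -- conclusion (1): determinant asymptotics
  have concl1 : Tendsto (fun ε => (G ε).det / ((a ε) ^ 2 * (ρ ε) ^ (2 * m) * H.det)) l
      (𝓝 1) := by
    have T1 : Tendsto (fun ε => (M ε).det / H.det) l (𝓝 1) := by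
      have := hdet.div_const H.det
      rwa [div_self detH_pos.ne'] at this
    refine T1.congr' ?_
    filter_upwards [E1] with ε hε
    have ha := hapos ε hε
    have hρ := hρpos ε hε
    have hdetG : (G ε).det = (a ε)^2 * (ρ ε)^(2*m) * (M ε).det := by
      rw [EG ε hε, Matrix.det_mul, Matrix.det_mul, Matrix.det_diagonal]
      have hprod : (∏ i, w ε i) = a ε * ρ ε ^ m := by
        rw [Fin.prod_univ_succ, hw0]
        congr 1
        rw [Finset.prod_congr rfl (fun β _ => hws ε β), Finset.prod_const, Finset.card_univ,
          Fintype.card_fin]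
      rw [hprod]
      ring
    rw [hdetG, mul_div_mul_left]
    positivity
  -- conclusion (2)
  have hMinv00 : Tendsto (fun ε => (M ε)⁻¹ 0 0) l (𝓝 1) := by
    have h1 := tendsto_pi_nhds.mp (tendsto_pi_nhds.mp hMinvt 0) 0
    rwa [hBinveq, Bmat_00] at h1
  have concl2 : Tendsto (fun ε => (a ε) ^ 2 * ((G ε)⁻¹ 0 0)) l (𝓝 1) := by
    refine hMinv00.congr' ?_
    filter_upwards [E1] with ε hε
    have ha := (hapos ε hε).ne'
    rw [EGinv ε hε, Matrix.mul_diagonal, Matrix.diagonal_mul, hw0]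
    field_simp
  -- conclusion (3)
  have E4 : ∀ᶠ ε in l, ε ∈ Set.Ioc (0:ℝ) 1 ∧
      ∀ x : Fin (m+1) → ℝ, c2/2 * (∑ i, x i ^ 2) ≤ x ⬝ᵥ (M ε)⁻¹ *ᵥ x := E1.and E3
  have concl3 : ∃ C > (0:ℝ), ∃ ε₀ ∈ Set.Ioc (0:ℝ) 1, ∀ ε ∈ Set.Ioc (0:ℝ) ε₀,
      ∀ ξ : Fin (m+1) → ℝ, (ξ 0) ^ 2 / (a ε) ^ 2 ≤ C * (ξ ⬝ᵥ ((G ε)⁻¹ *ᵥ ξ)) := by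
    obtain ⟨δ, hδ, hP⟩ := (nhdsGT_basis (0:ℝ)).eventually_iff.mp E4
    refine ⟨2/c2, by positivity, min (δ/2) 1, ⟨lt_min (by linarith) one_pos, min_le_right _ _⟩,
      ?_⟩
    intro ε hε ξ
    have hεIoo : ε ∈ Set.Ioo (0:ℝ) δ := by
      constructor
      · exact hε.1
      · calc ε ≤ min (δ/2) 1 := hε.2
          _ ≤ δ/2 := min_le_left _ _
          _ < δ := by linarith
    obtain ⟨hε1, h3⟩ := hP hεIoo
    have ha := hapos ε hε1
    set η : Fin (m+1) → ℝ := (fun i => (w ε i)⁻¹) * ξ with hη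
    have hquad : ξ ⬝ᵥ ((G ε)⁻¹ *ᵥ ξ) = η ⬝ᵥ (M ε)⁻¹ *ᵥ η := by
      rw [EGinv ε hε1, quad_diag]
    have h5 : c2/2 * (∑ i, η i ^ 2) ≤ η ⬝ᵥ (M ε)⁻¹ *ᵥ η := h3 η
    have h6 : (ξ 0) ^ 2 / (a ε) ^ 2 ≤ ∑ i, η i ^ 2 := by
      have hη0 : η 0 ^ 2 = (ξ 0) ^ 2 / (a ε) ^ 2 := by
        simp only [hη, Pi.mul_apply, hw0]
        rw [mul_pow]
        field_simp
      rw [← hη0]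
      exact Finset.single_le_sum (fun k _ => sq_nonneg (η k)) (Finset.mem_univ 0)
    rw [hquad]
    calc (ξ 0) ^ 2 / (a ε) ^ 2 ≤ ∑ i, η i ^ 2 := h6
      _ = 2/c2 * (c2/2 * (∑ i, η i ^ 2)) := by field_simp
      _ ≤ 2/c2 * (η ⬝ᵥ (M ε)⁻¹ *ᵥ η) := by
          apply mul_le_mul_of_nonneg_left h5 (by positivity)
  obtain ⟨C, hC, hrest⟩ := concl3
  exact ⟨concl0, concl1, concl2, C, hC, hrest⟩
end

section
/- Let α < β be real numbers, let u : ℝ → ℂ be continuously differentiable on [α, β], let f : ℝ → ℝ be continuous and strictly positive on [α, β], and let μ : ℝ → ℝ be continuous and nonnegative on [α, β]. Then ∫_α^β μ(x)·|u(x)|² dx ≤ 2·(∫_α^β μ(x) dx)·|u(α)|² + 2·(∫_α^β μ(x)·(∫_α^x f(t) dt) dx)·(∫_α^β |u'(x)|² / f(x) dx). -/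
open MeasureTheory Set intervalIntegral

private lemma memLp_two_of_contOn {a b : ℝ} (g : ℝ → ℝ)
    (hg : ContinuousOn g (Set.Icc a b)) :
    MemLp g (ENNReal.ofReal 2) (volume.restrict (Set.Ioc a b)) := by
  haveI : IsFiniteMeasure (volume.restrict (Set.Ioc a b)) :=
    ⟨by rw [Measure.restrict_apply_univ]; exact measure_Ioc_lt_top⟩
  obtain ⟨C, hC⟩ := (isCompact_Icc (a := a) (b := b)).exists_bound_of_continuousOn hg
  refine MemLp.of_bound ((hg.mono Set.Ioc_subset_Icc_self).aestronglyMeasurable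
    measurableSet_Ioc) C ?_
  exact (ae_restrict_iff' measurableSet_Ioc).2
    (ae_of_all _ fun x hx => hC x (Set.Ioc_subset_Icc_self hx))

/-- Cauchy–Schwarz for interval integrals of continuous nonnegative functions. -/
private lemma cs_interval {a b : ℝ} (hab : a ≤ b) (g h : ℝ → ℝ)
    (hg : ContinuousOn g (Set.Icc a b)) (hh : ContinuousOn h (Set.Icc a b))
    (hg0 : ∀ x ∈ Set.Icc a b, 0 ≤ g x) (hh0 : ∀ x ∈ Set.Icc a b, 0 ≤ h x) :
    (∫ x in a..b, g x * h x) ^ 2 ≤ (∫ x in a..b, g x ^ 2) * (∫ x in a..b, h x ^ 2) := by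
  set ν := volume.restrict (Set.Ioc a b) with hν
  have hpq : Real.HolderConjugate 2 2 := Real.holderConjugate_iff.mpr ⟨one_lt_two, by norm_num⟩
  have hg0' : 0 ≤ᵐ[ν] g := (ae_restrict_iff' measurableSet_Ioc).2
    (ae_of_all _ fun x hx => hg0 x (Set.Ioc_subset_Icc_self hx))
  have hh0' : 0 ≤ᵐ[ν] h := (ae_restrict_iff' measurableSet_Ioc).2
    (ae_of_all _ fun x hx => hh0 x (Set.Ioc_subset_Icc_self hx))
  have key := MeasureTheory.integral_mul_le_Lp_mul_Lq_of_nonneg hpq hg0' hh0'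
    (memLp_two_of_contOn g hg) (memLp_two_of_contOn h hh)
  have hrpow : ∀ x : ℝ, x ^ (2 : ℝ) = x ^ 2 := fun x => by
    rw [show (2 : ℝ) = ((2 : ℕ) : ℝ) by norm_num, Real.rpow_natCast]
  simp only [hrpow] at key
  have hA0 : 0 ≤ ∫ x, g x ^ 2 ∂ν := integral_nonneg fun x => sq_nonneg _
  have hB0 : 0 ≤ ∫ x, h x ^ 2 ∂ν := integral_nonneg fun x => sq_nonneg _
  have hD0 : 0 ≤ ∫ x, g x * h x ∂ν :=
    integral_nonneg_of_ae (hg0'.mp (hh0'.mono fun x h1 h2 => mul_nonneg h2 h1))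
  have hsq : ((∫ x, g x ^ 2 ∂ν) ^ (1 / 2 : ℝ) * (∫ x, h x ^ 2 ∂ν) ^ (1 / 2 : ℝ)) ^ 2 =
      (∫ x, g x ^ 2 ∂ν) * (∫ x, h x ^ 2 ∂ν) := by
    rw [mul_pow, ← Real.rpow_natCast (_ ^ (1 / 2 : ℝ)) 2, ← Real.rpow_natCast (_ ^ (1 / 2 : ℝ)) 2,
      ← Real.rpow_mul hA0, ← Real.rpow_mul hB0]
    norm_num
  have h2 : (∫ x, g x * h x ∂ν) ^ 2 ≤ (∫ x, g x ^ 2 ∂ν) * (∫ x, h x ^ 2 ∂ν) := by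
    rw [← hsq]
    exact pow_le_pow_left₀ hD0 key 2
  rw [intervalIntegral.integral_of_le hab, intervalIntegral.integral_of_le hab,
    intervalIntegral.integral_of_le hab]
  exact h2

/-- The one-dimensional weighted L²-estimate underlying assertion (6.12) of Lemma 7.5
of the paper: if `u` is continuously differentiable on `[α, β]` (with derivative `u'`),
`f` is continuous and strictly positive, and `μ` is continuous and nonnegative there,
then `∫_α^β μ|u|² ≤ 2(∫_α^β μ)|u(α)|² + 2(∫_α^β μ(x)(∫_α^x f)) dx · (∫_α^β |u'|²/f)`. -/
theorem stmt8 (α β : ℝ) (hαβ : α < β) (u u' : ℝ → ℂ) (f μ : ℝ → ℝ)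
    (hu : ∀ x ∈ Set.Icc α β, HasDerivWithinAt u (u' x) (Set.Icc α β) x)
    (hu' : ContinuousOn u' (Set.Icc α β))
    (hf : ContinuousOn f (Set.Icc α β))
    (hfpos : ∀ x ∈ Set.Icc α β, 0 < f x)
    (hμ : ContinuousOn μ (Set.Icc α β))
    (hμ0 : ∀ x ∈ Set.Icc α β, 0 ≤ μ x) :
    ∫ x in α..β, μ x * ‖u x‖ ^ 2 ≤
      2 * (∫ x in α..β, μ x) * ‖u α‖ ^ 2 +
        2 * (∫ x in α..β, μ x * ∫ t in α..x, f t) * ∫ x in α..β, ‖u' x‖ ^ 2 / f x := by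
  have hIcc : Set.uIcc α β = Set.Icc α β := Set.uIcc_of_le hαβ.le
  have hucont : ContinuousOn u (Set.Icc α β) := fun x hx => (hu x hx).continuousWithinAt
  set F : ℝ → ℝ := fun x => ∫ t in α..x, f t with hFdef
  set A : ℝ := ‖u α‖ ^ 2 with hAdef
  set C : ℝ := ∫ x in α..β, ‖u' x‖ ^ 2 / f x with hCdef
  have hq : ContinuousOn (fun x => ‖u' x‖ ^ 2 / f x) (Set.Icc α β) :=
    (hu'.norm.pow 2).div hf fun x hx => (hfpos x hx).ne'
  have hqint : IntervalIntegrable (fun x => ‖u' x‖ ^ 2 / f x) volume α β :=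
    (hq.mono hIcc.le).intervalIntegrable
  have hC0 : 0 ≤ C :=
    intervalIntegral.integral_nonneg hαβ.le fun x hx =>
      div_nonneg (by positivity) (hfpos x hx).le
  have hFcont : ContinuousOn F (Set.Icc α β) := by
    rw [← hIcc]
    exact intervalIntegral.continuousOn_primitive_interval
      (by rw [hIcc]; exact hf.integrableOn_Icc)
  -- key pointwise estimate
  have key : ∀ x ∈ Set.Icc α β, ‖u x‖ ^ 2 ≤ 2 * A + 2 * (F x * C) := by
    intro x hx
    have hαx : α ≤ x := hx.1
    have hsub : Set.Icc α x ⊆ Set.Icc α β := Set.Icc_subset_Icc le_rfl hx.2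
    have hsub' : Set.uIcc α x ⊆ Set.Icc α β := by rw [Set.uIcc_of_le hαx]; exact hsub
    have hu'int : IntervalIntegrable u' volume α x := (hu'.mono hsub').intervalIntegrable
    have hftc : ∫ t in α..x, u' t = u x - u α := by
      apply intervalIntegral.integral_eq_sub_of_hasDeriv_right_of_le hαx
        (hucont.mono hsub) (fun t ht => ?_) hu'int
      have htβ : t ∈ Set.Ioo α β := ⟨ht.1, lt_of_lt_of_le ht.2 hx.2⟩
      exact (hu t (Set.Ioo_subset_Icc_self htβ)).mono_of_mem_nhdsWithin
        (mem_nhdsWithin_of_mem_nhds (Icc_mem_nhds htβ.1 htβ.2))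
    -- Cauchy–Schwarz with g = √f, h = ‖u'‖/√f on [α, x]
    set g : ℝ → ℝ := fun t => Real.sqrt (f t) with hgdef
    set h : ℝ → ℝ := fun t => ‖u' t‖ / Real.sqrt (f t) with hhdef
    have hgcont : ContinuousOn g (Set.Icc α x) :=
      Real.continuous_sqrt.comp_continuousOn (hf.mono hsub)
    have hsqrt_pos : ∀ t ∈ Set.Icc α x, 0 < Real.sqrt (f t) := fun t ht =>
      Real.sqrt_pos.2 (hfpos t (hsub ht))
    have hhcont : ContinuousOn h (Set.Icc α x) :=
      (hu'.norm.mono hsub).div hgcont fun t ht => (hsqrt_pos t ht).ne'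
    have hcs := cs_interval hαx g h hgcont hhcont
      (fun t _ => Real.sqrt_nonneg _) (fun t ht => div_nonneg (norm_nonneg _) (Real.sqrt_nonneg _))
    have hgh : Set.EqOn (fun t => g t * h t) (fun t => ‖u' t‖) (Set.uIcc α x) := by
      intro t ht
      have ht' : t ∈ Set.Icc α x := by rwa [Set.uIcc_of_le hαx] at ht
      simp only [hgdef, hhdef]
      rw [mul_comm, div_mul_cancel₀ _ (hsqrt_pos t ht').ne']
    have hg2 : Set.EqOn (fun t => g t ^ 2) f (Set.uIcc α x) := by
      intro t ht
      have ht' : t ∈ Set.Icc α x := by rwa [Set.uIcc_of_le hαx] at ht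
      simp only [hgdef]
      exact Real.sq_sqrt (hfpos t (hsub ht')).le
    have hh2 : Set.EqOn (fun t => h t ^ 2) (fun t => ‖u' t‖ ^ 2 / f t) (Set.uIcc α x) := by
      intro t ht
      have ht' : t ∈ Set.Icc α x := by rwa [Set.uIcc_of_le hαx] at ht
      simp only [hhdef, div_pow]
      rw [Real.sq_sqrt (hfpos t (hsub ht')).le]
    rw [intervalIntegral.integral_congr hgh, intervalIntegral.integral_congr hg2,
      intervalIntegral.integral_congr hh2] at hcs
    -- monotonicity of the quotient integral
    have hqmono : (∫ t in α..x, ‖u' t‖ ^ 2 / f t) ≤ C :=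
      intervalIntegral.integral_mono_interval le_rfl hαx hx.2
        ((ae_restrict_iff' measurableSet_Ioc).2 (ae_of_all _ fun t ht =>
          div_nonneg (by positivity) (hfpos t (Set.Ioc_subset_Icc_self ht)).le)) hqint
    have hF0 : 0 ≤ F x := intervalIntegral.integral_nonneg hαx
      fun t ht => (hfpos t (hsub ht)).le
    have hq0 : 0 ≤ ∫ t in α..x, ‖u' t‖ ^ 2 / f t :=
      intervalIntegral.integral_nonneg hαx fun t ht =>
        div_nonneg (by positivity) (hfpos t (hsub ht)).le
    have hb2 : (∫ t in α..x, ‖u' t‖) ^ 2 ≤ F x * C :=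
      hcs.trans (mul_le_mul_of_nonneg_left hqmono hF0)
    have hb0 : 0 ≤ ∫ t in α..x, ‖u' t‖ :=
      intervalIntegral.integral_nonneg hαx fun t _ => norm_nonneg _
    have hub : ‖u x‖ ≤ ‖u α‖ + ∫ t in α..x, ‖u' t‖ := by
      have : u x = u α + ∫ t in α..x, u' t := by rw [hftc]; ring
      calc ‖u x‖ = ‖u α + ∫ t in α..x, u' t‖ := by rw [← this]
        _ ≤ ‖u α‖ + ‖∫ t in α..x, u' t‖ := norm_add_le _ _
        _ ≤ ‖u α‖ + ∫ t in α..x, ‖u' t‖ := by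
            gcongr
            exact intervalIntegral.norm_integral_le_integral_norm hαx
    nlinarith [norm_nonneg (u x), norm_nonneg (u α),
      sq_nonneg (‖u α‖ - ∫ t in α..x, ‖u' t‖)]
  -- integrate the pointwise estimate
  have hμ' : ContinuousOn μ (Set.uIcc α β) := by rwa [hIcc]
  have hμint : IntervalIntegrable μ volume α β := hμ'.intervalIntegrable
  have hμFint : IntervalIntegrable (fun x => μ x * F x) volume α β :=
    ((hμ.mul hFcont).mono hIcc.le).intervalIntegrable
  have hlhsint : IntervalIntegrable (fun x => μ x * ‖u x‖ ^ 2) volume α β :=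
    ((hμ.mul (hucont.norm.pow 2)).mono hIcc.le).intervalIntegrable
  have hrhsint : IntervalIntegrable (fun x => μ x * (2 * A + 2 * (F x * C))) volume α β :=
    ((hμ.mul ((continuousOn_const.add
      ((continuousOn_const.mul (hFcont.mul continuousOn_const)))))).mono hIcc.le).intervalIntegrable
  have hmono : (∫ x in α..β, μ x * ‖u x‖ ^ 2) ≤
      ∫ x in α..β, μ x * (2 * A + 2 * (F x * C)) :=
    intervalIntegral.integral_mono_on hαβ.le hlhsint hrhsint fun x hx =>
      mul_le_mul_of_nonneg_left (key x hx) (hμ0 x hx)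
  have heq : (∫ x in α..β, μ x * (2 * A + 2 * (F x * C))) =
      2 * A * (∫ x in α..β, μ x) + 2 * C * ∫ x in α..β, μ x * F x := by
    have hfun : (fun x => μ x * (2 * A + 2 * (F x * C))) =
        fun x => 2 * A * μ x + 2 * C * (μ x * F x) := by funext x; ring
    rw [hfun, intervalIntegral.integral_add (hμint.const_mul _) (hμFint.const_mul _),
      intervalIntegral.integral_const_mul, intervalIntegral.integral_const_mul]
  calc (∫ x in α..β, μ x * ‖u x‖ ^ 2)
      ≤ ∫ x in α..β, μ x * (2 * A + 2 * (F x * C)) := hmono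
    _ = 2 * A * (∫ x in α..β, μ x) + 2 * C * ∫ x in α..β, μ x * F x := heq
    _ = 2 * (∫ x in α..β, μ x) * A + 2 * (∫ x in α..β, μ x * F x) * C := by ring
end

section
/- Let m ≥ 1 be an integer, let 0 < ε ≤ 1, let κ ∈ (0,1), and set δ₀ := ε^κ and δ₊ := ε^{(1−κ)·m}. Let x⁺ < x⁰ be real numbers with δ₀ + δ₊ ≤ x⁰ − x⁺, write L := x⁰ − x⁺, and let 0 < r₋ ≤ r₊ be real numbers. Let a, ρ : ℝ → ℝ be measurable functions such that: 0 < a(x) ≤ ε^κ for x ∈ [x⁺, x⁰ − δ₀] and 0 < a(x) ≤ 1 for x ∈ [x⁰ − δ₀, x⁰]; and ε·r₋ ≤ ρ(x) ≤ ε^κ for x ∈ [x⁺, x⁺ + δ₊] and ε·r₋ ≤ ρ(x) ≤ ε·r₊ for x ∈ [x⁺ + δ₊, x⁰]. Then: (i) ∫_{x⁺}^{x⁰} a(x)·ρ(x)^{−m} dx ≤ (L + 1)·ε^κ·(ε r₋)^{−m}; and (ii) ∫_{x⁺}^{x⁰} a(x)·ρ(x)^{m} dx ≤ ε^{m+κ}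 + (L + 1)·ε^κ·(ε r₊)^{m}. -/
open MeasureTheory

/-- The integral-estimate part of Lemma 7.5 of the paper: under the scaling
assumptions (6.10) on the longitudinal density `a` and the transversal radius `ρ` of
the bottle neck (with exponent `κ`, `δ₀ = ε^κ`, `δ₊ = ε^{(1−κ)m}`), one has
(i) `∫ a ρ^{−m} ≤ (L+1) ε^κ (ε r₋)^{−m}` and
(ii) `∫ a ρ^{m} ≤ ε^{m+κ} + (L+1) ε^κ (ε r₊)^{m}`. -/
theorem stmt9 (m : ℕ) (hm : 1 ≤ m) (ε : ℝ) (hε : ε ∈ Set.Ioc (0 : ℝ) 1)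
    (κ : ℝ) (hκ : κ ∈ Set.Ioo (0 : ℝ) 1)
    (xp x0 : ℝ) (hx : xp < x0)
    (hδ : ε ^ κ + ε ^ ((1 - κ) * (m : ℝ)) ≤ x0 - xp)
    (L : ℝ) (hL : L = x0 - xp)
    (rm rp : ℝ) (hrm : 0 < rm) (hrmrp : rm ≤ rp)
    (a ρ : ℝ → ℝ) (hameas : Measurable a) (hρmeas : Measurable ρ)
    (ha1 : ∀ x ∈ Set.Icc xp (x0 - ε ^ κ), 0 < a x ∧ a x ≤ ε ^ κ)
    (ha2 : ∀ x ∈ Set.Icc (x0 - ε ^ κ) x0, 0 < a x ∧ a x ≤ 1)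
    (hρ1 : ∀ x ∈ Set.Icc xp (xp + ε ^ ((1 - κ) * (m : ℝ))),
      ε * rm ≤ ρ x ∧ ρ x ≤ ε ^ κ)
    (hρ2 : ∀ x ∈ Set.Icc (xp + ε ^ ((1 - κ) * (m : ℝ))) x0,
      ε * rm ≤ ρ x ∧ ρ x ≤ ε * rp) :
    (∫ x in xp..x0, a x / ρ x ^ m) ≤ (L + 1) * ε ^ κ / (ε * rm) ^ m ∧
    (∫ x in xp..x0, a x * ρ x ^ m) ≤
      ε ^ ((m : ℝ) + κ) + (L + 1) * ε ^ κ * (ε * rp) ^ m := by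
  obtain ⟨hε0, hε1⟩ := hε
  obtain ⟨hκ0, hκ1⟩ := hκ
  have hd0pos : 0 < ε ^ κ := Real.rpow_pos_of_pos hε0 κ
  have hdppos : 0 < ε ^ ((1 - κ) * (m : ℝ)) := Real.rpow_pos_of_pos hε0 _
  have hd0le1 : ε ^ κ ≤ 1 := Real.rpow_le_one hε0.le hε1 hκ0.le
  have h1 : xp ≤ xp + ε ^ ((1 - κ) * (m : ℝ)) := by linarith
  have h2 : xp + ε ^ ((1 - κ) * (m : ℝ)) ≤ x0 - ε ^ κ := by linarith
  have h3 : x0 - ε ^ κ ≤ x0 := by linarith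
  have hεrm : 0 < ε * rm := mul_pos hε0 hrm
  have hεrp : 0 < ε * rp := mul_pos hε0 (hrm.trans_le hrmrp)
  have hεrmm : 0 < (ε * rm) ^ m := pow_pos hεrm m
  have hεrpm : 0 < (ε * rp) ^ m := pow_pos hεrp m
  have haU : ∀ x ∈ Set.Icc xp x0, 0 < a x ∧ a x ≤ 1 := by
    intro x hxx
    by_cases h : x ≤ x0 - ε ^ κ
    · have := ha1 x ⟨hxx.1, h⟩; exact ⟨this.1, this.2.trans hd0le1⟩
    · exact ha2 x ⟨(not_le.1 h).le, hxx.2⟩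
  have hρL : ∀ x ∈ Set.Icc xp x0, ε * rm ≤ ρ x := by
    intro x hxx
    by_cases h : x ≤ xp + ε ^ ((1 - κ) * (m : ℝ))
    · exact (hρ1 x ⟨hxx.1, h⟩).1
    · exact (hρ2 x ⟨(not_le.1 h).le, hxx.2⟩).1
  have hρU : ∀ x ∈ Set.Icc xp x0, ρ x ≤ max (ε ^ κ) (ε * rp) := by
    intro x hxx
    by_cases h : x ≤ xp + ε ^ ((1 - κ) * (m : ℝ))
    · exact le_max_of_le_left (hρ1 x ⟨hxx.1, h⟩).2
    · exact le_max_of_le_right (hρ2 x ⟨(not_le.1 h).le, hxx.2⟩).2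
  -- integrability on the whole interval
  have hint1 : IntervalIntegrable (fun x => a x / ρ x ^ m) volume xp x0 := by
    rw [intervalIntegrable_iff_integrableOn_Icc_of_le hx.le]
    apply Measure.integrableOn_of_bounded (M := 1 / (ε * rm) ^ m)
      measure_Icc_lt_top.ne
      (hameas.div (hρmeas.pow_const m)).aestronglyMeasurable
    filter_upwards [ae_restrict_mem measurableSet_Icc] with x hxx
    have ha := haU x hxx
    have hρ := hρL x hxx
    have hρp : 0 < ρ x ^ m := pow_pos (hεrm.trans_le hρ) m
    rw [Real.norm_eq_abs, Pi.div_apply, abs_of_nonneg (div_nonneg ha.1.le hρp.le)]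
    exact div_le_div₀ zero_le_one ha.2 hεrmm (pow_le_pow_left₀ hεrm.le hρ m)
  have hint2 : IntervalIntegrable (fun x => a x * ρ x ^ m) volume xp x0 := by
    rw [intervalIntegrable_iff_integrableOn_Icc_of_le hx.le]
    apply Measure.integrableOn_of_bounded (M := 1 * (max (ε ^ κ) (ε * rp)) ^ m)
      measure_Icc_lt_top.ne
      (hameas.mul (hρmeas.pow_const m)).aestronglyMeasurable
    filter_upwards [ae_restrict_mem measurableSet_Icc] with x hxx
    have ha := haU x hxx
    have hρ := hρL x hxx
    have hρ0 : 0 ≤ ρ x := (hεrm.trans_le hρ).le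
    have hρp : 0 ≤ ρ x ^ m := pow_nonneg hρ0 m
    rw [Real.norm_eq_abs, Pi.mul_apply, abs_of_nonneg (mul_nonneg ha.1.le hρp)]
    exact mul_le_mul ha.2 (pow_le_pow_left₀ hρ0 (hρU x hxx) m) hρp zero_le_one
  have hmem : ∀ y : ℝ, xp ≤ y → y ≤ x0 → y ∈ Set.uIcc xp x0 := by
    intro y hy1 hy2
    rw [Set.uIcc_of_le hx.le]; exact ⟨hy1, hy2⟩
  have hsub : ∀ c d : ℝ, xp ≤ c → c ≤ d → d ≤ x0 → Set.uIcc c d ⊆ Set.uIcc xp x0 := by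
    intro c d hc hcd hd
    exact Set.uIcc_subset_uIcc (hmem c hc (hcd.trans hd)) (hmem d (hc.trans hcd) hd)
  constructor
  · -- part (i)
    have hi1 : IntervalIntegrable (fun x => a x / ρ x ^ m) volume xp (x0 - ε ^ κ) :=
      hint1.mono_set (hsub _ _ le_rfl (h1.trans h2) h3)
    have hi2 : IntervalIntegrable (fun x => a x / ρ x ^ m) volume (x0 - ε ^ κ) x0 :=
      hint1.mono_set (hsub _ _ (h1.trans h2) h3 le_rfl)
    rw [← intervalIntegral.integral_add_adjacent_intervals hi1 hi2]
    have hb1 : (∫ x in xp..(x0 - ε ^ κ), a x / ρ x ^ m) ≤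
        (x0 - ε ^ κ - xp) * (ε ^ κ / (ε * rm) ^ m) := by
      have := intervalIntegral.integral_mono_on (h1.trans h2) hi1
        (intervalIntegrable_const (c := ε ^ κ / (ε * rm) ^ m))
        (fun x hxx => by
          have ha := ha1 x hxx
          have hρ := hρL x ⟨hxx.1, hxx.2.trans h3⟩
          exact div_le_div₀ hd0pos.le ha.2 hεrmm (pow_le_pow_left₀ hεrm.le hρ m))
      refine this.trans_eq ?_
      rw [intervalIntegral.integral_const, smul_eq_mul]
    have hb2 : (∫ x in (x0 - ε ^ κ)..x0, a x / ρ x ^ m) ≤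
        ε ^ κ * (1 / (ε * rm) ^ m) := by
      have := intervalIntegral.integral_mono_on h3 hi2
        (intervalIntegrable_const (c := 1 / (ε * rm) ^ m))
        (fun x hxx => by
          have ha := ha2 x hxx
          have hρ := hρL x ⟨(h1.trans h2).trans hxx.1, hxx.2⟩
          exact div_le_div₀ zero_le_one ha.2 hεrmm (pow_le_pow_left₀ hεrm.le hρ m))
      refine this.trans_eq ?_
      rw [intervalIntegral.integral_const, smul_eq_mul, sub_sub_cancel]
    have hLen : x0 - ε ^ κ - xp ≤ L := by rw [hL]; linarith
    have hC1 : 0 ≤ ε ^ κ / (ε * rm) ^ m := div_nonneg hd0pos.le hεrmm.le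
    have : (x0 - ε ^ κ - xp) * (ε ^ κ / (ε * rm) ^ m) ≤ L * (ε ^ κ / (ε * rm) ^ m) :=
      mul_le_mul_of_nonneg_right hLen hC1
    have heq : (L + 1) * ε ^ κ / (ε * rm) ^ m
        = L * (ε ^ κ / (ε * rm) ^ m) + ε ^ κ * (1 / (ε * rm) ^ m) := by ring
    rw [heq]
    linarith
  · -- part (ii)
    have hi1 : IntervalIntegrable (fun x => a x * ρ x ^ m) volume xp
        (xp + ε ^ ((1 - κ) * (m : ℝ))) :=
      hint2.mono_set (hsub _ _ le_rfl h1 (h2.trans h3))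
    have hi2 : IntervalIntegrable (fun x => a x * ρ x ^ m) volume
        (xp + ε ^ ((1 - κ) * (m : ℝ))) (x0 - ε ^ κ) :=
      hint2.mono_set (hsub _ _ h1 h2 h3)
    have hi3 : IntervalIntegrable (fun x => a x * ρ x ^ m) volume (x0 - ε ^ κ) x0 :=
      hint2.mono_set (hsub _ _ (h1.trans h2) h3 le_rfl)
    rw [← intervalIntegral.integral_add_adjacent_intervals (hi1.trans hi2) hi3,
      ← intervalIntegral.integral_add_adjacent_intervals hi1 hi2]
    have hb1 : (∫ x in xp..(xp + ε ^ ((1 - κ) * (m : ℝ))), a x * ρ x ^ m) ≤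
        ε ^ ((1 - κ) * (m : ℝ)) * (ε ^ κ * (ε ^ κ) ^ m) := by
      have := intervalIntegral.integral_mono_on h1 hi1
        (intervalIntegrable_const (c := ε ^ κ * (ε ^ κ) ^ m))
        (fun x hxx => by
          have ha := ha1 x ⟨hxx.1, hxx.2.trans h2⟩
          have hρ := hρ1 x hxx
          have hρ0 : 0 ≤ ρ x := (hεrm.trans_le hρ.1).le
          exact mul_le_mul ha.2 (pow_le_pow_left₀ hρ0 hρ.2 m)
            (pow_nonneg hρ0 m) hd0pos.le)
      refine this.trans_eq ?_
      rw [intervalIntegral.integral_const, smul_eq_mul, add_sub_cancel_left]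
    have hb2 : (∫ x in (xp + ε ^ ((1 - κ) * (m : ℝ)))..(x0 - ε ^ κ), a x * ρ x ^ m) ≤
        (x0 - ε ^ κ - (xp + ε ^ ((1 - κ) * (m : ℝ)))) * (ε ^ κ * (ε * rp) ^ m) := by
      have := intervalIntegral.integral_mono_on h2 hi2
        (intervalIntegrable_const (c := ε ^ κ * (ε * rp) ^ m))
        (fun x hxx => by
          have ha := ha1 x ⟨h1.trans hxx.1, hxx.2⟩
          have hρ := hρ2 x ⟨hxx.1, hxx.2.trans h3⟩
          have hρ0 : 0 ≤ ρ x := (hεrm.trans_le hρ.1).le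
          exact mul_le_mul ha.2 (pow_le_pow_left₀ hρ0 hρ.2 m)
            (pow_nonneg hρ0 m) hd0pos.le)
      refine this.trans_eq ?_
      rw [intervalIntegral.integral_const, smul_eq_mul]
    have hb3 : (∫ x in (x0 - ε ^ κ)..x0, a x * ρ x ^ m) ≤
        ε ^ κ * (1 * (ε * rp) ^ m) := by
      have := intervalIntegral.integral_mono_on h3 hi3
        (intervalIntegrable_const (c := 1 * (ε * rp) ^ m))
        (fun x hxx => by
          have ha := ha2 x hxx
          have hρ := hρ2 x ⟨h2.trans hxx.1, hxx.2⟩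
          have hρ0 : 0 ≤ ρ x := (hεrm.trans_le hρ.1).le
          exact mul_le_mul ha.2 (pow_le_pow_left₀ hρ0 hρ.2 m)
            (pow_nonneg hρ0 m) zero_le_one)
      refine this.trans_eq ?_
      rw [intervalIntegral.integral_const, smul_eq_mul, sub_sub_cancel]
    have hexp : ε ^ ((1 - κ) * (m : ℝ)) * (ε ^ κ * (ε ^ κ) ^ m)
        = ε ^ ((m : ℝ) + κ) := by
      rw [← Real.rpow_natCast (ε ^ κ) m, ← Real.rpow_mul hε0.le,
        ← Real.rpow_add hε0, ← Real.rpow_add hε0]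
      congr 1
      ring
    have hLen : x0 - ε ^ κ - (xp + ε ^ ((1 - κ) * (m : ℝ))) ≤ L := by
      rw [hL]; linarith
    have hC2 : 0 ≤ ε ^ κ * (ε * rp) ^ m := mul_nonneg hd0pos.le hεrpm.le
    have hmul : (x0 - ε ^ κ - (xp + ε ^ ((1 - κ) * (m : ℝ)))) * (ε ^ κ * (ε * rp) ^ m)
        ≤ L * (ε ^ κ * (ε * rp) ^ m) := mul_le_mul_of_nonneg_right hLen hC2
    have heq : ε ^ ((m : ℝ) + κ) + (L + 1) * ε ^ κ * (ε * rp) ^ m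
        = ε ^ ((m : ℝ) + κ) + L * (ε ^ κ * (ε * rp) ^ m) + ε ^ κ * (1 * (ε * rp) ^ m) := by
      ring
    rw [heq]
    linarith [hexp ▸ hb1]
end

section
/- Let r ≥ 1 be a natural number, θ : Fin r → ℝ, and ω ∈ ℝ with sin ω ≠ 0. Then there exists a nontrivial θ-periodic Kirchhoff eigenfunction tuple with frequency ω if and only if cos ω = (1/r)·∑_{j} cos (θ j). -/
open scoped BigOperators

private lemma kirch_linear (c : ℂ) (x : ℝ) : HasDerivAt (fun t : ℝ => c * (t : ℂ)) c x := by
  simpa using ((hasDerivAt_id (x : ℂ)).const_mul c).comp_ofReal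

private lemma kirch_const {f : ℝ → ℂ} {ω : ℝ}
    (h1 : Differentiable ℝ f) (h2 : Differentiable ℝ (deriv f))
    (h3 : deriv (deriv f) = fun x => -(ω : ℂ) ^ 2 * f x)
    {c : ℂ} (hc : c ^ 2 = -(ω : ℂ) ^ 2) (x : ℝ) :
    (deriv f x - c * f x) * Complex.exp (c * x) = deriv f 0 - c * f 0 := by
  set F : ℝ → ℂ := fun t => (deriv f t - c * f t) * Complex.exp (c * t) with hF
  have key : ∀ y : ℝ, HasDerivAt F 0 y := by
    intro y
    have hf : HasDerivAt f (deriv f y) y := (h1 y).hasDerivAt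
    have hf' : HasDerivAt (deriv f) (-(ω : ℂ) ^ 2 * f y) y := by
      simpa [h3] using (h2 y).hasDerivAt
    have he : HasDerivAt (fun t : ℝ => Complex.exp (c * t)) (Complex.exp (c * y) * c) y :=
      (kirch_linear c y).cexp
    have h := (hf'.sub (hf.const_mul c)).mul he
    refine HasDerivAt.congr_deriv h ?_
    rw [← hc]; simp only [Pi.sub_apply]; ring
  have hdiff : Differentiable ℝ F := fun y => (key y).differentiableAt
  have hd0 : ∀ y, deriv F y = 0 := fun y => (key y).deriv
  have h := is_const_of_deriv_eq_zero hdiff hd0 x 0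
  simpa [F] using h

private lemma kirch_vals {f : ℝ → ℂ} {ω : ℝ}
    (h1 : Differentiable ℝ f) (h2 : Differentiable ℝ (deriv f))
    (h3 : deriv (deriv f) = fun x => -(ω : ℂ) ^ 2 * f x) :
    deriv f 1 = deriv f 0 * Complex.cos ω - (ω : ℂ) * f 0 * Complex.sin ω ∧
      (ω : ℂ) * f 1 = deriv f 0 * Complex.sin ω + (ω : ℂ) * f 0 * Complex.cos ω := by
  have hc1 : (Complex.I * ω) ^ 2 = -(ω : ℂ) ^ 2 := by rw [mul_pow, Complex.I_sq]; ring
  have hc2 : (-(Complex.I * ω)) ^ 2 = -(ω : ℂ) ^ 2 := by rw [neg_sq, mul_pow, Complex.I_sq]; ring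
  have e1 := kirch_const h1 h2 h3 hc1 1
  have e2 := kirch_const h1 h2 h3 hc2 1
  rw [Complex.ofReal_one, mul_one] at e1 e2
  rw [show Complex.I * (ω : ℂ) = (ω : ℂ) * Complex.I by ring, Complex.exp_mul_I] at e1
  rw [show -(Complex.I * (ω : ℂ)) = (-(ω : ℂ)) * Complex.I by ring, Complex.exp_mul_I,
    Complex.cos_neg, Complex.sin_neg] at e2
  set S := Complex.sin (ω : ℂ)
  set C := Complex.cos (ω : ℂ)
  set D := deriv f 0
  set Z := f 0
  have hpyth : S ^ 2 + C ^ 2 = 1 := Complex.sin_sq_add_cos_sq _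
  have hP : deriv f 1 - (ω : ℂ) * Complex.I * f 1 = (D - (ω : ℂ) * Complex.I * Z) * (C - S * Complex.I) := by
    linear_combination (C - S * Complex.I) * e1 - (deriv f 1 - (ω : ℂ) * Complex.I * f 1) * hpyth
      + (deriv f 1 - (ω : ℂ) * Complex.I * f 1) * S ^ 2 * Complex.I_sq
  have hQ : deriv f 1 + (ω : ℂ) * Complex.I * f 1 = (D + (ω : ℂ) * Complex.I * Z) * (C + S * Complex.I) := by
    linear_combination (C + S * Complex.I) * e2 - (deriv f 1 + (ω : ℂ) * Complex.I * f 1) * hpyth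
      + (deriv f 1 + (ω : ℂ) * Complex.I * f 1) * S ^ 2 * Complex.I_sq
  constructor
  · have h : (2 : ℂ) * deriv f 1 = 2 * (D * C - (ω : ℂ) * Z * S) := by
      linear_combination hP + hQ + 2 * (ω : ℂ) * Z * S * Complex.I_sq
    exact mul_left_cancel₀ two_ne_zero h
  · have h : (2 * Complex.I) * ((ω : ℂ) * f 1) = (2 * Complex.I) * (D * S + (ω : ℂ) * Z * C) := by
      linear_combination hQ - hP
    exact mul_left_cancel₀ (by simp [Complex.I_ne_zero]) h

private lemma kirch_zero {f : ℝ → ℂ} {ω : ℝ} (hω0 : (ω : ℂ) ≠ 0)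
    (h1 : Differentiable ℝ f) (h2 : Differentiable ℝ (deriv f))
    (h3 : deriv (deriv f) = fun x => -(ω : ℂ) ^ 2 * f x)
    (hZ : f 0 = 0) (hD : deriv f 0 = 0) : f = 0 := by
  funext x
  have hc1 : (Complex.I * ω) ^ 2 = -(ω : ℂ) ^ 2 := by rw [mul_pow, Complex.I_sq]; ring
  have hc2 : (-(Complex.I * ω)) ^ 2 = -(ω : ℂ) ^ 2 := by rw [neg_sq, mul_pow, Complex.I_sq]; ring
  have e1 := kirch_const h1 h2 h3 hc1 x
  have e2 := kirch_const h1 h2 h3 hc2 x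
  rw [hZ, hD] at e1 e2
  simp only [mul_zero, sub_zero] at e1 e2
  have h1' : deriv f x - Complex.I * ω * f x = 0 :=
    (mul_eq_zero.mp e1).resolve_right (Complex.exp_ne_zero _)
  have h2' : deriv f x - -(Complex.I * ω) * f x = 0 :=
    (mul_eq_zero.mp e2).resolve_right (Complex.exp_ne_zero _)
  have h3' : (2 * Complex.I * ω) * f x = 0 := by linear_combination h2' - h1'
  have h4 : f x = 0 := by
    rcases mul_eq_zero.mp h3' with h | h
    · exact absurd h (by simp [Complex.I_ne_zero, hω0])
    · exact h
  simpa using h4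

private lemma kirch_mk (ω : ℝ) (hω0 : (ω : ℂ) ≠ 0) (Z D : ℂ) :
    ∃ f : ℝ → ℂ, Differentiable ℝ f ∧ Differentiable ℝ (deriv f) ∧
      deriv (deriv f) = (fun x : ℝ => -(ω : ℂ) ^ 2 * f x) ∧ f 0 = Z ∧ deriv f 0 = D := by
  set f : ℝ → ℂ := fun x : ℝ => Z * Complex.cos ((ω : ℂ) * x) + D / ω * Complex.sin ((ω : ℂ) * x)
    with hf
  set f1 : ℝ → ℂ := fun x : ℝ =>
      Z * (-Complex.sin ((ω : ℂ) * x) * ω) + D / ω * (Complex.cos ((ω : ℂ) * x) * ω) with hf1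
  have key : ∀ x : ℝ, HasDerivAt f
      (Z * (-Complex.sin ((ω : ℂ) * x) * ω) + D / ω * (Complex.cos ((ω : ℂ) * x) * ω)) x := by
    intro x
    have hw : HasDerivAt (fun w : ℂ => (ω : ℂ) * w) ω (x : ℂ) := by
      simpa using (hasDerivAt_id ((x : ℝ) : ℂ)).const_mul (ω : ℂ)
    exact (((hw.ccos).const_mul Z).add ((hw.csin).const_mul (D / ω))).comp_ofReal
  have key2 : ∀ x : ℝ, HasDerivAt f1
      (Z * (-(Complex.cos ((ω : ℂ) * x) * ω) * ω) + D / ω * (-Complex.sin ((ω : ℂ) * x) * ω * ω)) x := by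
    intro x
    have hw : HasDerivAt (fun w : ℂ => (ω : ℂ) * w) ω (x : ℂ) := by
      simpa using (hasDerivAt_id ((x : ℝ) : ℂ)).const_mul (ω : ℂ)
    exact ((((hw.csin).neg.mul_const ω).const_mul Z).add
      (((hw.ccos).mul_const ω).const_mul (D / ω))).comp_ofReal
  have hder : deriv f = f1 := funext fun x => (key x).deriv
  refine ⟨f, fun x => (key x).differentiableAt, ?_, ?_, ?_, ?_⟩
  · rw [hder]; exact fun x => (key2 x).differentiableAt
  · rw [hder]
    funext x
    rw [(key2 x).deriv]
    show _ = -(ω : ℂ) ^ 2 * (Z * Complex.cos ((ω : ℂ) * x) + D / ω * Complex.sin ((ω : ℂ) * x))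
    ring
  · show Z * Complex.cos ((ω : ℂ) * (0 : ℝ)) + D / ω * Complex.sin ((ω : ℂ) * (0 : ℝ)) = Z
    simp
  · rw [hder]
    show Z * (-Complex.sin ((ω : ℂ) * (0 : ℝ)) * ω) + D / ω * (Complex.cos ((ω : ℂ) * (0 : ℝ)) * ω) = D
    simp
    field_simp

private lemma kirch_term {S C E E' D c ω Z : ℂ}
    (hD : S * D = ω * Z * (E - C)) (hEE : E' * E = 1)
    (hpyth : S ^ 2 + C ^ 2 = 1) (hcos : E + E' = 2 * c) :
    S * (E' * (D * C - ω * Z * S) - D) = 2 * ω * Z * (C - c) := by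
  linear_combination (E' * C - 1) * hD + ω * Z * C * hEE - ω * Z * E' * hpyth - ω * Z * hcos

def IsKirchhoffTuple (r : ℕ) (θ : Fin r → ℝ) (ω : ℝ)
    (u : Fin r → (ℝ → ℂ)) (Z : ℂ) : Prop :=
  (∀ j, Differentiable ℝ (u j) ∧ Differentiable ℝ (deriv (u j)) ∧
      deriv (deriv (u j)) = fun x => -(ω : ℂ) ^ 2 * u j x) ∧
  (∀ j, u j 0 = Z) ∧
  (∀ j, Complex.exp (-Complex.I * (θ j : ℂ)) * u j 1 = Z) ∧
  (∑ j, (Complex.exp (-Complex.I * (θ j : ℂ)) * deriv (u j) 1 - deriv (u j) 0)) = 0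

/-- Dispersion relation (8.3) of the paper: for `sin ω ≠ 0`, a nontrivial θ-periodic
Kirchhoff eigenfunction tuple with frequency `ω` exists iff
`cos ω = (1/r) ∑ j cos θ j`. -/
theorem stmt10 (r : ℕ) (hr : 1 ≤ r) (θ : Fin r → ℝ) (ω : ℝ)
    (hω : Real.sin ω ≠ 0) :
    (∃ (u : Fin r → (ℝ → ℂ)) (Z : ℂ),
        IsKirchhoffTuple r θ ω u Z ∧ ∃ j, u j ≠ 0) ↔
      Real.cos ω = (1 / (r : ℝ)) * ∑ j, Real.cos (θ j) := by
  have hωr : ω ≠ 0 := fun h => hω (by simp [h])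
  have hω0 : (ω : ℂ) ≠ 0 := by exact_mod_cast hωr
  have hS : Complex.sin (ω : ℂ) ≠ 0 := by
    rw [← Complex.ofReal_sin]
    exact_mod_cast hω
  have hr0 : (r : ℝ) ≠ 0 := by positivity
  have hpyth : Complex.sin (ω : ℂ) ^ 2 + Complex.cos (ω : ℂ) ^ 2 = 1 :=
    Complex.sin_sq_add_cos_sq _
  have hEE : ∀ j, Complex.exp (-Complex.I * (θ j : ℂ)) * Complex.exp (Complex.I * (θ j : ℂ)) = 1 := by
    intro j
    rw [← Complex.exp_add]
    norm_num
  have hcos : ∀ j, Complex.exp (Complex.I * (θ j : ℂ)) + Complex.exp (-Complex.I * (θ j : ℂ))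
      = 2 * Complex.cos (θ j) := by
    intro j
    rw [show Complex.I * (θ j : ℂ) = (θ j : ℂ) * Complex.I by ring,
      show -Complex.I * (θ j : ℂ) = (-(θ j : ℂ)) * Complex.I by ring,
      Complex.exp_mul_I, Complex.exp_mul_I, Complex.cos_neg, Complex.sin_neg]
    ring
  constructor
  · rintro ⟨u, Z, ⟨hode, h0, h1, hK⟩, j0, hne⟩
    have hvals := fun j => kirch_vals (hode j).1 (hode j).2.1 (hode j).2.2
    have hcont : ∀ j, Complex.sin (ω : ℂ) * deriv (u j) 0
        = (ω : ℂ) * Z * (Complex.exp (Complex.I * (θ j : ℂ)) - Complex.cos (ω : ℂ)) := by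
      intro j
      have hv2 := (hvals j).2
      rw [h0 j] at hv2
      have h2 : Complex.exp (-Complex.I * (θ j : ℂ)) * ((ω : ℂ) * u j 1) = (ω : ℂ) * Z := by
        rw [show Complex.exp (-Complex.I * (θ j : ℂ)) * ((ω : ℂ) * u j 1)
            = (ω : ℂ) * (Complex.exp (-Complex.I * (θ j : ℂ)) * u j 1) by ring, h1 j]
      rw [hv2] at h2
      linear_combination Complex.exp (Complex.I * (θ j : ℂ)) * h2
        - (deriv (u j) 0 * Complex.sin (ω : ℂ) + (ω : ℂ) * Z * Complex.cos (ω : ℂ)) * hEE j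
    have hterm : ∀ j, Complex.sin (ω : ℂ) *
        (Complex.exp (-Complex.I * (θ j : ℂ)) * deriv (u j) 1 - deriv (u j) 0)
        = 2 * (ω : ℂ) * Z * (Complex.cos (ω : ℂ) - Complex.cos (θ j)) := by
      intro j
      have hv1 := (hvals j).1
      rw [h0 j] at hv1
      rw [hv1]
      exact kirch_term (hcont j) (hEE j) hpyth (hcos j)
    have hsum : ∑ j, 2 * (ω : ℂ) * Z * (Complex.cos (ω : ℂ) - Complex.cos (θ j)) = 0 := by
      rw [← Finset.sum_congr rfl (fun j _ => hterm j), ← Finset.mul_sum, hK, mul_zero]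
    rw [← Finset.mul_sum, Finset.sum_sub_distrib, Finset.sum_const, Finset.card_univ,
      Fintype.card_fin, nsmul_eq_mul] at hsum
    by_cases hZ : Z = 0
    · exfalso
      apply hne
      have hDj : deriv (u j0) 0 = 0 := by
        have h := hcont j0
        rw [hZ, mul_zero, zero_mul] at h
        exact (mul_eq_zero.mp h).resolve_left hS
      exact kirch_zero hω0 (hode j0).1 (hode j0).2.1 (hode j0).2.2 (by rw [h0 j0, hZ]) hDj
    · have h2 : (r : ℂ) * Complex.cos (ω : ℂ) = ∑ j, Complex.cos ((θ j : ℂ)) := by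
        have hne2 : (2 * (ω : ℂ) * Z) ≠ 0 := by simp [hω0, hZ]
        have h := (mul_eq_zero.mp hsum).resolve_left hne2
        exact sub_eq_zero.mp h
      have h3 : (r : ℝ) * Real.cos ω = ∑ j, Real.cos (θ j) := by
        have h4 : (((r : ℝ) * Real.cos ω : ℝ) : ℂ) = (((∑ j, Real.cos (θ j)) : ℝ) : ℂ) := by
          push_cast [Complex.ofReal_cos]
          exact h2
        exact_mod_cast h4
      field_simp
      linarith [h3]
  · intro hd
    have hrc : (r : ℂ) * Complex.cos (ω : ℂ) = ∑ j, Complex.cos ((θ j : ℂ)) := by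
      have h3 : (r : ℝ) * Real.cos ω = ∑ j, Real.cos (θ j) := by
        field_simp at hd
        linarith [hd]
      have h4 := congrArg (fun t : ℝ => (t : ℂ)) h3
      push_cast [Complex.ofReal_cos] at h4
      exact h4
    have hDS : ∀ j, Complex.sin (ω : ℂ) *
        ((ω : ℂ) * (Complex.exp (Complex.I * (θ j : ℂ)) - Complex.cos (ω : ℂ)) / Complex.sin (ω : ℂ))
        = (ω : ℂ) * 1 * (Complex.exp (Complex.I * (θ j : ℂ)) - Complex.cos (ω : ℂ)) := by
      intro j
      field_simp
    choose f hf using fun j => kirch_mk ω hω0 1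
      ((ω : ℂ) * (Complex.exp (Complex.I * (θ j : ℂ)) - Complex.cos (ω : ℂ)) / Complex.sin (ω : ℂ))
    have hvals := fun j => kirch_vals (hf j).1 (hf j).2.1 (hf j).2.2.1
    refine ⟨f, 1, ⟨fun j => ⟨(hf j).1, (hf j).2.1, (hf j).2.2.1⟩, fun j => (hf j).2.2.2.1, ?_, ?_⟩,
      ⟨0, hr⟩, ?_⟩
    · intro j
      have hv2 := (hvals j).2
      rw [(hf j).2.2.2.1, (hf j).2.2.2.2] at hv2
      have h5 : (ω : ℂ) * (Complex.exp (-Complex.I * (θ j : ℂ)) * f j 1) = (ω : ℂ) * 1 := by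
        linear_combination Complex.exp (-Complex.I * (θ j : ℂ)) * hv2
          + Complex.exp (-Complex.I * (θ j : ℂ)) * hDS j + (ω : ℂ) * hEE j
      exact mul_left_cancel₀ hω0 h5
    · have hterm : ∀ j, Complex.sin (ω : ℂ) *
          (Complex.exp (-Complex.I * (θ j : ℂ)) * deriv (f j) 1 - deriv (f j) 0)
          = 2 * (ω : ℂ) * 1 * (Complex.cos (ω : ℂ) - Complex.cos (θ j)) := by
        intro j
        have hv1 := (hvals j).1
        rw [(hf j).2.2.2.1, (hf j).2.2.2.2] at hv1
        rw [hv1, (hf j).2.2.2.2]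
        exact kirch_term (hDS j) (hEE j) hpyth (hcos j)
      have hsum0 : Complex.sin (ω : ℂ) *
          (∑ j, (Complex.exp (-Complex.I * (θ j : ℂ)) * deriv (f j) 1 - deriv (f j) 0)) = 0 := by
        rw [Finset.mul_sum, Finset.sum_congr rfl (fun j _ => hterm j), ← Finset.mul_sum,
          Finset.sum_sub_distrib, Finset.sum_const, Finset.card_univ, Fintype.card_fin,
          nsmul_eq_mul, ← hrc]
        ring
      exact (mul_eq_zero.mp hsum0).resolve_left hS
    · intro h
      have h1 : f ⟨0, hr⟩ 0 = 1 := (hf ⟨0, hr⟩).2.2.2.1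
      rw [h] at h1
      simpa using h1.symm
end

section
/- Let r ≥ 1 be a natural number, θ : Fin r → ℝ, and ω ∈ ℝ with sin ω ≠ 0 and cos ω = (1/r)·∑_{j} cos (θ j). Then the set of all θ-periodic Kirchhoff eigenfunction tuples with frequency ω (including the trivial one) is a ℂ-linear subspace of (Fin r → (ℝ → ℂ)) × ℂ of dimension exactly 1; that is, the eigenvalue λ = ω² is simple. -/
open scoped BigOperators

lemma hasDerivAt_cexp_aux (c : ℂ) (x : ℝ) :
    HasDerivAt (fun t : ℝ => Complex.exp (c * t)) (c * Complex.exp (c * x)) x := by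
  have h : HasDerivAt (fun z : ℂ => Complex.exp (c * z)) (Complex.exp (c * x) * (c * 1)) (x : ℂ) :=
    (Complex.hasDerivAt_exp _).comp _ ((hasDerivAt_id _).const_mul c)
  simpa [mul_comm] using h.comp_ofReal

lemma expComb_hasDeriv (a b c₁ c₂ : ℂ) (x : ℝ) :
    HasDerivAt (fun t : ℝ => a * Complex.exp (c₁ * t) + b * Complex.exp (c₂ * t))
      (a * c₁ * Complex.exp (c₁ * x) + b * c₂ * Complex.exp (c₂ * x)) x := by
  have h := ((hasDerivAt_cexp_aux c₁ x).const_mul a).add ((hasDerivAt_cexp_aux c₂ x).const_mul b)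
  exact h.congr_deriv (by ring)

lemma expComb_deriv (a b c₁ c₂ : ℂ) :
    deriv (fun t : ℝ => a * Complex.exp (c₁ * t) + b * Complex.exp (c₂ * t))
      = fun x : ℝ => a * c₁ * Complex.exp (c₁ * x) + b * c₂ * Complex.exp (c₂ * x) :=
  funext fun x => (expComb_hasDeriv a b c₁ c₂ x).deriv

lemma expComb_diff (a b c₁ c₂ : ℂ) :
    Differentiable ℝ (fun t : ℝ => a * Complex.exp (c₁ * t) + b * Complex.exp (c₂ * t)) :=
  fun x => (expComb_hasDeriv a b c₁ c₂ x).differentiableAt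

lemma linODE {c : ℂ} {f : ℝ → ℂ} (hf : Differentiable ℝ f)
    (hf' : deriv f = fun x => c * f x) (x : ℝ) :
    f x = f 0 * Complex.exp (c * x) := by
  have key : ∀ y : ℝ, f y * Complex.exp (-c * y) = f 0 := by
    intro y
    have hg : ∀ z : ℝ, HasDerivAt (fun t : ℝ => f t * Complex.exp (-c * t)) 0 z := by
      intro z
      have h1 : HasDerivAt f (c * f z) z := by
        have := (hf z).hasDerivAt
        rwa [hf'] at this
      have h2 := hasDerivAt_cexp_aux (-c) z
      have := h1.mul h2
      exact this.congr_deriv (by ring)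
    have hconst := is_const_of_deriv_eq_zero (fun z => (hg z).differentiableAt)
      (fun z => (hg z).deriv) y 0
    simpa using hconst
  have hk := key x
  rw [← hk, mul_assoc, ← Complex.exp_add]
  simp

lemma secondOrderGen {c : ℂ} (hcne : c ≠ 0) {u : ℝ → ℂ}
    (h1 : Differentiable ℝ u) (h2 : Differentiable ℝ (deriv u))
    (h3 : deriv (deriv u) = fun x => c ^ 2 * u x) :
    ∃ a b : ℂ, ∀ x : ℝ, u x = a * Complex.exp (c * x) + b * Complex.exp (-c * x) := by
  have hwpD : Differentiable ℝ (fun x => deriv u x + c * u x) := h2.add (h1.const_mul c)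
  have hwmD : Differentiable ℝ (fun x => deriv u x - c * u x) := h2.sub (h1.const_mul c)
  have hwp : deriv (fun x => deriv u x + c * u x) = fun x => c * (deriv u x + c * u x) := by
    funext x
    rw [deriv_fun_add (h2 x) ((h1 x).const_mul c), deriv_const_mul c (h1 x)]
    have := congrFun h3 x
    rw [this]; ring
  have hwm : deriv (fun x => deriv u x - c * u x) = fun x => -c * (deriv u x - c * u x) := by
    funext x
    rw [deriv_fun_sub (h2 x) ((h1 x).const_mul c), deriv_const_mul c (h1 x)]
    have := congrFun h3 x
    rw [this]; ring
  have hp := fun x => linODE hwpD hwp x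
  have hm := fun x => linODE hwmD hwm x
  refine ⟨(deriv u 0 + c * u 0) / (2 * c), -((deriv u 0 - c * u 0) / (2 * c)), fun x => ?_⟩
  have key : 2 * c * u x = (deriv u 0 + c * u 0) * Complex.exp (c * x)
      - (deriv u 0 - c * u 0) * Complex.exp (-c * x) := by
    linear_combination hp x - hm x
  simp only [neg_mul] at key ⊢
  field_simp
  linear_combination key

lemma secondOrder {ω : ℝ} (hω : (ω : ℂ) ≠ 0) {u : ℝ → ℂ}
    (h1 : Differentiable ℝ u) (h2 : Differentiable ℝ (deriv u))
    (h3 : deriv (deriv u) = fun x => -(ω : ℂ) ^ 2 * u x) :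
    ∃ a b : ℂ, ∀ x : ℝ, u x = a * Complex.exp (Complex.I * ω * x)
      + b * Complex.exp (-(Complex.I * ω) * x) := by
  have hcne : Complex.I * (ω : ℂ) ≠ 0 := mul_ne_zero Complex.I_ne_zero hω
  have hc2 : ∀ z : ℂ, (Complex.I * ω) ^ 2 * z = -(ω : ℂ) ^ 2 * z := by
    intro z; rw [mul_pow, Complex.I_sq]; ring
  exact secondOrderGen hcne h1 h2 (by rw [h3]; funext x; rw [hc2])

/-- Simplicity of the eigenvalue `λ = ω²` when `sin ω ≠ 0` (Section 8.3 of the paper):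
under the dispersion relation (8.3), the set of all θ-periodic Kirchhoff eigenfunction
tuples with frequency `ω` is a ℂ-linear subspace of `(Fin r → (ℝ → ℂ)) × ℂ` of
dimension exactly 1. -/
theorem stmt11 (r : ℕ) (hr : 1 ≤ r) (θ : Fin r → ℝ) (ω : ℝ)
    (hω : Real.sin ω ≠ 0)
    (hdisp : Real.cos ω = (1 / (r : ℝ)) * ∑ j, Real.cos (θ j)) :
    ∃ S : Submodule ℂ ((Fin r → (ℝ → ℂ)) × ℂ),
      (S : Set ((Fin r → (ℝ → ℂ)) × ℂ)) = {p | IsKirchhoffTuple r θ ω p.1 p.2} ∧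
      Module.finrank ℂ S = 1 := by
  have hrR : (r : ℝ) ≠ 0 := Nat.cast_ne_zero.2 (by omega)
  have hω0 : (ω : ℂ) ≠ 0 := by
    simp only [ne_eq, Complex.ofReal_eq_zero]
    rintro rfl; simp at hω
  set E : ℂ := Complex.exp (Complex.I * ω) with hEdef
  set F : ℂ := Complex.exp (-(Complex.I * ω)) with hFdef
  set Pf : Fin r → ℂ := fun j => Complex.exp (Complex.I * (θ j : ℂ)) with hPdef
  set Qf : Fin r → ℂ := fun j => Complex.exp (-Complex.I * (θ j : ℂ)) with hQdef
  have hEF : E * F = 1 := by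
    rw [hEdef, hFdef, ← Complex.exp_add]; simp
  have hPQ : ∀ j, Pf j * Qf j = 1 := by
    intro j
    rw [hPdef, hQdef]; simp only [← Complex.exp_add]
    norm_num
  have hcosω : E + F = 2 * Complex.cos ω := by
    rw [hEdef, hFdef, Complex.cos, mul_comm Complex.I (ω : ℂ)]
    simp only [neg_mul]; ring
  have hcosθ : ∀ j, Pf j + Qf j = 2 * Complex.cos (θ j) := by
    intro j
    simp only [hPdef, hQdef]
    rw [Complex.cos, mul_comm Complex.I ((θ j : ℝ) : ℂ)]
    simp only [neg_mul]; ring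
  have hsinω : E - F = 2 * Complex.I * Complex.sin ω := by
    rw [hEdef, hFdef, Complex.sin, mul_comm Complex.I (ω : ℂ)]
    simp only [neg_mul]
    linear_combination (Complex.exp ((ω : ℂ) * Complex.I)
      - Complex.exp (-((ω : ℂ) * Complex.I))) * Complex.I_mul_I
  set D : ℂ := E - F with hDdef
  have hD : D ≠ 0 := by
    rw [hsinω]
    refine mul_ne_zero (mul_ne_zero two_ne_zero Complex.I_ne_zero) ?_
    rw [← Complex.ofReal_sin]
    exact Complex.ofReal_ne_zero.2 hω
  have hdispC : (r : ℂ) * Complex.cos ω = ∑ j, Complex.cos (θ j) := by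
    have hR : (r : ℝ) * Real.cos ω = ∑ j, Real.cos (θ j) := by
      rw [hdisp]; field_simp
    calc (r : ℂ) * Complex.cos ω = ((r * Real.cos ω : ℝ) : ℂ) := by
          push_cast [Complex.ofReal_cos]; ring
      _ = ((∑ j, Real.cos (θ j) : ℝ) : ℂ) := by rw [hR]
      _ = ∑ j, Complex.cos (θ j) := by push_cast [Complex.ofReal_cos]; rfl
  have hsum : ∑ j, (Pf j + Qf j) = (r : ℂ) * (E + F) := by
    calc ∑ j, (Pf j + Qf j) = ∑ j, 2 * Complex.cos (θ j) :=
          Finset.sum_congr rfl fun j _ => hcosθ j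
      _ = 2 * ∑ j, Complex.cos (θ j) := by rw [Finset.mul_sum]
      _ = 2 * ((r : ℂ) * Complex.cos ω) := by rw [hdispC]
      _ = (r : ℂ) * (E + F) := by rw [hcosω]; ring
  set α : Fin r → ℂ := fun j => (Pf j - F) / D with hαdef
  set β : Fin r → ℂ := fun j => (E - Pf j) / D with hβdef
  set v : (Fin r → (ℝ → ℂ)) × ℂ :=
    (fun j => fun x : ℝ => α j * Complex.exp (Complex.I * ω * x)
      + β j * Complex.exp (-(Complex.I * ω) * x), 1) with hvdef
  refine ⟨Submodule.span ℂ {v}, ?_, ?_⟩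
  · ext p
    simp only [SetLike.mem_coe, Submodule.mem_span_singleton, Set.mem_setOf_eq]
    constructor
    · rintro ⟨c, rfl⟩
      have h2 : (c • v).2 = c := by simp [hvdef]
      have h1 : (c • v).1 = fun j => fun x : ℝ =>
          (c * α j) * Complex.exp (Complex.I * ω * x)
          + (c * β j) * Complex.exp (-(Complex.I * ω) * x) := by
        funext j x
        simp only [hvdef, Prod.smul_fst, Pi.smul_apply, smul_eq_mul]
        ring
      rw [h1, h2]
      refine ⟨fun j => ?_, fun j => ?_, fun j => ?_, ?_⟩
      · refine ⟨expComb_diff _ _ _ _, ?_, ?_⟩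
        · rw [expComb_deriv]; exact expComb_diff _ _ _ _
        · rw [expComb_deriv, expComb_deriv]
          funext x
          linear_combination ((c * α j) * Complex.exp (Complex.I * ω * x)
            + (c * β j) * Complex.exp (-(Complex.I * ω) * x)) * (ω : ℂ) ^ 2 * Complex.I_mul_I
      · have hone : α j + β j = 1 := by
          simp only [hαdef, hβdef]
          field_simp [hD]
          rw [hDdef]; ring
        simp only [Complex.ofReal_zero, mul_zero, Complex.exp_zero, mul_one]
        linear_combination c * hone
      · simp only [Complex.ofReal_one, mul_one, ← hEdef, ← hFdef, ← hQdef]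
        have : Qf j * ((c * α j) * E + (c * β j) * F) = c := by
          simp only [hαdef, hβdef]
          field_simp [hD]
          rw [hDdef]
          linear_combination c * (E - F) * hPQ j
        exact this
      · have hder : ∀ j : Fin r, deriv (fun x : ℝ =>
            (c * α j) * Complex.exp (Complex.I * ω * x)
            + (c * β j) * Complex.exp (-(Complex.I * ω) * x))
            = fun x : ℝ => (c * α j) * (Complex.I * ω) * Complex.exp (Complex.I * ω * x)
              + (c * β j) * (-(Complex.I * ω)) * Complex.exp (-(Complex.I * ω) * x) :=
          fun j => expComb_deriv _ _ _ _
        have hterm : ∀ j : Fin r,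
            Qf j * ((c * α j) * (Complex.I * ω) * E + (c * β j) * (-(Complex.I * ω)) * F)
              - ((c * α j) * (Complex.I * ω) + (c * β j) * (-(Complex.I * ω)))
            = (Complex.I * ω * c * 2 / D) * (E + F) - (Complex.I * ω * c * 2 / D) * (Pf j + Qf j) := by
          intro j
          simp only [hαdef, hβdef]
          linear_combination (Complex.I * (ω : ℂ) * c / D) * (E + F) * hPQ j
            - 2 * (Complex.I * (ω : ℂ) * c / D) * Qf j * hEF
        calc ∑ j, (Qf j * deriv (fun x : ℝ =>
              (c * α j) * Complex.exp (Complex.I * ω * x)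
              + (c * β j) * Complex.exp (-(Complex.I * ω) * x)) 1
            - deriv (fun x : ℝ => (c * α j) * Complex.exp (Complex.I * ω * x)
              + (c * β j) * Complex.exp (-(Complex.I * ω) * x)) 0)
            = ∑ j, ((Complex.I * ω * c * 2 / D) * (E + F)
                - (Complex.I * ω * c * 2 / D) * (Pf j + Qf j)) := by
              refine Finset.sum_congr rfl fun j _ => ?_
              rw [hder j]
              simp only [Complex.ofReal_one, mul_one, Complex.ofReal_zero, mul_zero,
                Complex.exp_zero, ← hEdef, ← hFdef]
              exact hterm j
          _ = (r : ℂ) * ((Complex.I * ω * c * 2 / D) * (E + F))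
              - (Complex.I * ω * c * 2 / D) * ∑ j, (Pf j + Qf j) := by
              rw [Finset.sum_sub_distrib, Finset.sum_const, Finset.card_univ,
                Fintype.card_fin, nsmul_eq_mul, ← Finset.mul_sum]
          _ = 0 := by rw [hsum]; ring
    · rintro ⟨hODE, h0, h1c, -⟩
      choose a b hab using fun j => secondOrder hω0 (hODE j).1 (hODE j).2.1 (hODE j).2.2
      have e0 : ∀ j, a j + b j = p.2 := by
        intro j
        have := h0 j
        rw [hab j 0] at this
        simpa using this
      have e1 : ∀ j, a j * E + b j * F = p.2 * Pf j := by
        intro j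
        have h := h1c j
        rw [hab j 1] at h
        simp only [Complex.ofReal_one, mul_one, ← hEdef, ← hFdef, ← hQdef] at h
        linear_combination Pf j * h - (a j * E + b j * F) * hPQ j
      have ha : ∀ j, a j = p.2 * α j := by
        intro j
        simp only [hαdef]
        field_simp [hD]
        rw [hDdef]
        linear_combination e1 j - F * e0 j
      have hb : ∀ j, b j = p.2 * β j := by
        intro j
        simp only [hβdef]
        field_simp [hD]
        rw [hDdef]
        linear_combination E * e0 j - e1 j
      refine ⟨p.2, ?_⟩
      have hfst : (p.2 • v).1 = p.1 := by
        funext j x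
        rw [hvdef]
        simp only [Prod.smul_fst, Pi.smul_apply, smul_eq_mul]
        rw [hab j x, ha j, hb j]
        ring
      have hsnd : (p.2 • v).2 = p.2 := by simp [hvdef]
      exact Prod.ext hfst hsnd
  · have hv : v ≠ 0 := by
      intro h
      have := congrArg Prod.snd h
      rw [hvdef] at this
      simp at this
    exact finrank_span_singleton hv
end

section
/- Let r ≥ 1 be a natural number, θ : Fin r → ℝ, ℓ ≥ 1 an integer, and ω = ℓ·π. For each j set ρ_j := (−1)^ℓ · Complex.exp (−Complex.I * θ j). Then the set of all θ-periodic Kirchhoff eigenfunction tuples with frequency ω is a ℂ-linear subspace of (Fin r → (ℝ → ℂ)) × ℂ whose dimension equals r − 1 if ρ_j ≠ 1 for some j, and equals r + 1 if ρ_j = 1 for all j. -/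
open scoped BigOperators

namespace Stmt12Aux

/-- The trigonometric combination `A cos(cx) + B sin(cx)`. -/
noncomputable def E (c A B : ℂ) : ℝ → ℂ :=
  fun x => A * Complex.cos (c * x) + B * Complex.sin (c * x)

lemma hasDerivAt_E (c A B : ℂ) (x : ℝ) :
    HasDerivAt (E c A B) (E c (c * B) (-(c * A)) x) x := by
  have h1 : HasDerivAt (fun z : ℂ => A * Complex.cos (c * z) + B * Complex.sin (c * z))
      (A * (-Complex.sin (c * x) * c) + B * (Complex.cos (c * x) * c)) (x : ℝ) := by
    have hc : HasDerivAt (fun z : ℂ => c * z) c (x : ℂ) := by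
      simpa using (hasDerivAt_id (x : ℂ)).const_mul c
    have hcos : HasDerivAt (fun z : ℂ => Complex.cos (c * z))
        (-Complex.sin (c * x) * c) (x : ℂ) :=
      (Complex.hasDerivAt_cos (c * x)).comp _ hc
    have hsin : HasDerivAt (fun z : ℂ => Complex.sin (c * z))
        (Complex.cos (c * x) * c) (x : ℂ) :=
      (Complex.hasDerivAt_sin (c * x)).comp _ hc
    exact (hcos.const_mul A).add (hsin.const_mul B)
  have := h1.comp_ofReal
  convert this using 1
  · rfl
  simp only [E]
  ring

lemma deriv_E (c A B : ℂ) : deriv (E c A B) = E c (c * B) (-(c * A)) :=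
  funext fun x => (hasDerivAt_E c A B x).deriv

lemma differentiable_E (c A B : ℂ) : Differentiable ℝ (E c A B) :=
  fun x => (hasDerivAt_E c A B x).differentiableAt

lemma E_zero_apply (c A B : ℂ) : E c A B 0 = A := by simp [E]

lemma deriv2_E (c A B : ℂ) :
    deriv (deriv (E c A B)) = fun x => -c ^ 2 * E c A B x := by
  rw [deriv_E, deriv_E]
  funext x
  simp only [E]
  ring

/-- First-order uniqueness: solutions of `h' = a h` with `h 0 = 0` vanish. -/
lemma ode1 (a : ℂ) (h : ℝ → ℂ) (hd : Differentiable ℝ h)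
    (hde : ∀ x, deriv h x = a * h x) (h0 : h 0 = 0) : ∀ x, h x = 0 := by
  set φ : ℝ → ℂ := fun x => h x * Complex.exp (-(a * x)) with hφ
  have hexp : ∀ x : ℝ, HasDerivAt (fun y : ℝ => Complex.exp (-(a * y)))
      (-a * Complex.exp (-(a * x))) x := by
    intro x
    have hc : HasDerivAt (fun z : ℂ => -(a * z)) (-a) (x : ℂ) := by
      simpa using ((hasDerivAt_id (x : ℂ)).const_mul a).fun_neg
    have h1 : HasDerivAt (fun z : ℂ => Complex.exp (-(a * z)))
        (Complex.exp (-(a * x)) * -a) (x : ℂ) := hc.cexp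
    have := h1.comp_ofReal
    convert this using 1
    ring
  have hderivφ : ∀ x, HasDerivAt φ 0 x := by
    intro x
    have h1 : HasDerivAt φ (deriv h x * Complex.exp (-(a * x)) +
        h x * (-a * Complex.exp (-(a * x)))) x :=
      ((hd x).hasDerivAt).mul (hexp x)
    convert h1 using 1
    rw [hde x]; ring
  have hdφ : Differentiable ℝ φ := fun x => (hderivφ x).differentiableAt
  have hconst : ∀ x, φ x = φ 0 := by
    intro x
    exact is_const_of_deriv_eq_zero hdφ (fun x => (hderivφ x).deriv) x 0
  intro x
  have : φ x = 0 := by rw [hconst x]; simp [hφ, h0]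
  have hne : Complex.exp (-(a * x)) ≠ 0 := Complex.exp_ne_zero _
  exact (mul_eq_zero.mp this).resolve_right hne

/-- Second-order uniqueness: solutions of `u'' = -c² u` with `u 0 = u' 0 = 0` vanish. -/
lemma ode2 (c : ℂ) (u : ℝ → ℂ) (hd : Differentiable ℝ u)
    (hd2 : Differentiable ℝ (deriv u))
    (hdd : deriv (deriv u) = fun x => -c ^ 2 * u x)
    (h0 : u 0 = 0) (h0' : deriv u 0 = 0) : ∀ x, u x = 0 := by
  set g : ℝ → ℂ := fun x => deriv u x + Complex.I * c * u x with hg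
  have hgd : Differentiable ℝ g := hd2.add ((hd.const_mul _))
  have hgderiv : ∀ x, deriv g x = (Complex.I * c) * g x := by
    intro x
    have : deriv g x = deriv (deriv u) x + Complex.I * c * deriv u x := by
      rw [hg]
      rw [deriv_fun_add (hd2 x) ((hd.const_mul (Complex.I * c)) x)]
      rw [deriv_const_mul _ (hd x)]
    rw [this, hdd]
    have : Complex.I * c * (Complex.I * c) = c ^ 2 * (Complex.I * Complex.I) := by ring
    simp only [hg]
    rw [show -c ^ 2 * u x + Complex.I * c * deriv u x
        = Complex.I * c * (deriv u x + Complex.I * c * u x) + (-c^2 - (Complex.I*c)^2) * u x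
        by ring]
    rw [show (Complex.I * c) ^ 2 = Complex.I ^ 2 * c ^ 2 by ring, Complex.I_sq]
    ring
  have hg0 : g 0 = 0 := by simp [hg, h0, h0']
  have hgz : ∀ x, g x = 0 := ode1 _ g hgd hgderiv hg0
  have hudv : ∀ x, deriv u x = (-(Complex.I * c)) * u x := by
    intro x
    have := hgz x
    simp only [hg] at this
    linear_combination this
  exact ode1 _ u hd hudv h0

/-- Every solution of `u'' = -c² u` is a trigonometric combination. -/
lemma ode_char (c : ℂ) (hc : c ≠ 0) (u : ℝ → ℂ) (hd : Differentiable ℝ u)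
    (hd2 : Differentiable ℝ (deriv u))
    (hdd : deriv (deriv u) = fun x => -c ^ 2 * u x) :
    u = E c (u 0) (deriv u 0 / c) := by
  set A := u 0 with hA
  set B := deriv u 0 / c with hB
  set f : ℝ → ℂ := fun x => u x - E c A B x with hf
  have hfd : Differentiable ℝ f := hd.sub (differentiable_E c A B)
  have hderf : deriv f = fun x => deriv u x - E c (c * B) (-(c * A)) x := by
    funext x
    rw [hf, deriv_fun_sub (hd x) (differentiable_E c A B x)]
    rw [deriv_E]
  have hfd2 : Differentiable ℝ (deriv f) := by
    rw [hderf]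
    exact hd2.sub (differentiable_E c _ _)
  have hfdd : deriv (deriv f) = fun x => -c ^ 2 * f x := by
    rw [hderf]
    funext x
    rw [deriv_fun_sub (hd2 x) (differentiable_E c _ _ x),
      congrFun (deriv_E c (c * B) (-(c * A))) x, congrFun hdd x]
    simp only [hf, E]
    ring
  have hf0 : f 0 = 0 := by simp [hf, E_zero_apply, hA]
  have hf0' : deriv f 0 = 0 := by
    have h1 : deriv f 0 = deriv u 0 - E c (c * B) (-(c * A)) 0 := congrFun hderf 0
    rw [h1, E_zero_apply, hB]
    field_simp
    ring
  have := ode2 c f hfd hfd2 hfdd hf0 hf0'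
  funext x
  have hx := this x
  simp only [hf] at hx
  linear_combination hx


lemma E_add (c A B A' B' : ℂ) :
    (fun x => E c A B x + E c A' B' x) = E c (A + A') (B + B') := by
  funext x; simp only [E]; ring

lemma E_smul (c A B a : ℂ) :
    (fun x => a * E c A B x) = E c (a * A) (a * B) := by
  funext x; simp only [E]; ring

/-- The solution set as a submodule. -/
noncomputable def sol (r : ℕ) (ρ : Fin r → ℂ) (c : ℂ) (x₀ : ℝ) :
    Submodule ℂ ((Fin r → (ℝ → ℂ)) × ℂ) where
  carrier := {p | (∀ j, ρ j * p.2 = p.2) ∧ (∑ j, (ρ j - 1) * p.1 j x₀) = 0 ∧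
    ∀ j, p.1 j = E c p.2 (p.1 j x₀)}
  zero_mem' := by
    refine ⟨fun j => by simp, by simp, fun j => ?_⟩
    funext x; simp [E]
  add_mem' := by
    rintro p q ⟨h1, h2, h3⟩ ⟨g1, g2, g3⟩
    refine ⟨fun j => ?_, ?_, fun j => ?_⟩
    · show ρ j * (p.2 + q.2) = p.2 + q.2
      rw [mul_add, h1 j, g1 j]
    · show (∑ j, (ρ j - 1) * ((p.1 j + q.1 j) x₀)) = 0
      have : ∀ j : Fin r, (ρ j - 1) * ((p.1 j + q.1 j) x₀)
          = (ρ j - 1) * p.1 j x₀ + (ρ j - 1) * q.1 j x₀ := by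
        intro j; simp [mul_add]
      rw [Finset.sum_congr rfl fun j _ => this j, Finset.sum_add_distrib, h2, g2, add_zero]
    · show p.1 j + q.1 j = E c (p.2 + q.2) ((p.1 j + q.1 j) x₀)
      have : (p.1 j + q.1 j) x₀ = p.1 j x₀ + q.1 j x₀ := rfl
      rw [this, ← E_add]
      funext x
      simp only [Pi.add_apply]
      rw [congrFun (h3 j) x, congrFun (g3 j) x]
  smul_mem' := by
    rintro a p ⟨h1, h2, h3⟩
    refine ⟨fun j => ?_, ?_, fun j => ?_⟩
    · show ρ j * (a * p.2) = a * p.2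
      rw [mul_left_comm, h1 j]
    · show (∑ j, (ρ j - 1) * ((a • p.1 j) x₀)) = 0
      have : ∀ j : Fin r, (ρ j - 1) * ((a • p.1 j) x₀)
          = a * ((ρ j - 1) * p.1 j x₀) := by
        intro j; simp [smul_eq_mul]; ring
      rw [Finset.sum_congr rfl fun j _ => this j, ← Finset.mul_sum, h2, mul_zero]
    · show a • p.1 j = E c (a * p.2) ((a • p.1 j) x₀)
      have hx : (a • p.1 j) x₀ = a * p.1 j x₀ := rfl
      rw [hx, ← E_smul]
      funext x
      simp only [Pi.smul_apply, smul_eq_mul]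
      rw [congrFun (h3 j) x]


section Char

variable (r : ℕ) (θ : Fin r → ℝ) (ℓ : ℕ)

lemma mem_sol_iff (hℓ : 1 ≤ ℓ) (ω : ℝ) (hω : ω = (ℓ : ℝ) * Real.pi)
    (ρ : Fin r → ℂ)
    (hρ : ∀ j, ρ j = (-1 : ℂ) ^ ℓ * Complex.exp (-Complex.I * (θ j : ℂ)))
    (p : (Fin r → (ℝ → ℂ)) × ℂ) :
    p ∈ sol r ρ (ω : ℂ) (1 / (2 * ℓ) : ℝ) ↔ IsKirchhoffTuple r θ ω p.1 p.2 := by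
  obtain ⟨u, Z⟩ := p
  set c : ℂ := (ω : ℂ) with hc
  set x₀ : ℝ := (1 / (2 * ℓ) : ℝ) with hx₀
  have hℓ0 : (ℓ : ℝ) ≠ 0 := Nat.cast_ne_zero.mpr (by omega)
  have hω0 : ω ≠ 0 := by
    rw [hω]
    exact mul_ne_zero hℓ0 Real.pi_ne_zero
  have hc0 : c ≠ 0 := Complex.ofReal_ne_zero.mpr hω0
  have hcos1 : Complex.cos c = (-1 : ℂ) ^ ℓ := by
    have h2 : Real.cos ω = (-1 : ℝ) ^ ℓ := by
      rw [hω]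
      simpa using Real.cos_nat_mul_pi_sub 0 ℓ
    rw [hc, ← Complex.ofReal_cos, h2]
    push_cast
    ring
  have hsin1 : Complex.sin c = 0 := by
    have h2 : Real.sin ω = 0 := by rw [hω]; exact Real.sin_nat_mul_pi ℓ
    rw [hc, ← Complex.ofReal_sin, h2, Complex.ofReal_zero]
  have hxval : ω * x₀ = Real.pi / 2 := by
    rw [hω, hx₀]
    field_simp
  have hargx : c * ((x₀ : ℝ) : ℂ) = ((Real.pi / 2 : ℝ) : ℂ) := by
    rw [hc, ← Complex.ofReal_mul, hxval]
  have hcosx : Complex.cos (c * ((x₀ : ℝ) : ℂ)) = 0 := by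
    rw [hargx, ← Complex.ofReal_cos, Real.cos_pi_div_two, Complex.ofReal_zero]
  have hsinx : Complex.sin (c * ((x₀ : ℝ) : ℂ)) = 1 := by
    rw [hargx, ← Complex.ofReal_sin, Real.sin_pi_div_two, Complex.ofReal_one]
  -- evaluation lemmas for E
  have hE1 : ∀ A B : ℂ, E c A B 1 = A * (-1 : ℂ) ^ ℓ := by
    intro A B
    simp only [E, Complex.ofReal_one, mul_one, hcos1, hsin1]
    ring
  have hEx : ∀ A B : ℂ, E c A B x₀ = B := by
    intro A B
    simp only [E, hcosx, hsinx]
    ring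
  have hE0 : ∀ A B : ℂ, E c A B 0 = A := fun A B => E_zero_apply c A B
  show ((∀ j, ρ j * Z = Z) ∧ (∑ j, (ρ j - 1) * u j x₀) = 0 ∧ ∀ j, u j = E c Z (u j x₀))
    ↔ IsKirchhoffTuple r θ ω u Z
  unfold IsKirchhoffTuple
  constructor
  · rintro ⟨h1, h2, h3⟩
    refine ⟨fun j => ?_, fun j => ?_, fun j => ?_, ?_⟩
    · rw [h3 j]
      refine ⟨differentiable_E _ _ _, ?_, ?_⟩
      · rw [deriv_E]; exact differentiable_E _ _ _
      · rw [deriv2_E]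
    · rw [congrFun (h3 j) 0, hE0]
    · rw [congrFun (h3 j) 1, hE1]
      have := h1 j
      rw [hρ j] at this
      linear_combination this
    · have hterm : ∀ j : Fin r,
          Complex.exp (-Complex.I * (θ j : ℂ)) * deriv (u j) 1 - deriv (u j) 0
          = c * ((ρ j - 1) * u j x₀) := by
        intro j
        have h3j := h3 j
        obtain ⟨B, hB⟩ : ∃ B, u j x₀ = B := ⟨_, rfl⟩
        rw [hB] at h3j ⊢
        rw [h3j, deriv_E, hE1, hE0, hρ j]
        ring
      rw [Finset.sum_congr rfl fun j _ => hterm j, ← Finset.mul_sum, h2, mul_zero]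
  · rintro ⟨hdiff, h0, h1cond, hK⟩
    have huj : ∀ j, u j = E c Z (deriv (u j) 0 / c) := by
      intro j
      obtain ⟨hd, hd2, hdd⟩ := hdiff j
      have := ode_char c hc0 (u j) hd hd2 hdd
      rw [h0 j] at this
      exact this
    have hujx : ∀ j, u j x₀ = deriv (u j) 0 / c := by
      intro j
      rw [congrFun (huj j) x₀, hEx]
    have hρZ : ∀ j, ρ j * Z = Z := by
      intro j
      have h5 := h1cond j
      rw [congrFun (huj j) 1, hE1] at h5
      rw [hρ j]
      linear_combination h5
    refine ⟨hρZ, ?_, fun j => ?_⟩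
    · have hterm : ∀ j : Fin r,
          Complex.exp (-Complex.I * (θ j : ℂ)) * deriv (u j) 1 - deriv (u j) 0
          = c * ((ρ j - 1) * u j x₀) := by
        intro j
        rw [hujx j]
        conv_lhs => rw [huj j]
        rw [deriv_E, hE1, hE0, hρ j]
        ring
      rw [Finset.sum_congr rfl fun j _ => hterm j, ← Finset.mul_sum] at hK
      exact (mul_eq_zero.mp hK).resolve_left hc0
    · rw [hujx j, ← huj j]

end Char

/-- The Kirchhoff linear functional on coefficient space. -/
noncomputable def L (r : ℕ) (ρ : Fin r → ℂ) : (Fin r → ℂ) →ₗ[ℂ] ℂ where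
  toFun B := ∑ j, (ρ j - 1) * B j
  map_add' B B' := by
    simp only [Pi.add_apply, mul_add]
    rw [Finset.sum_add_distrib]
  map_smul' a B := by
    simp only [Pi.smul_apply, smul_eq_mul, RingHom.id_apply, Finset.mul_sum]
    exact Finset.sum_congr rfl fun j _ => by ring

lemma L_apply (r : ℕ) (ρ : Fin r → ℂ) (B : Fin r → ℂ) :
    L r ρ B = ∑ j, (ρ j - 1) * B j := rfl

/-- Parametrization of the generic solutions. -/
noncomputable def Φ (r : ℕ) (c : ℂ) :
    (Fin r → ℂ) →ₗ[ℂ] ((Fin r → (ℝ → ℂ)) × ℂ) where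
  toFun B := (fun j => E c 0 (B j), 0)
  map_add' B B' := by
    refine Prod.ext ?_ (by simp)
    funext j x
    show E c 0 ((B + B') j) x = ((fun j => E c 0 (B j)) + fun j => E c 0 (B' j)) j x
    simp only [Pi.add_apply, E]
    ring
  map_smul' a B := by
    refine Prod.ext ?_ (by simp)
    funext j x
    show E c 0 ((a • B) j) x = (a • fun j => E c 0 (B j)) j x
    simp only [Pi.smul_apply, smul_eq_mul, E]
    ring

/-- Parametrization of the exceptional solutions. -/
noncomputable def Ψ (r : ℕ) (c : ℂ) :
    (ℂ × (Fin r → ℂ)) →ₗ[ℂ] ((Fin r → (ℝ → ℂ)) × ℂ) where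
  toFun q := (fun j => E c q.1 (q.2 j), q.1)
  map_add' q q' := by
    refine Prod.ext ?_ rfl
    funext j x
    show E c (q.1 + q'.1) ((q.2 + q'.2) j) x
      = ((fun j => E c q.1 (q.2 j)) + fun j => E c q'.1 (q'.2 j)) j x
    simp only [Pi.add_apply, E]
    ring
  map_smul' a q := by
    refine Prod.ext ?_ rfl
    funext j x
    show E c (a * q.1) ((a • q.2) j) x = (a • fun j => E c q.1 (q.2 j)) j x
    simp only [Pi.smul_apply, smul_eq_mul, E]
    ring

lemma finrank_sol_generic (r : ℕ) (hr : 1 ≤ r) (ρ : Fin r → ℂ) (c : ℂ) (x₀ : ℝ)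
    (hEx : ∀ A B : ℂ, E c A B x₀ = B) (j₀ : Fin r) (hj₀ : ρ j₀ ≠ 1) :
    Module.finrank ℂ (sol r ρ c x₀) = r - 1 := by
  have hne : ρ j₀ - 1 ≠ 0 := sub_ne_zero.mpr hj₀
  have hmem : ∀ B : LinearMap.ker (L r ρ), Φ r c B.1 ∈ sol r ρ c x₀ := by
    rintro ⟨B, hB⟩
    have hB' : ∑ j, (ρ j - 1) * B j = 0 := hB
    refine ⟨fun j => by simp [Φ], ?_, fun j => ?_⟩
    · show (∑ j, (ρ j - 1) * (E c 0 (B j)) x₀) = 0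
      calc (∑ j, (ρ j - 1) * (E c 0 (B j)) x₀) = ∑ j, (ρ j - 1) * B j :=
            Finset.sum_congr rfl fun j _ => by rw [hEx]
        _ = 0 := hB'
    · show E c 0 (B j) = E c (0 : ℂ) ((E c 0 (B j)) x₀)
      rw [hEx]
  let e : LinearMap.ker (L r ρ) →ₗ[ℂ] sol r ρ c x₀ :=
    LinearMap.codRestrict _ ((Φ r c).comp (Submodule.subtype _)) hmem
  have hinj : Function.Injective e := by
    intro B B' h
    have h2 : Φ r c B.1 = Φ r c B'.1 := congrArg Subtype.val h
    apply Subtype.ext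
    funext j
    have h4 := congrFun (congrFun (congrArg Prod.fst h2) j) x₀
    show B.1 j = B'.1 j
    rwa [show (Φ r c B.1).1 j x₀ = E c 0 (B.1 j) x₀ from rfl,
      show (Φ r c B'.1).1 j x₀ = E c 0 (B'.1 j) x₀ from rfl, hEx, hEx] at h4
  have hsurj : Function.Surjective e := by
    rintro ⟨p, h1, h2, h3⟩
    have hZ : p.2 = 0 := by
      have h5 : (ρ j₀ - 1) * p.2 = 0 := by linear_combination h1 j₀
      exact (mul_eq_zero.mp h5).resolve_left hne
    refine ⟨⟨fun j => p.1 j x₀, LinearMap.mem_ker.mpr h2⟩, ?_⟩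
    apply Subtype.ext
    show (fun j => E c 0 (p.1 j x₀), (0 : ℂ)) = p
    refine Prod.ext ?_ hZ.symm
    funext j
    have h6 := h3 j
    rw [hZ] at h6
    exact h6.symm
  have hfr : Module.finrank ℂ (LinearMap.ker (L r ρ)) = Module.finrank ℂ (sol r ρ c x₀) :=
    (LinearEquiv.ofBijective e ⟨hinj, hsurj⟩).finrank_eq
  have hrange : LinearMap.range (L r ρ) = ⊤ := by
    rw [LinearMap.range_eq_top]
    intro z
    refine ⟨(z / (ρ j₀ - 1)) • (Pi.single j₀ 1 : Fin r → ℂ), ?_⟩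
    rw [L_apply, Finset.sum_eq_single j₀]
    · simp only [Pi.smul_apply, Pi.single_eq_same, smul_eq_mul, mul_one]
      field_simp
    · intro b _ hb
      simp [Pi.single_eq_of_ne hb]
    · intro h
      exact absurd (Finset.mem_univ j₀) h
  have h1 := LinearMap.finrank_range_add_finrank_ker (L r ρ)
  rw [hrange, finrank_top, Module.finrank_self, Module.finrank_fin_fun] at h1
  omega

lemma finrank_sol_special (r : ℕ) (ρ : Fin r → ℂ) (c : ℂ) (x₀ : ℝ)
    (hEx : ∀ A B : ℂ, E c A B x₀ = B) (hall : ∀ j, ρ j = 1) :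
    Module.finrank ℂ (sol r ρ c x₀) = r + 1 := by
  have hmem : ∀ q : ℂ × (Fin r → ℂ), Ψ r c q ∈ sol r ρ c x₀ := by
    intro q
    refine ⟨fun j => by rw [hall j]; ring, ?_, fun j => ?_⟩
    · show (∑ j, (ρ j - 1) * (E c q.1 (q.2 j)) x₀) = 0
      refine Finset.sum_eq_zero fun j _ => ?_
      rw [hall j]
      ring
    · show E c q.1 (q.2 j) = E c q.1 ((E c q.1 (q.2 j)) x₀)
      rw [hEx]
  let e : (ℂ × (Fin r → ℂ)) →ₗ[ℂ] sol r ρ c x₀ :=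
    LinearMap.codRestrict _ (Ψ r c) hmem
  have hinj : Function.Injective e := by
    intro q q' h
    have h2 : Ψ r c q = Ψ r c q' := congrArg Subtype.val h
    have hZ : q.1 = q'.1 := congrArg Prod.snd h2
    refine Prod.ext hZ ?_
    funext j
    have h4 := congrFun (congrFun (congrArg Prod.fst h2) j) x₀
    rwa [show (Ψ r c q).1 j x₀ = E c q.1 (q.2 j) x₀ from rfl,
      show (Ψ r c q').1 j x₀ = E c q'.1 (q'.2 j) x₀ from rfl, hEx, hEx] at h4
  have hsurj : Function.Surjective e := by
    rintro ⟨p, h1, h2, h3⟩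
    refine ⟨(p.2, fun j => p.1 j x₀), ?_⟩
    apply Subtype.ext
    show (fun j => E c p.2 (p.1 j x₀), p.2) = p
    refine Prod.ext ?_ rfl
    funext j
    exact (h3 j).symm
  have hfr : Module.finrank ℂ (ℂ × (Fin r → ℂ)) = Module.finrank ℂ (sol r ρ c x₀) :=
    (LinearEquiv.ofBijective e ⟨hinj, hsurj⟩).finrank_eq
  rw [← hfr, Module.finrank_prod, Module.finrank_self, Module.finrank_fin_fun]
  omega

end Stmt12Aux

/-- Multiplicity claim of Section 8.3 of the paper at `ω = ℓπ` (ℓ ≥ 1): with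
`ρ j = (−1)^ℓ exp(−iθ j)`, the space of θ-periodic Kirchhoff eigenfunction tuples
with frequency `ω` is a ℂ-linear subspace of dimension `r − 1` if some `ρ j ≠ 1`,
and of dimension `r + 1` if all `ρ j = 1`. -/
theorem stmt12 (r : ℕ) (hr : 1 ≤ r) (θ : Fin r → ℝ) (ℓ : ℕ) (hℓ : 1 ≤ ℓ)
    (ω : ℝ) (hω : ω = (ℓ : ℝ) * Real.pi)
    (ρ : Fin r → ℂ)
    (hρ : ∀ j, ρ j = (-1 : ℂ) ^ ℓ * Complex.exp (-Complex.I * (θ j : ℂ))) :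
    ∃ S : Submodule ℂ ((Fin r → (ℝ → ℂ)) × ℂ),
      (S : Set ((Fin r → (ℝ → ℂ)) × ℂ)) = {p | IsKirchhoffTuple r θ ω p.1 p.2} ∧
      ((∃ j, ρ j ≠ 1) → Module.finrank ℂ S = r - 1) ∧
      ((∀ j, ρ j = 1) → Module.finrank ℂ S = r + 1) := by
  classical
  set c : ℂ := (ω : ℂ) with hc
  set x₀ : ℝ := (1 / (2 * ℓ) : ℝ) with hx₀
  have hℓ0 : (ℓ : ℝ) ≠ 0 := Nat.cast_ne_zero.mpr (by omega)
  have hxval : ω * x₀ = Real.pi / 2 := by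
    rw [hω, hx₀]
    field_simp
  have hargx : c * ((x₀ : ℝ) : ℂ) = ((Real.pi / 2 : ℝ) : ℂ) := by
    rw [hc, ← Complex.ofReal_mul, hxval]
  have hEx : ∀ A B : ℂ, Stmt12Aux.E c A B x₀ = B := by
    intro A B
    simp only [Stmt12Aux.E, hargx, ← Complex.ofReal_cos, ← Complex.ofReal_sin,
      Real.cos_pi_div_two, Real.sin_pi_div_two, Complex.ofReal_zero, Complex.ofReal_one]
    ring
  refine ⟨Stmt12Aux.sol r ρ c x₀, ?_, ?_, ?_⟩
  · ext p
    simp only [SetLike.mem_coe, Set.mem_setOf_eq]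
    exact Stmt12Aux.mem_sol_iff r θ ℓ hℓ ω hω ρ hρ p
  · rintro ⟨j₀, hj₀⟩
    exact Stmt12Aux.finrank_sol_generic r hr ρ c x₀ hEx j₀ hj₀
  · intro hall
    exact Stmt12Aux.finrank_sol_special r ρ c x₀ hEx hall
end

section
/- Let r ≥ 1 be a natural number and θ : Fin r → ℝ. Then there exists a nontrivial θ-periodic Kirchhoff eigenfunction tuple with frequency ω = 0 if and only if cos (θ j) = 1 for every j; and in that case the set of all such tuples is a ℂ-linear subspace of (Fin r → (ℝ → ℂ)) × ℂ of dimension exactly 1 (consisting of the constant functions). -/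
open scoped BigOperators

lemma exp_neg_I_of_cos_eq_one (θ : ℝ) (h : Real.cos θ = 1) :
    Complex.exp (-Complex.I * θ) = 1 := by
  have hs : Real.sin θ = 0 := by nlinarith [Real.sin_sq_add_cos_sq θ]
  have e : (-Complex.I * θ) = ((-θ : ℝ) : ℂ) * Complex.I := by push_cast; ring
  rw [e, Complex.exp_mul_I]
  simp [← Complex.ofReal_cos, ← Complex.ofReal_sin, h, hs]

lemma deriv_ofReal_mul (a : ℂ) (y : ℝ) : deriv (fun x : ℝ => a * (x:ℂ)) y = a := by
  have h1 : HasDerivAt (fun x : ℝ => (x:ℂ)) 1 y := Complex.ofRealCLM.hasDerivAt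
  simpa using (h1.const_mul a).deriv

lemma affine_of (f : ℝ → ℂ) (hf : Differentiable ℝ f) (hf' : Differentiable ℝ (deriv f))
    (h2 : ∀ x, deriv (deriv f) x = 0) :
    (∀ x, deriv f x = deriv f 0) ∧ ∀ x : ℝ, f x = f 0 + deriv f 0 * x := by
  have hc : ∀ x, deriv f x = deriv f 0 := fun x =>
    is_const_of_deriv_eq_zero hf' h2 x 0
  refine ⟨hc, ?_⟩
  set a := deriv f 0 with ha
  have key : ∀ x : ℝ, f x - a * x = f 0 := by
    intro x
    have hg : Differentiable ℝ (fun x : ℝ => f x - a * (x:ℂ)) :=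
      hf.sub (Complex.ofRealCLM.differentiable.const_mul a)
    have hder : ∀ y, deriv (fun x : ℝ => f x - a * (x:ℂ)) y = 0 := by
      intro y
      have hA : DifferentiableAt ℝ (fun x : ℝ => a * (x:ℂ)) y :=
        (Complex.ofRealCLM.differentiable.const_mul a).differentiableAt
      rw [deriv_fun_sub (hf y) hA, deriv_ofReal_mul, hc y]
      ring
    have := is_const_of_deriv_eq_zero hg hder x 0
    simpa using this
  intro x
  linear_combination key x

/-- Classification of Kirchhoff tuples with ω = 0. -/
lemma tuple_classify (r : ℕ) (θ : Fin r → ℝ) (u : Fin r → (ℝ → ℂ)) (Z : ℂ)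
    (h : IsKirchhoffTuple r θ 0 u Z) :
    (∀ j (x : ℝ), u j x = Z + deriv (u j) 0 * x) ∧
    (∀ j, Complex.exp (-Complex.I * θ j) * (Z + deriv (u j) 0) = Z) ∧
    (∑ j, deriv (u j) 0 * (Complex.exp (-Complex.I * θ j) - 1)) = 0 := by
  obtain ⟨hdiff, h0, h1, hK⟩ := h
  have haff : ∀ j, (∀ x, deriv (u j) x = deriv (u j) 0) ∧
      ∀ x : ℝ, u j x = u j 0 + deriv (u j) 0 * x := by
    intro j
    obtain ⟨d1, d2, d3⟩ := hdiff j
    refine affine_of (u j) d1 d2 (fun x => ?_)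
    rw [d3]; simp
  refine ⟨fun j x => by rw [(haff j).2 x, h0 j], fun j => ?_, ?_⟩
  · have := h1 j
    rw [(haff j).2 1, h0 j] at this
    simpa using this
  · rw [← hK]
    apply Finset.sum_congr rfl
    intro j _
    rw [(haff j).1 1]
    ring

/-- The case `ω = 0` (λ = 0) of Section 8.3 of the paper: a nontrivial θ-periodic
Kirchhoff eigenfunction tuple with frequency 0 exists iff `cos θ j = 1` for every `j`
(periodic boundary conditions), and in that case the solution space is a ℂ-linear
subspace of dimension exactly 1. -/
theorem stmt13 (r : ℕ) (hr : 1 ≤ r) (θ : Fin r → ℝ) :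
    ((∃ (u : Fin r → (ℝ → ℂ)) (Z : ℂ),
        IsKirchhoffTuple r θ 0 u Z ∧ ∃ j, u j ≠ 0) ↔
      ∀ j, Real.cos (θ j) = 1) ∧
    ((∀ j, Real.cos (θ j) = 1) →
      ∃ S : Submodule ℂ ((Fin r → (ℝ → ℂ)) × ℂ),
        (S : Set ((Fin r → (ℝ → ℂ)) × ℂ)) = {p | IsKirchhoffTuple r θ 0 p.1 p.2} ∧
        Module.finrank ℂ S = 1) := by
  -- constant tuples are Kirchhoff tuples
  have hconst : ∀ (c : ℂ), (∀ j, Real.cos (θ j) = 1) →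
      IsKirchhoffTuple r θ 0 (fun _ _ => c) c := by
    intro c hθ
    refine ⟨fun j => ⟨differentiable_const c, ?_, ?_⟩, fun j => rfl, fun j => ?_, ?_⟩
    · simp [deriv_const']
    · funext x; simp [deriv_const']
    · rw [exp_neg_I_of_cos_eq_one _ (hθ j), one_mul]
    · simp [deriv_const']
  have hforward : ∀ (u : Fin r → (ℝ → ℂ)) (Z : ℂ), IsKirchhoffTuple r θ 0 u Z →
      (∃ j, u j ≠ 0) → ∀ j, Real.cos (θ j) = 1 := by
    intro u Z h hnt j
    obtain ⟨haff, hcont, hK⟩ := tuple_classify r θ u Z h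
    -- Z ≠ 0
    have hZ : Z ≠ 0 := by
      rintro rfl
      obtain ⟨j0, hj0⟩ := hnt
      have hE : Complex.exp (-Complex.I * θ j0) ≠ 0 := Complex.exp_ne_zero _
      have ha : deriv (u j0) 0 = 0 := by
        have := hcont j0
        rw [zero_add] at this
        exact (mul_eq_zero.mp this).resolve_left hE
      exact hj0 (funext fun x => by rw [haff j0 x, ha]; simp)
    -- each a j in terms of Z
    have ha : ∀ j, deriv (u j) 0 =
        Z * (Complex.exp (Complex.I * θ j) - 1) := by
      intro j
      have hc := hcont j
      have hE : Complex.exp (-Complex.I * θ j) ≠ 0 := Complex.exp_ne_zero _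
      have hinv : Complex.exp (-Complex.I * θ j) * Complex.exp (Complex.I * θ j) = 1 := by
        rw [← Complex.exp_add]; ring_nf; exact Complex.exp_zero
      apply mul_left_cancel₀ hE
      linear_combination hc - Z * hinv
    -- rewrite the Kirchhoff sum as real
    have hterm : ∀ j, deriv (u j) 0 * (Complex.exp (-Complex.I * θ j) - 1) =
        Z * ((2 - 2 * Real.cos (θ j) : ℝ) : ℂ) := by
      intro j
      rw [ha j]
      have hinv : Complex.exp (-Complex.I * θ j) * Complex.exp (Complex.I * θ j) = 1 := by
        rw [← Complex.exp_add]; ring_nf; exact Complex.exp_zero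
      have h2c' : Complex.exp (Complex.I * θ j) + Complex.exp (-Complex.I * θ j)
          = 2 * (Real.cos (θ j) : ℂ) := by
        have h := Complex.two_cos ((θ j : ℂ))
        rw [Complex.ofReal_cos, h]; ring_nf
      have hcast : ((2 - 2 * Real.cos (θ j) : ℝ) : ℂ)
          = 2 - 2 * (Real.cos (θ j) : ℂ) := by push_cast; ring
      rw [hcast]
      linear_combination Z * hinv - Z * h2c'
    rw [Finset.sum_congr rfl (fun j _ => hterm j), ← Finset.mul_sum] at hK
    have hsum : ∑ j, ((2 - 2 * Real.cos (θ j) : ℝ) : ℂ) = 0 :=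
      (mul_eq_zero.mp hK).resolve_left hZ
    have hsumR : ∑ j, (2 - 2 * Real.cos (θ j)) = (0 : ℝ) := by
      have := hsum
      push_cast at this
      exact Complex.ofReal_injective (by rw [Complex.ofReal_sum, Complex.ofReal_zero]; exact hsum)
    have hnn : ∀ j ∈ Finset.univ, (0:ℝ) ≤ 2 - 2 * Real.cos (θ j) := by
      intro j _
      nlinarith [Real.cos_le_one (θ j)]
    have := (Finset.sum_eq_zero_iff_of_nonneg hnn).mp hsumR j (Finset.mem_univ j)
    linarith
  constructor
  · constructor
    · rintro ⟨u, Z, h, hnt⟩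
      exact hforward u Z h hnt
    · intro hθ
      refine ⟨fun _ _ => 1, 1, hconst 1 hθ, ⟨⟨0, hr⟩, ?_⟩⟩
      intro h
      have := congrFun h 0
      simp at this
  · intro hθ
    refine ⟨Submodule.span ℂ {((fun _ _ => (1:ℂ)), (1:ℂ))}, ?_, ?_⟩
    · ext p
      simp only [SetLike.mem_coe, Submodule.mem_span_singleton, Set.mem_setOf_eq]
      constructor
      · rintro ⟨c, rfl⟩
        have : (c • ((fun _ _ => (1:ℂ)), (1:ℂ))) =
            ((fun (_ : Fin r) (_ : ℝ) => c), c) := by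
          refine Prod.ext ?_ ?_ <;> simp [Prod.smul_fst, Prod.smul_snd]
          · funext j x; simp
        rw [this]
        exact hconst c hθ
      · intro h
        refine ⟨p.2, ?_⟩
        obtain ⟨haff, hcont, _⟩ := tuple_classify r θ p.1 p.2 h
        have ha : ∀ j, deriv (p.1 j) 0 = 0 := by
          intro j
          have := hcont j
          rw [exp_neg_I_of_cos_eq_one _ (hθ j), one_mul] at this
          linear_combination this
        have h1 : p.1 = fun _ _ => p.2 := by
          funext j x
          rw [haff j x, ha j]; simp
        refine Prod.ext ?_ ?_ <;> simp [h1]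
        funext j x; simp
    · rw [finrank_span_singleton]
      intro h
      have := congrArg Prod.snd h
      simp at this
end

section
/- Let r ≥ 1 be a natural number, c > 0 a real number, θ : Fin r → ℝ, and ω ∈ ℝ with sin ω ≠ 0. Then there exists a nontrivial θ-periodic borderline eigenfunction tuple with frequency ω and coupling c if and only if 2·r·cos ω − c·ω·sin ω = 2·∑_{j} cos (θ j) (equivalently, cos ω − (c·ω·sin ω)/(2r) = (1/r)·∑_{j} cos (θ j)). -/
open scoped BigOperators

open scoped BigOperators

lemma hasDerivAt_ccos (ω x : ℝ) :
    HasDerivAt (fun x : ℝ => Complex.cos ((ω:ℂ) * (x:ℂ))) (-Complex.sin ((ω:ℂ)*x) * ω) x := by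
  have h : HasDerivAt (fun x : ℝ => (ω:ℂ) * (x:ℂ)) (ω:ℂ) x := by
    simpa using (Complex.ofRealCLM.hasDerivAt (x := x)).const_mul (ω:ℂ)
  exact (Complex.hasDerivAt_cos _).comp x h

lemma hasDerivAt_csin (ω x : ℝ) :
    HasDerivAt (fun x : ℝ => Complex.sin ((ω:ℂ) * (x:ℂ))) (Complex.cos ((ω:ℂ)*x) * ω) x := by
  have h : HasDerivAt (fun x : ℝ => (ω:ℂ) * (x:ℂ)) (ω:ℂ) x := by
    simpa using (Complex.ofRealCLM.hasDerivAt (x := x)).const_mul (ω:ℂ)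
  exact (Complex.hasDerivAt_sin _).comp x h

lemma trig_hasDerivAt (ω : ℝ) (Z A : ℂ) (x : ℝ) :
    HasDerivAt (fun x : ℝ => Z * Complex.cos ((ω:ℂ)*x) + A * Complex.sin ((ω:ℂ)*x))
      (((ω:ℂ)*A) * Complex.cos ((ω:ℂ)*x) + (-(ω:ℂ)*Z) * Complex.sin ((ω:ℂ)*x)) x := by
  have h := ((hasDerivAt_ccos ω x).const_mul Z).fun_add ((hasDerivAt_csin ω x).const_mul A)
  refine h.congr_deriv ?_
  ring

lemma deriv_trig (ω : ℝ) (Z A : ℂ) :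
    deriv (fun x : ℝ => Z * Complex.cos ((ω:ℂ)*x) + A * Complex.sin ((ω:ℂ)*x))
      = fun x : ℝ => ((ω:ℂ)*A) * Complex.cos ((ω:ℂ)*x) + (-(ω:ℂ)*Z) * Complex.sin ((ω:ℂ)*x) := by
  funext x
  exact (trig_hasDerivAt ω Z A x).deriv

lemma solve_ode (ω : ℝ) (u : ℝ → ℂ) (hu : Differentiable ℝ u)
    (hu' : Differentiable ℝ (deriv u))
    (hODE : deriv (deriv u) = fun x => -(ω:ℂ)^2 * u x) (x : ℝ) :
    deriv u x * Complex.cos ((ω:ℂ)*x) + (ω:ℂ) * u x * Complex.sin ((ω:ℂ)*x) = deriv u 0 ∧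
    deriv u x * Complex.sin ((ω:ℂ)*x) - (ω:ℂ) * u x * Complex.cos ((ω:ℂ)*x) = -(ω:ℂ) * u 0 := by
  have H1 : ∀ y : ℝ, HasDerivAt (deriv u) (-(ω:ℂ)^2 * u y) y := by
    intro y
    have h := (hu' y).hasDerivAt
    rwa [hODE] at h
  have Hu : ∀ y : ℝ, HasDerivAt u (deriv u y) y := fun y => (hu y).hasDerivAt
  have hg1 : ∀ y : ℝ, HasDerivAt
      (fun y : ℝ => deriv u y * Complex.cos ((ω:ℂ)*y) + (ω:ℂ) * u y * Complex.sin ((ω:ℂ)*y))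
      0 y := by
    intro y
    have h := ((H1 y).fun_mul (hasDerivAt_ccos ω y)).fun_add (((Hu y).const_mul (ω:ℂ)).fun_mul (hasDerivAt_csin ω y))
    refine h.congr_deriv ?_
    ring
  have hg2 : ∀ y : ℝ, HasDerivAt
      (fun y : ℝ => deriv u y * Complex.sin ((ω:ℂ)*y) - (ω:ℂ) * u y * Complex.cos ((ω:ℂ)*y))
      0 y := by
    intro y
    have h := ((H1 y).fun_mul (hasDerivAt_csin ω y)).fun_sub (((Hu y).const_mul (ω:ℂ)).fun_mul (hasDerivAt_ccos ω y))
    refine h.congr_deriv ?_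
    ring
  have e1 := is_const_of_deriv_eq_zero (fun y => (hg1 y).differentiableAt)
      (fun y => (hg1 y).deriv) x 0
  have e2 := is_const_of_deriv_eq_zero (fun y => (hg2 y).differentiableAt)
      (fun y => (hg2 y).deriv) x 0
  simp only [Complex.ofReal_zero, mul_zero, Complex.cos_zero, Complex.sin_zero, mul_one] at e1 e2
  constructor
  · simpa using e1
  · simpa using e2

/-- explicit value/derivative formulas -/
lemma solve_ode' (ω : ℝ) (u : ℝ → ℂ) (hu : Differentiable ℝ u)
    (hu' : Differentiable ℝ (deriv u))
    (hODE : deriv (deriv u) = fun x => -(ω:ℂ)^2 * u x) (x : ℝ) :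
    (ω:ℂ) * u x = deriv u 0 * Complex.sin ((ω:ℂ)*x) + (ω:ℂ) * u 0 * Complex.cos ((ω:ℂ)*x) ∧
    deriv u x = deriv u 0 * Complex.cos ((ω:ℂ)*x) - (ω:ℂ) * u 0 * Complex.sin ((ω:ℂ)*x) := by
  obtain ⟨e1, e2⟩ := solve_ode ω u hu hu' hODE x
  have hp := Complex.sin_sq_add_cos_sq ((ω:ℂ)*x)
  constructor
  · linear_combination Complex.sin ((ω:ℂ)*x) * e1 - Complex.cos ((ω:ℂ)*x) * e2 -
      ((ω:ℂ) * u x) * hp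
  · linear_combination Complex.cos ((ω:ℂ)*x) * e1 + Complex.sin ((ω:ℂ)*x) * e2 -
      (deriv u x) * hp

lemma exp_add_exp_neg (t : ℝ) :
    Complex.exp (Complex.I * t) + Complex.exp (-Complex.I * t) = 2 * Complex.cos t := by
  rw [show Complex.I * t = (t:ℂ) * Complex.I by ring,
    show -Complex.I * (t:ℂ) = (-(t:ℂ)) * Complex.I by ring,
    Complex.exp_mul_I, Complex.exp_mul_I, Complex.cos_neg, Complex.sin_neg]
  ring

lemma exp_mul_exp_neg (t : ℝ) :
    Complex.exp (-Complex.I * t) * Complex.exp (Complex.I * t) = 1 := by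
  rw [← Complex.exp_add]
  ring_nf
  exact Complex.exp_zero

/-- A θ-periodic borderline eigenfunction tuple with frequency `ω` and coupling `c`:
the eigenvalue problem (8.4) of the paper for the borderline limit operator `Q₀` on
the equilateral metric Cayley graph (with `c²` the volume of the unscaled vertex
neighbourhood).  It consists of twice differentiable functions `u j : ℝ → ℂ` with
`u j'' = −ω² u j`, the θ-periodic continuity conditions `u j 0 = Z` and
`exp(−iθ j)·u j 1 = Z`, and the energy-dependent vertex condition
`∑ j (exp(−iθ j)·(u j)' 1 − (u j)' 0) = c·ω²·Z`. -/
def IsBorderlineTuple (r : ℕ) (c : ℝ) (θ : Fin r → ℝ) (ω : ℝ)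
    (u : Fin r → (ℝ → ℂ)) (Z : ℂ) : Prop :=
  (∀ j, Differentiable ℝ (u j) ∧ Differentiable ℝ (deriv (u j)) ∧
      deriv (deriv (u j)) = fun x => -(ω : ℂ) ^ 2 * u j x) ∧
  (∀ j, u j 0 = Z) ∧
  (∀ j, Complex.exp (-Complex.I * (θ j : ℂ)) * u j 1 = Z) ∧
  (∑ j, (Complex.exp (-Complex.I * (θ j : ℂ)) * deriv (u j) 1 - deriv (u j) 0)) =
    (c : ℂ) * (ω : ℂ) ^ 2 * Z

/-- Dispersion relation (8.5) of the paper for the borderline operator: for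
`sin ω ≠ 0`, a nontrivial θ-periodic borderline eigenfunction tuple with frequency
`ω` and coupling `c` exists iff `2r cos ω − cω sin ω = 2 ∑ j cos θ j`. -/
theorem stmt14 (r : ℕ) (hr : 1 ≤ r) (c : ℝ) (hc : 0 < c) (θ : Fin r → ℝ)
    (ω : ℝ) (hω : Real.sin ω ≠ 0) :
    (∃ (u : Fin r → (ℝ → ℂ)) (Z : ℂ),
        IsBorderlineTuple r c θ ω u Z ∧ ∃ j, u j ≠ 0) ↔
      2 * (r : ℝ) * Real.cos ω - c * ω * Real.sin ω = 2 * ∑ j, Real.cos (θ j) := by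
  have hω0 : ω ≠ 0 := fun h => hω (by simp [h])
  have hωC : (ω:ℂ) ≠ 0 := Complex.ofReal_ne_zero.mpr hω0
  have hsC : Complex.sin (ω:ℂ) ≠ 0 := by
    rw [← Complex.ofReal_sin]
    exact Complex.ofReal_ne_zero.mpr hω
  constructor
  · rintro ⟨u, Z, ⟨hdiff, h0, h1, hsum⟩, j0, hj0⟩
    have keyx : ∀ j (x : ℝ), (ω:ℂ) * u j x
        = deriv (u j) 0 * Complex.sin ((ω:ℂ)*x) + (ω:ℂ) * Z * Complex.cos ((ω:ℂ)*x) := by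
      intro j x
      have h := (solve_ode' ω (u j) (hdiff j).1 (hdiff j).2.1 (hdiff j).2.2 x).1
      rwa [h0 j] at h
    have keyd : ∀ j, deriv (u j) 1
        = deriv (u j) 0 * Complex.cos (ω:ℂ) - (ω:ℂ) * Z * Complex.sin (ω:ℂ) := by
      intro j
      have h := (solve_ode' ω (u j) (hdiff j).1 (hdiff j).2.1 (hdiff j).2.2 1).2
      rwa [h0 j, Complex.ofReal_one, mul_one] at h
    have key1 : ∀ j, (ω:ℂ) * u j 1
        = deriv (u j) 0 * Complex.sin (ω:ℂ) + (ω:ℂ) * Z * Complex.cos (ω:ℂ) := by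
      intro j
      have h := keyx j 1
      rwa [Complex.ofReal_one, mul_one] at h
    by_cases hZ : Z = 0
    · exfalso
      apply hj0
      have hu1 : u j0 1 = 0 := by
        have h := h1 j0
        rw [hZ] at h
        exact (mul_eq_zero.mp h).resolve_left (Complex.exp_ne_zero _)
      have hD : deriv (u j0) 0 = 0 := by
        have h := key1 j0
        rw [hu1, hZ] at h
        simp only [mul_zero, zero_mul, add_zero] at h
        exact (mul_eq_zero.mp h.symm).resolve_right hsC
      funext x
      have h := keyx j0 x
      rw [hD, hZ] at h
      simp only [mul_zero, zero_mul, add_zero] at h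
      have := (mul_eq_zero.mp h).resolve_left hωC
      simpa using this
    · -- Z ≠ 0
      have hu1 : ∀ j, u j 1 = Z * Complex.exp (Complex.I * θ j) := by
        intro j
        have h := h1 j
        have hab := exp_mul_exp_neg (θ j)
        linear_combination Complex.exp (Complex.I * θ j) * h - (u j 1) * hab
      have hD : ∀ j, deriv (u j) 0 * Complex.sin (ω:ℂ)
          = (ω:ℂ) * Z * Complex.exp (Complex.I * θ j) - (ω:ℂ) * Z * Complex.cos (ω:ℂ) := by
        intro j
        linear_combination (-1 : ℂ) * key1 j + (ω:ℂ) * hu1 j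
      have hterm : ∀ j, (Complex.exp (-Complex.I * (θ j : ℂ)) * deriv (u j) 1 - deriv (u j) 0)
            * Complex.sin (ω:ℂ)
          = (ω:ℂ) * Z * (2 * Complex.cos (ω:ℂ) - 2 * Complex.cos ((θ j : ℂ))) := by
        intro j
        have hab := exp_mul_exp_neg (θ j)
        have hba := exp_add_exp_neg (θ j)
        have hp := Complex.sin_sq_add_cos_sq ((ω:ℂ))
        rw [keyd j]
        linear_combination (Complex.exp (-Complex.I * (θ j : ℂ)) * Complex.cos (ω:ℂ) - 1) * hD j
          - (ω:ℂ) * Z * hba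
          - (Complex.exp (-Complex.I * (θ j : ℂ)) * (ω:ℂ) * Z) * hp
          + ((ω:ℂ) * Z * Complex.cos (ω:ℂ)) * hab
      have hS : (ω:ℂ) * Z * (2 * r * Complex.cos (ω:ℂ) - 2 * ∑ j, Complex.cos ((θ j : ℂ)))
          = (c:ℂ) * (ω:ℂ)^2 * Z * Complex.sin (ω:ℂ) := by
        have h2 : (∑ j, (Complex.exp (-Complex.I * (θ j : ℂ)) * deriv (u j) 1 - deriv (u j) 0))
            * Complex.sin (ω:ℂ) = (c:ℂ) * (ω:ℂ)^2 * Z * Complex.sin (ω:ℂ) := by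
          rw [hsum]
        rw [Finset.sum_mul] at h2
        rw [Finset.sum_congr rfl (fun j _ => hterm j)] at h2
        rw [← h2]
        simp only [mul_sub, Finset.sum_sub_distrib, ← Finset.mul_sum, Finset.sum_const,
          Finset.card_univ, Fintype.card_fin, nsmul_eq_mul]
        ring
      have hE : 2 * (r:ℂ) * Complex.cos (ω:ℂ) - 2 * ∑ j, Complex.cos ((θ j : ℂ))
          = (c:ℂ) * (ω:ℂ) * Complex.sin (ω:ℂ) := by
        have hωZ : (ω:ℂ) * Z ≠ 0 := mul_ne_zero hωC hZ
        apply mul_left_cancel₀ hωZ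
        rw [hS]
        ring
      have hRe : ((2*(r:ℝ)*Real.cos ω - c*ω*Real.sin ω - 2*∑ j, Real.cos (θ j) : ℝ) : ℂ) = 0 := by
        push_cast [Complex.ofReal_cos, Complex.ofReal_sin]
        linear_combination hE
      have := Complex.ofReal_eq_zero.mp hRe
      linarith
  · intro hdisp
    have hdC : 2*(r:ℂ)*Complex.cos (ω:ℂ) - (c:ℂ)*(ω:ℂ)*Complex.sin (ω:ℂ)
        = 2 * ∑ j, Complex.cos ((θ j : ℂ)) := by
      have := congrArg (fun t : ℝ => (t : ℂ)) hdisp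
      push_cast [Complex.ofReal_cos, Complex.ofReal_sin] at this
      linear_combination this
    set A : Fin r → ℂ := fun j =>
      (Complex.exp (Complex.I * θ j) - Complex.cos (ω:ℂ)) / Complex.sin (ω:ℂ) with hA
    refine ⟨fun j => fun x => (1:ℂ) * Complex.cos ((ω:ℂ)*x) + A j * Complex.sin ((ω:ℂ)*x), 1,
      ⟨?_, ?_, ?_, ?_⟩, ?_⟩
    · intro j
      refine ⟨fun x => (trig_hasDerivAt ω 1 (A j) x).differentiableAt, ?_, ?_⟩
      · rw [deriv_trig]
        exact fun x => (trig_hasDerivAt ω ((ω:ℂ)*(A j)) (-(ω:ℂ)*1) x).differentiableAt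
      · rw [deriv_trig, deriv_trig]
        funext x
        ring
    · intro j
      simp
    · intro j
      have hAs : A j * Complex.sin (ω:ℂ) = Complex.exp (Complex.I * θ j) - Complex.cos (ω:ℂ) := by
        rw [hA]
        field_simp
      have hab := exp_mul_exp_neg (θ j)
      simp only [Complex.ofReal_one, mul_one, one_mul]
      linear_combination Complex.exp (-Complex.I * (θ j : ℂ)) * hAs + hab
    · simp only [deriv_trig]
      have hterm : ∀ j, ((Complex.exp (-Complex.I * (θ j : ℂ)) *
            (((ω:ℂ)*(A j)) * Complex.cos ((ω:ℂ)*(1:ℝ)) + (-(ω:ℂ)*1) * Complex.sin ((ω:ℂ)*(1:ℝ)))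
            - (((ω:ℂ)*(A j)) * Complex.cos ((ω:ℂ)*(0:ℝ)) + (-(ω:ℂ)*1) * Complex.sin ((ω:ℂ)*(0:ℝ)))))
            * Complex.sin (ω:ℂ)
          = (ω:ℂ) * (2 * Complex.cos (ω:ℂ) - 2 * Complex.cos ((θ j : ℂ))) := by
        intro j
        have hAs : A j * Complex.sin (ω:ℂ) = Complex.exp (Complex.I * θ j) - Complex.cos (ω:ℂ) := by
          rw [hA]; field_simp
        have hab := exp_mul_exp_neg (θ j)
        have hba := exp_add_exp_neg (θ j)
        have hp := Complex.sin_sq_add_cos_sq ((ω:ℂ))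
        simp only [Complex.ofReal_one, Complex.ofReal_zero, mul_one, mul_zero,
          Complex.cos_zero, Complex.sin_zero]
        linear_combination ((ω:ℂ) * Complex.exp (-Complex.I * (θ j : ℂ)) * Complex.cos (ω:ℂ)
            - (ω:ℂ)) * hAs
          - (ω:ℂ) * hba
          - ((ω:ℂ) * Complex.exp (-Complex.I * (θ j : ℂ))) * hp
          + ((ω:ℂ) * Complex.cos (ω:ℂ)) * hab
      apply mul_right_cancel₀ hsC
      rw [Finset.sum_mul, Finset.sum_congr rfl (fun j _ => hterm j)]
      have h3 : ∑ j, (ω:ℂ) * (2 * Complex.cos (ω:ℂ) - 2 * Complex.cos ((θ j : ℂ)))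
          = (ω:ℂ) * (2*(r:ℂ)*Complex.cos (ω:ℂ) - 2 * ∑ j, Complex.cos ((θ j : ℂ))) := by
        simp only [mul_sub, Finset.sum_sub_distrib, ← Finset.mul_sum, Finset.sum_const,
          Finset.card_univ, Fintype.card_fin, nsmul_eq_mul]
        ring
      rw [h3]
      linear_combination (ω:ℂ) * hdC
    · refine ⟨⟨0, hr⟩, fun h => ?_⟩
      have := congrFun h 0
      simp at this
end

section
/- Let p ≥ 1 be an odd integer. Then for every integer m, cos (2·π·m / p) ≥ cos (π·(p−1)/p), and moreover cos (π·(p−1)/p) > −1. Consequently, for every natural number r ≥ 1 and every θ : Fin r → ℝ such that θ 0 = 2·π·m/p for some integer m, one has (1/r)·∑_{j} cos (θ j) ≥ −1 + (1 + cos (π·(p−1)/p))/r > −1. -/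
open scoped BigOperators Real

/-- The trigonometric core of Theorem 8.2 of the paper: for an odd integer `p ≥ 1`,
the cosine of any p-th root-of-unity angle `2πm/p` is at least `cos(π(p−1)/p) > −1`;
consequently, if one component `θ 0` of the quasimomentum is confined to such angles,
the mean `(1/r) ∑ cos θ j` stays bounded away from `−1` by `(1 + cos(π(p−1)/p))/r`. -/
theorem stmt15 (p : ℕ) (hp : 1 ≤ p) (hodd : Odd p) :
    (∀ m : ℤ, Real.cos (π * ((p : ℝ) - 1) / p) ≤ Real.cos (2 * π * (m : ℝ) / p)) ∧
    (-1 : ℝ) < Real.cos (π * ((p : ℝ) - 1) / p) ∧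
    ∀ (r : ℕ) (hr : 1 ≤ r) (θ : Fin r → ℝ),
      (∃ m : ℤ, θ ⟨0, hr⟩ = 2 * π * (m : ℝ) / p) →
      (-1 + (1 + Real.cos (π * ((p : ℝ) - 1) / p)) / r ≤
          (1 / (r : ℝ)) * ∑ j, Real.cos (θ j)) ∧
      (-1 : ℝ) < -1 + (1 + Real.cos (π * ((p : ℝ) - 1) / p)) / r := by
  have hp0 : (0:ℝ) < p := by exact_mod_cast hp
  have hπ : (0:ℝ) < π := Real.pi_pos
  have hang0 : 0 ≤ π * ((p : ℝ) - 1) / p := by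
    apply div_nonneg _ hp0.le
    have : (1:ℝ) ≤ p := by exact_mod_cast hp
    nlinarith
  have hangπ : π * ((p : ℝ) - 1) / p < π := by
    rw [div_lt_iff₀ hp0]
    nlinarith
  -- key lemma for integer k with 0 ≤ 2k ≤ p-1
  have base : ∀ k : ℤ, 0 ≤ k → 2 * k ≤ (p:ℤ) - 1 →
      Real.cos (π * ((p : ℝ) - 1) / p) ≤ Real.cos (2 * π * (k : ℝ) / p) := by
    intro k hk0 hk1
    apply Real.cos_le_cos_of_nonneg_of_le_pi
    · positivity
    · exact hangπ.le
    · rw [div_le_div_iff₀ hp0 hp0]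
      have hk1' : 2 * (k:ℝ) ≤ (p:ℝ) - 1 := by exact_mod_cast hk1
      nlinarith [mul_nonneg (mul_nonneg hπ.le hp0.le) (sub_nonneg.mpr hk1')]
  have key : ∀ m : ℤ, Real.cos (π * ((p : ℝ) - 1) / p) ≤ Real.cos (2 * π * (m : ℝ) / p) := by
    intro m
    have hpz : (p:ℤ) ≠ 0 := by positivity
    set k : ℤ := m % p with hkdef
    have hk0 : 0 ≤ k := Int.emod_nonneg m hpz
    have hkp : k < p := Int.emod_lt_of_pos m (by exact_mod_cast hp)
    have hmZ : (p:ℤ) * (m / p) + k = m := Int.mul_ediv_add_emod m p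
    have hmk : (m:ℝ) = (p:ℝ) * ((m / p : ℤ) : ℝ) + (k : ℝ) := by exact_mod_cast hmZ.symm
    have h1 : Real.cos (2 * π * (m : ℝ) / p) = Real.cos (2 * π * (k : ℝ) / p) := by
      have : 2 * π * (m : ℝ) / p = 2 * π * (k : ℝ) / p + (m / p : ℤ) * (2 * π) := by
        field_simp [hmk]
        linarith [hmk]
      rw [this, Real.cos_add_int_mul_two_pi]
    rw [h1]
    have hne : 2 * k ≠ (p:ℤ) := by
      intro h
      rcases hodd with ⟨t, ht⟩
      omega
    rcases lt_or_gt_of_ne hne with h | h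
    · exact base k hk0 (by omega)
    · have h2 : Real.cos (2 * π * (k : ℝ) / p) = Real.cos (2 * π * (((p:ℤ) - k : ℤ) : ℝ) / p) := by
        rw [← Real.cos_two_pi_sub]
        congr 1
        push_cast
        field_simp
      rw [h2]
      exact base ((p:ℤ) - k) (by omega) (by omega)
  have hneg1 : (-1 : ℝ) < Real.cos (π * ((p : ℝ) - 1) / p) := by
    have := Real.cos_lt_cos_of_nonneg_of_le_pi hang0 le_rfl hangπ
    rwa [Real.cos_pi] at this
  refine ⟨key, hneg1, ?_⟩
  intro r hr θ ⟨m, hm⟩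
  have hr0 : (0:ℝ) < r := by exact_mod_cast hr
  set c := Real.cos (π * ((p : ℝ) - 1) / p) with hc
  constructor
  · set i0 : Fin r := ⟨0, hr⟩ with hi0
    have hsplit := Finset.add_sum_erase Finset.univ (fun j => Real.cos (θ j)) (Finset.mem_univ i0)
    have h0 : c ≤ Real.cos (θ i0) := by rw [hm]; exact key m
    have h2 : -((r:ℝ) - 1) ≤ ∑ j ∈ Finset.univ.erase i0, Real.cos (θ j) := by
      have := Finset.card_nsmul_le_sum (Finset.univ.erase i0)
        (fun j => Real.cos (θ j)) (-1) (fun j _ => Real.neg_one_le_cos _)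
      have hcard : (Finset.univ.erase i0).card = r - 1 := by
        simp [Finset.card_erase_of_mem]
      rw [hcard, nsmul_eq_mul] at this
      have hcast : ((r - 1 : ℕ) : ℝ) = (r:ℝ) - 1 := by
        have : (1:ℕ) ≤ r := hr
        push_cast [Nat.cast_sub this]
        ring
      rw [hcast] at this
      linarith
    have hsum : -(r:ℝ) + 1 + c ≤ ∑ j, Real.cos (θ j) := by
      rw [← hsplit]
      linarith
    have heq : -1 + (1 + c) / r = (1 / (r:ℝ)) * (-(r:ℝ) + 1 + c) := by
      field_simp
      ring
    rw [heq]
    exact mul_le_mul_of_nonneg_left hsum (by positivity)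
  · have : 0 < (1 + c) / r := by
      apply div_pos _ hr0
      linarith
    linarith
end
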